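/- arXiv:2507.07391 — 11 statements merged into one kernel-verified Lean document; each statement's English description precedes it below -/
import Mathlib

section
/- Let A, B ∈ SL(2,ℝ) with |tr A| ≥ 2 and |tr B| ≥ 2. Then tr(A·B·A⁻¹·B⁻¹) = 2 if and only if there exists a nonzero vector v ∈ ℝ² and real numbers λ, μ such that A·v = λ·v and B·v = μ·v (i.e., the pair (A,B) is reducible: there is a line in ℝ² invariant under both A and B). -/
open Matrix

/-- `SL(2,ℝ)`: the group of 2×2 real matrices of determinant 1. -/
abbrev SL2 : Type := Matrix.SpecialLinearGroup (Fin 2) ℝ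

/-- The trace of an element of `SL(2,ℝ)`, as a matrix. -/
noncomputable def trSL (A : SL2) : ℝ := Matrix.trace (A : Matrix (Fin 2) (Fin 2) ℝ)

/-- A real 2×2 matrix with determinant 1 and trace² ≥ 4 has a real eigenvector. -/
lemma eig_exists (M : Matrix (Fin 2) (Fin 2) ℝ) (hdet : M.det = 1)
    (htr : 4 ≤ (M 0 0 + M 1 1) ^ 2) :
    ∃ v : Fin 2 → ℝ, v ≠ 0 ∧ ∃ l : ℝ, M.mulVec v = l • v := by
  have hdet' : M 0 0 * M 1 1 - M 0 1 * M 1 0 = 1 := by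
    rw [Matrix.det_fin_two] at hdet; linarith
  set t : ℝ := M 0 0 + M 1 1 with ht
  have hD : (0:ℝ) ≤ t ^ 2 - 4 := by linarith
  set l : ℝ := (t + Real.sqrt (t ^ 2 - 4)) / 2 with hldef
  have hsq : Real.sqrt (t ^ 2 - 4) ^ 2 = t ^ 2 - 4 := Real.sq_sqrt hD
  have hl : l ^ 2 - t * l + 1 = 0 := by
    rw [hldef]; linear_combination hsq / 4
  by_cases hb : M 0 1 ≠ 0
  · refine ⟨![M 0 1, l - M 0 0], ?_, l, ?_⟩
    · intro h; exact hb (by simpa using congrFun h 0)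
    · funext i; fin_cases i
      · simp only [Matrix.mulVec, dotProduct, Fin.sum_univ_two, Fin.isValue,
          Matrix.cons_val_zero, Matrix.cons_val_one, Matrix.head_cons, Pi.smul_apply,
          smul_eq_mul, Fin.zero_eta, Fin.mk_one]
        ring
      · simp only [Matrix.mulVec, dotProduct, Fin.sum_univ_two, Fin.isValue,
          Matrix.cons_val_zero, Matrix.cons_val_one, Matrix.head_cons, Pi.smul_apply,
          smul_eq_mul, Fin.zero_eta, Fin.mk_one]
        linear_combination -hdet' - hl
  · push_neg at hb
    have had : M 0 0 * M 1 1 = 1 := by rw [hb] at hdet'; linarith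
    by_cases hc : M 1 0 ≠ 0
    · refine ⟨![l - M 1 1, M 1 0], ?_, l, ?_⟩
      · intro h; exact hc (by simpa using congrFun h 1)
      · funext i; fin_cases i
        · simp only [Matrix.mulVec, dotProduct, Fin.sum_univ_two, Fin.isValue,
            Matrix.cons_val_zero, Matrix.cons_val_one, Matrix.head_cons, Pi.smul_apply,
            smul_eq_mul, Fin.zero_eta, Fin.mk_one, hb]
          linear_combination -had - hl
        · simp only [Matrix.mulVec, dotProduct, Fin.sum_univ_two, Fin.isValue,
            Matrix.cons_val_zero, Matrix.cons_val_one, Matrix.head_cons, Pi.smul_apply,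
            smul_eq_mul, Fin.zero_eta, Fin.mk_one]
          ring
    · push_neg at hc
      refine ⟨![1, 0], ?_, M 0 0, ?_⟩
      · intro h; simpa using congrFun h 0
      · funext i; fin_cases i
        · simp [Matrix.mulVec, dotProduct, Fin.sum_univ_two]
        · simp [Matrix.mulVec, dotProduct, Fin.sum_univ_two, hc]

/-- If `A` is upper triangular, `det B = 1`, `(tr B)² ≥ 4`, and `AB - BA` is singular,
then `A` and `B` have a common eigenvector. -/
lemma tri (A B : Matrix (Fin 2) (Fin 2) ℝ) (hA10 : A 1 0 = 0)
    (hdetB : B.det = 1) (htrB : 4 ≤ (B 0 0 + B 1 1) ^ 2)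
    (hC : (A * B - B * A).det = 0) :
    ∃ v : Fin 2 → ℝ, v ≠ 0 ∧ ∃ l m : ℝ, A.mulVec v = l • v ∧ B.mulVec v = m • v := by
  by_cases hr : B 1 0 = 0
  · refine ⟨![1, 0], ?_, A 0 0, B 0 0, ?_, ?_⟩
    · intro h; simpa using congrFun h 0
    · funext i; fin_cases i
      · simp [Matrix.mulVec, dotProduct, Fin.sum_univ_two]
      · simp [Matrix.mulVec, dotProduct, Fin.sum_univ_two, hA10]
    · funext i; fin_cases i
      · simp [Matrix.mulVec, dotProduct, Fin.sum_univ_two]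
      · simp [Matrix.mulVec, dotProduct, Fin.sum_univ_two, hr]
  · have hCexp : B 1 0 * (A 0 1 ^ 2 * B 1 0 - B 0 1 * (A 1 1 - A 0 0) ^ 2
        + A 0 1 * (A 1 1 - A 0 0) * (B 1 1 - B 0 0)) = 0 := by
      rw [Matrix.det_fin_two] at hC
      simp only [Matrix.sub_apply, Matrix.mul_apply, Fin.sum_univ_two] at hC
      linear_combination -hC - (A 1 1 * B 0 1 * B 1 1 - A 1 1 * B 0 0 * B 0 1
        + A 1 0 * B 0 1 ^ 2 - A 0 1 * B 1 1 ^ 2 - 2 * A 0 1 * B 0 1 * B 1 0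
        + 2 * A 0 1 * B 0 0 * B 1 1 - A 0 1 * B 0 0 ^ 2 - A 0 0 * B 0 1 * B 1 1
        + A 0 0 * B 0 0 * B 0 1) * hA10
    have key : A 0 1 ^ 2 * B 1 0 - B 0 1 * (A 1 1 - A 0 0) ^ 2
        + A 0 1 * (A 1 1 - A 0 0) * (B 1 1 - B 0 0) = 0 :=
      (mul_eq_zero.mp hCexp).resolve_left hr
    by_cases hscalar : A 0 1 = 0 ∧ A 1 1 = A 0 0
    · obtain ⟨hb0, hd0⟩ := hscalar
      obtain ⟨v, hv, m, hm⟩ := eig_exists B hdetB htrB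
      refine ⟨v, hv, A 0 0, m, ?_, hm⟩
      funext i; fin_cases i
      · simp only [Matrix.mulVec, dotProduct, Fin.sum_univ_two, Fin.isValue,
          Pi.smul_apply, smul_eq_mul, Fin.zero_eta]
        rw [hb0]; ring
      · simp only [Matrix.mulVec, dotProduct, Fin.sum_univ_two, Fin.isValue,
          Pi.smul_apply, smul_eq_mul, Fin.mk_one]
        rw [hA10, hd0]; ring
    · have hv : (![A 0 1, A 1 1 - A 0 0] : Fin 2 → ℝ) ≠ 0 := by
        intro h
        refine hscalar ⟨by simpa using congrFun h 0, ?_⟩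
        have := congrFun h 1; simp at this; linarith
      have cross : (B 0 0 * A 0 1 + B 0 1 * (A 1 1 - A 0 0)) * (A 1 1 - A 0 0)
          = (B 1 0 * A 0 1 + B 1 1 * (A 1 1 - A 0 0)) * A 0 1 := by
        linear_combination -key
      have hAv : A.mulVec ![A 0 1, A 1 1 - A 0 0] = A 1 1 • ![A 0 1, A 1 1 - A 0 0] := by
        funext i; fin_cases i
        · simp only [Matrix.mulVec, dotProduct, Fin.sum_univ_two, Fin.isValue,
            Matrix.cons_val_zero, Matrix.cons_val_one, Matrix.head_cons, Pi.smul_apply,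
            smul_eq_mul, Fin.zero_eta]
          ring
        · simp only [Matrix.mulVec, dotProduct, Fin.sum_univ_two, Fin.isValue,
            Matrix.cons_val_zero, Matrix.cons_val_one, Matrix.head_cons, Pi.smul_apply,
            smul_eq_mul, Fin.mk_one]
          rw [hA10]; ring
      by_cases hbb : A 0 1 ≠ 0
      · refine ⟨![A 0 1, A 1 1 - A 0 0], hv, A 1 1,
          (B 0 0 * A 0 1 + B 0 1 * (A 1 1 - A 0 0)) / A 0 1, hAv, ?_⟩
        funext i; fin_cases i
        · simp only [Matrix.mulVec, dotProduct, Fin.sum_univ_two, Fin.isValue,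
            Matrix.cons_val_zero, Matrix.cons_val_one, Matrix.head_cons, Pi.smul_apply,
            smul_eq_mul, Fin.zero_eta]
          field_simp
        · simp only [Matrix.mulVec, dotProduct, Fin.sum_univ_two, Fin.isValue,
            Matrix.cons_val_zero, Matrix.cons_val_one, Matrix.head_cons, Pi.smul_apply,
            smul_eq_mul, Fin.mk_one]
          field_simp
          linear_combination -cross
      · push_neg at hbb
        have hd : A 1 1 - A 0 0 ≠ 0 := fun h => hscalar ⟨hbb, by linarith⟩
        refine ⟨![A 0 1, A 1 1 - A 0 0], hv, A 1 1,
          (B 1 0 * A 0 1 + B 1 1 * (A 1 1 - A 0 0)) / (A 1 1 - A 0 0), hAv, ?_⟩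
        funext i; fin_cases i
        · simp only [Matrix.mulVec, dotProduct, Fin.sum_univ_two, Fin.isValue,
            Matrix.cons_val_zero, Matrix.cons_val_one, Matrix.head_cons, Pi.smul_apply,
            smul_eq_mul, Fin.zero_eta]
          field_simp
          linear_combination cross
        · simp only [Matrix.mulVec, dotProduct, Fin.sum_univ_two, Fin.isValue,
            Matrix.cons_val_zero, Matrix.cons_val_one, Matrix.head_cons, Pi.smul_apply,
            smul_eq_mul, Fin.mk_one]
          field_simp

/-- Let A, B ∈ SL(2,ℝ) with |tr A| ≥ 2 and |tr B| ≥ 2.  Then tr(A·B·A⁻¹·B⁻¹) = 2 if and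
only if there is a nonzero vector v ∈ ℝ² and reals λ, μ with A·v = λ·v and B·v = μ·v. -/
theorem stmt1 (A B : SL2) (hA : 2 ≤ |trSL A|) (hB : 2 ≤ |trSL B|) :
    trSL (A * B * A⁻¹ * B⁻¹) = 2 ↔
      ∃ v : Fin 2 → ℝ, v ≠ 0 ∧ ∃ l m : ℝ,
        Matrix.mulVec (A : Matrix (Fin 2) (Fin 2) ℝ) v = l • v ∧
        Matrix.mulVec (B : Matrix (Fin 2) (Fin 2) ℝ) v = m • v := by
  have hdA : (A : Matrix (Fin 2) (Fin 2) ℝ).det = 1 := A.2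
  have hdB : (B : Matrix (Fin 2) (Fin 2) ℝ).det = 1 := B.2
  have hdA' : A.1 0 0 * A.1 1 1 - A.1 0 1 * A.1 1 0 = 1 := by
    rw [Matrix.det_fin_two] at hdA; linarith
  have hdB' : B.1 0 0 * B.1 1 1 - B.1 0 1 * B.1 1 0 = 1 := by
    rw [Matrix.det_fin_two] at hdB; linarith
  -- The key trace identity : tr(ABA⁻¹B⁻¹) - 2 = - det (AB - BA)
  have key : trSL (A * B * A⁻¹ * B⁻¹) - 2
      = -((A.1 * B.1 - B.1 * A.1).det) := by
    have h1 : ((A * B * A⁻¹ * B⁻¹ : SL2) : Matrix (Fin 2) (Fin 2) ℝ)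
        = A.1 * B.1 * (A.1).adjugate * (B.1).adjugate := by
      simp [Matrix.SpecialLinearGroup.coe_inv]
    unfold trSL
    rw [h1, Matrix.adjugate_fin_two, Matrix.adjugate_fin_two,
      Matrix.trace_fin_two, Matrix.det_fin_two]
    simp only [Matrix.sub_apply, Matrix.mul_apply, Fin.sum_univ_two,
      Matrix.of_apply, Matrix.cons_val', Matrix.cons_val_zero, Matrix.cons_val_one,
      Matrix.head_cons, Matrix.empty_val', Matrix.cons_val_fin_one, Matrix.head_fin_const]
    linear_combination (2 * B.1 0 0 * B.1 1 1 - 2 * B.1 0 1 * B.1 1 0) * hdA' + 2 * hdB'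
  constructor
  · intro hT
    have hC : (A.1 * B.1 - B.1 * A.1).det = 0 := by linarith [key]
    have htrA : 4 ≤ (A.1 0 0 + A.1 1 1) ^ 2 := by
      have h2 : (2:ℝ) ^ 2 ≤ |trSL A| ^ 2 := by nlinarith
      rw [sq_abs] at h2
      unfold trSL at h2; rw [Matrix.trace_fin_two] at h2; linarith
    have htrB : 4 ≤ (B.1 0 0 + B.1 1 1) ^ 2 := by
      have h2 : (2:ℝ) ^ 2 ≤ |trSL B| ^ 2 := by nlinarith
      rw [sq_abs] at h2
      unfold trSL at h2; rw [Matrix.trace_fin_two] at h2; linarith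
    -- eigenvector of A
    obtain ⟨v, hv, l, hAv⟩ := eig_exists A.1 hdA htrA
    -- a basis-change matrix P with first column v
    obtain ⟨P, hPdet, hPe⟩ : ∃ P : Matrix (Fin 2) (Fin 2) ℝ,
        IsUnit P.det ∧ P.mulVec ![1, 0] = v := by
      by_cases h0 : v 0 ≠ 0
      · refine ⟨!![v 0, 0; v 1, 1], ?_, ?_⟩
        · rw [Matrix.det_fin_two]; simp [isUnit_iff_ne_zero, h0]
        · funext i; fin_cases i <;>
            simp [Matrix.mulVec, dotProduct, Fin.sum_univ_two]
      · push_neg at h0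
        have h1 : v 1 ≠ 0 := by
          intro h1; apply hv; funext i; fin_cases i <;> simp [h0, h1]
        refine ⟨!![v 0, 1; v 1, 0], ?_, ?_⟩
        · rw [Matrix.det_fin_two]; simp [isUnit_iff_ne_zero, h1]
        · funext i; fin_cases i <;>
            simp [Matrix.mulVec, dotProduct, Fin.sum_univ_two]
    have hPne : P.det ≠ 0 := hPdet.ne_zero
    have hPP : P * P⁻¹ = 1 := Matrix.mul_nonsing_inv P hPdet
    have hPP' : P⁻¹ * P = 1 := Matrix.nonsing_inv_mul P hPdet
    set A' := P⁻¹ * A.1 * P with hA'def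
    set B' := P⁻¹ * B.1 * P with hB'def
    have hPA : P * A' = A.1 * P := by
      rw [hA'def, ← Matrix.mul_assoc, ← Matrix.mul_assoc, hPP, Matrix.one_mul]
    have hPB : P * B' = B.1 * P := by
      rw [hB'def, ← Matrix.mul_assoc, ← Matrix.mul_assoc, hPP, Matrix.one_mul]
    -- A' is upper triangular
    have hA'e : A'.mulVec ![1, 0] = l • ![1, 0] := by
      have h2 : A'.mulVec ![1, 0] = P⁻¹.mulVec (A.1.mulVec (P.mulVec ![1, 0])) := by
        rw [Matrix.mulVec_mulVec, Matrix.mulVec_mulVec, hA'def]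
      have h3 : P⁻¹.mulVec v = ![1, 0] := by
        rw [← hPe, Matrix.mulVec_mulVec, hPP', Matrix.one_mulVec]
      rw [h2, hPe, hAv, Matrix.mulVec_smul, h3]
    have hA'10 : A' 1 0 = 0 := by
      have h4 := congrFun hA'e 1
      simpa [Matrix.mulVec, dotProduct, Fin.sum_univ_two] using h4
    have hdetB' : B'.det = 1 := by
      rw [hB'def, Matrix.det_mul, Matrix.det_mul, hdB, mul_one,
        Matrix.det_nonsing_inv, Ring.inverse_eq_inv]
      field_simp
    have htrB' : 4 ≤ (B' 0 0 + B' 1 1) ^ 2 := by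
      have h5 : B'.trace = B.1.trace := by
        rw [hB'def, Matrix.mul_assoc, Matrix.trace_mul_comm, Matrix.mul_assoc,
          hPP, Matrix.mul_one]
      rw [Matrix.trace_fin_two, Matrix.trace_fin_two] at h5
      rw [h5]; exact htrB
    have e1 : A' * B' = P⁻¹ * (A.1 * B.1) * P := by
      rw [hA'def, Matrix.mul_assoc (P⁻¹ * A.1) P B', hPB]
      simp only [Matrix.mul_assoc]
    have e2 : B' * A' = P⁻¹ * (B.1 * A.1) * P := by
      rw [hB'def, Matrix.mul_assoc (P⁻¹ * B.1) P A', hPA]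
      simp only [Matrix.mul_assoc]
    have hC' : (A' * B' - B' * A').det = 0 := by
      have hid : A' * B' - B' * A' = P⁻¹ * (A.1 * B.1 - B.1 * A.1) * P := by
        rw [Matrix.mul_sub, Matrix.sub_mul, ← e1, ← e2]
      rw [hid, Matrix.det_mul, Matrix.det_mul, hC, mul_zero, zero_mul]
    obtain ⟨u, hu, l', m', h1, h2⟩ := tri A' B' hA'10 hdetB' htrB' hC'
    refine ⟨P.mulVec u, ?_, l', m', ?_, ?_⟩
    · intro h
      apply hu
      have h6 : (P⁻¹ * P).mulVec u = 0 := by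
        rw [← Matrix.mulVec_mulVec, h, Matrix.mulVec_zero]
      rwa [hPP', Matrix.one_mulVec] at h6
    · rw [Matrix.mulVec_mulVec, ← hPA, ← Matrix.mulVec_mulVec, h1, Matrix.mulVec_smul]
    · rw [Matrix.mulVec_mulVec, ← hPB, ← Matrix.mulVec_mulVec, h2, Matrix.mulVec_smul]
  · rintro ⟨v, hv, l, m, h1, h2⟩
    have hCv : (A.1 * B.1 - B.1 * A.1).mulVec v = 0 := by
      rw [Matrix.sub_mulVec, ← Matrix.mulVec_mulVec, ← Matrix.mulVec_mulVec, h1, h2,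
        Matrix.mulVec_smul, Matrix.mulVec_smul, h1, h2, smul_comm, sub_self]
    have hC : (A.1 * B.1 - B.1 * A.1).det = 0 :=
      Matrix.exists_mulVec_eq_zero_iff.mp ⟨v, hv, hCv⟩
    linarith [key, hC]
end

section
/- Let s ∈ {1,−1}. (i) If A, B ∈ SL(2,ℝ) are each SL(2,ℝ)-conjugate to U_s, then tr(A·B) ≤ 2, and tr(A·B) = 2 if and only if A·B = B·A. (ii) For every real number τ < 2 there exist A, B ∈ SL(2,ℝ), each SL(2,ℝ)-conjugate to U_s, with tr(A·B) = τ. -/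
open Matrix

/-- For `s ∈ {1,−1}`, `U_s` is the matrix `[[1, s],[0, 1]] ∈ SL(2,ℝ)`. -/
def Umat (s : ℝ) : SL2 := ⟨!![1, s; 0, 1], by rw [Matrix.det_fin_two_of]; ring⟩

/-- `A` is `SL(2,ℝ)`-conjugate to `B`, i.e. `A = P·B·P⁻¹` for some `P ∈ SL(2,ℝ)`. -/
def IsConjTo (A B : SL2) : Prop := ∃ P : SL2, A = P * B * P⁻¹

lemma conj_coe (s : ℝ) (P : SL2) :
    ((P * Umat s * P⁻¹ : SL2) : Matrix (Fin 2) (Fin 2) ℝ)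
      = !![1 - s*((P : Matrix (Fin 2) (Fin 2) ℝ) 0 0 * (P : Matrix (Fin 2) (Fin 2) ℝ) 1 0),
            s*((P : Matrix (Fin 2) (Fin 2) ℝ) 0 0)^2;
          -(s*((P : Matrix (Fin 2) (Fin 2) ℝ) 1 0)^2),
            1 + s*((P : Matrix (Fin 2) (Fin 2) ℝ) 0 0 * (P : Matrix (Fin 2) (Fin 2) ℝ) 1 0)] := by
  set a := (P : Matrix (Fin 2) (Fin 2) ℝ) 0 0
  set b := (P : Matrix (Fin 2) (Fin 2) ℝ) 0 1
  set c := (P : Matrix (Fin 2) (Fin 2) ℝ) 1 0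
  set d := (P : Matrix (Fin 2) (Fin 2) ℝ) 1 1
  have hPm : (P : Matrix (Fin 2) (Fin 2) ℝ) = !![a,b;c,d] := Matrix.eta_fin_two _
  have hdet : a*d - b*c = 1 := by
    have := P.property
    rw [Matrix.det_fin_two] at this
    linarith
  have hPinv : ((P⁻¹ : SL2) : Matrix (Fin 2) (Fin 2) ℝ) = !![d,-b;-c,a] := by
    rw [Matrix.SpecialLinearGroup.coe_inv, hPm, Matrix.adjugate_fin_two_of]
  have hU : ((Umat s : SL2) : Matrix (Fin 2) (Fin 2) ℝ) = !![1,s;0,1] := rfl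
  rw [Matrix.SpecialLinearGroup.coe_mul, Matrix.SpecialLinearGroup.coe_mul,
    hPm, hPinv, hU, Matrix.mul_fin_two, Matrix.mul_fin_two]
  ext i j
  fin_cases i <;> fin_cases j <;>
    simp [Matrix.cons_val_zero, Matrix.cons_val_one] <;>
    (first | linear_combination hdet | ring)

/-- Let s ∈ {1,−1}.  (i) If A, B ∈ SL(2,ℝ) are each conjugate to U_s, then tr(A·B) ≤ 2,
with equality iff A·B = B·A.  (ii) Every τ < 2 is realized as tr(A·B) for such A, B. -/
theorem stmt4 (s : ℝ) (hs : s = 1 ∨ s = -1) :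
    (∀ A B : SL2, IsConjTo A (Umat s) → IsConjTo B (Umat s) →
      trSL (A * B) ≤ 2 ∧ (trSL (A * B) = 2 ↔ A * B = B * A)) ∧
    (∀ τ : ℝ, τ < 2 →
      ∃ A B : SL2, IsConjTo A (Umat s) ∧ IsConjTo B (Umat s) ∧ trSL (A * B) = τ) := by
  have hs2 : s^2 = 1 := by rcases hs with rfl | rfl <;> norm_num
  constructor
  · rintro A B ⟨P, rfl⟩ ⟨Q, rfl⟩
    set a := (P : Matrix (Fin 2) (Fin 2) ℝ) 0 0 with ha
    set c := (P : Matrix (Fin 2) (Fin 2) ℝ) 1 0 with hc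
    set e := (Q : Matrix (Fin 2) (Fin 2) ℝ) 0 0 with he
    set g := (Q : Matrix (Fin 2) (Fin 2) ℝ) 1 0 with hg
    have hAm : ((P * Umat s * P⁻¹ : SL2) : Matrix (Fin 2) (Fin 2) ℝ)
        = !![1 - s*(a*c), s*a^2; -(s*c^2), 1 + s*(a*c)] := conj_coe s P
    have hBm : ((Q * Umat s * Q⁻¹ : SL2) : Matrix (Fin 2) (Fin 2) ℝ)
        = !![1 - s*(e*g), s*e^2; -(s*g^2), 1 + s*(e*g)] := conj_coe s Q
    set D := a*g - c*e with hD
    have htr : trSL ((P * Umat s * P⁻¹) * (Q * Umat s * Q⁻¹)) = 2 - D^2 := by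
      rw [trSL, Matrix.SpecialLinearGroup.coe_mul, hAm, hBm, Matrix.mul_fin_two,
        Matrix.trace_fin_two_of]
      linear_combination (-(a*g-c*e)^2) * hs2
    refine ⟨by rw [htr]; nlinarith [sq_nonneg D], ?_⟩
    rw [htr]
    constructor
    · intro h2
      have hD2 : D^2 = 0 := by linarith
      have hD0 : D = 0 := by
        exact pow_eq_zero_iff (two_ne_zero) |>.mp hD2
      have key : (((P * Umat s * P⁻¹) * (Q * Umat s * Q⁻¹) : SL2) : Matrix (Fin 2) (Fin 2) ℝ)
          = (((Q * Umat s * Q⁻¹) * (P * Umat s * P⁻¹) : SL2) : Matrix (Fin 2) (Fin 2) ℝ) := by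
        rw [Matrix.SpecialLinearGroup.coe_mul (P * Umat s * P⁻¹) (Q * Umat s * Q⁻¹),
          Matrix.SpecialLinearGroup.coe_mul (Q * Umat s * Q⁻¹) (P * Umat s * P⁻¹),
          hAm, hBm, Matrix.mul_fin_two, Matrix.mul_fin_two]
        ext i j
        fin_cases i <;> fin_cases j <;>
          simp [Matrix.cons_val_zero, Matrix.cons_val_one] <;>
          (first
            | linear_combination (-(s^2)*(a*g+c*e)) * hD0
            | linear_combination (2*s^2*(a*e)) * hD0
            | linear_combination (-(2*s^2*(c*g))) * hD0
            | linear_combination (s^2*(a*g+c*e)) * hD0)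
      exact Subtype.ext key
    · intro hco
      have hmat : (!![1 - s*(a*c), s*a^2; -(s*c^2), 1 + s*(a*c)] : Matrix (Fin 2) (Fin 2) ℝ)
            * !![1 - s*(e*g), s*e^2; -(s*g^2), 1 + s*(e*g)]
          = !![1 - s*(e*g), s*e^2; -(s*g^2), 1 + s*(e*g)]
            * !![1 - s*(a*c), s*a^2; -(s*c^2), 1 + s*(a*c)] := by
        rw [← hAm, ← hBm, ← Matrix.SpecialLinearGroup.coe_mul,
          ← Matrix.SpecialLinearGroup.coe_mul, hco]
      rw [Matrix.mul_fin_two, Matrix.mul_fin_two] at hmat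
      have h00 : (1 - s*(a*c)) * (1 - s*(e*g)) + s*a^2 * (-(s*g^2))
          = (1 - s*(e*g)) * (1 - s*(a*c)) + s*e^2 * (-(s*c^2)) := by
        simpa using congrFun (congrFun hmat 0) 0
      have h01 : (1 - s*(a*c)) * (s*e^2) + s*a^2 * (1 + s*(e*g))
          = (1 - s*(e*g)) * (s*a^2) + s*e^2 * (1 + s*(a*c)) := by
        simpa using congrFun (congrFun hmat 0) 1
      have r1 : D * (a*g + c*e) = 0 := by
        linear_combination -h00 - D*(a*g+c*e)*hs2
      have r2 : D * (a*e) = 0 := by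
        linear_combination (1/2 : ℝ)*h01 - D*(a*e)*hs2
      have hD4 : D^4 = 0 := by
        linear_combination (D*(a*g+c*e))*r1 - 4*(D*(c*g))*r2
      have hD0 : D = 0 := pow_eq_zero_iff (by norm_num : (4:ℕ) ≠ 0) |>.mp hD4
      rw [hD0]; ring
  · intro τ hτ
    have hle : (0:ℝ) ≤ 2 - τ := by linarith
    set q : ℝ := Real.sqrt (2 - τ) with hq
    have hq2 : q^2 = 2 - τ := Real.sq_sqrt hle
    set Pc : SL2 := ⟨!![1,0;q,1], by rw [Matrix.det_fin_two_of]; ring⟩ with hPc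
    refine ⟨Umat s, Pc * Umat s * Pc⁻¹, ⟨1, by simp⟩, ⟨Pc, rfl⟩, ?_⟩
    have hBm : ((Pc * Umat s * Pc⁻¹ : SL2) : Matrix (Fin 2) (Fin 2) ℝ)
        = !![1 - s*(1*q), s*1^2; -(s*q^2), 1 + s*(1*q)] := conj_coe s Pc
    rw [trSL, Matrix.SpecialLinearGroup.coe_mul, hBm,
      show ((Umat s : SL2) : Matrix (Fin 2) (Fin 2) ℝ) = !![1,s;0,1] from rfl,
      Matrix.mul_fin_two, Matrix.trace_fin_two_of]
    linear_combination (-(q^2))*hs2 - hq2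
end

section
/- (i) If A ∈ SL(2,ℝ) is SL(2,ℝ)-conjugate to U₁ and B ∈ SL(2,ℝ) is SL(2,ℝ)-conjugate to U₋₁, then tr(A·B) ≥ 2, and tr(A·B) = 2 if and only if A·B = B·A. (ii) For every real number τ > 2 there exist A, B ∈ SL(2,ℝ) with A SL(2,ℝ)-conjugate to U₁, B SL(2,ℝ)-conjugate to U₋₁, and tr(A·B) = τ. -/
open Matrix

lemma coe_eta (C : SL2) : (C : Matrix (Fin 2) (Fin 2) ℝ) =
    !![(C : Matrix (Fin 2) (Fin 2) ℝ) 0 0, (C : Matrix (Fin 2) (Fin 2) ℝ) 0 1;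
       (C : Matrix (Fin 2) (Fin 2) ℝ) 1 0, (C : Matrix (Fin 2) (Fin 2) ℝ) 1 1] :=
  Matrix.eta_fin_two _

lemma key_tr (C : SL2) :
    trSL (Umat 1 * (C * Umat (-1) * C⁻¹)) =
      2 + ((C : Matrix (Fin 2) (Fin 2) ℝ) 1 0)^2 := by
  have hdet : (C : Matrix (Fin 2) (Fin 2) ℝ) 0 0 * (C : Matrix (Fin 2) (Fin 2) ℝ) 1 1
      - (C : Matrix (Fin 2) (Fin 2) ℝ) 0 1 * (C : Matrix (Fin 2) (Fin 2) ℝ) 1 0 = 1 := by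
    rw [← Matrix.det_fin_two]; exact C.2
  rw [trSL]
  simp only [Matrix.SpecialLinearGroup.coe_mul, Matrix.SpecialLinearGroup.coe_inv]
  simp only [Umat, Matrix.SpecialLinearGroup.coe_mk]
  rw [coe_eta C, Matrix.adjugate_fin_two_of]
  simp only [Matrix.mul_fin_two, Matrix.trace_fin_two_of, Matrix.cons_val',
    Matrix.cons_val_zero, Matrix.cons_val_one, Matrix.head_cons, Matrix.empty_val',
    Matrix.cons_val_fin_one, Matrix.of_apply, Matrix.head_fin_const]
  nlinarith [hdet]

lemma key_comm (C : SL2) :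
    Umat 1 * (C * Umat (-1) * C⁻¹) = (C * Umat (-1) * C⁻¹) * Umat 1 ↔
      (C : Matrix (Fin 2) (Fin 2) ℝ) 1 0 = 0 := by
  have hdet : (C : Matrix (Fin 2) (Fin 2) ℝ) 0 0 * (C : Matrix (Fin 2) (Fin 2) ℝ) 1 1
      - (C : Matrix (Fin 2) (Fin 2) ℝ) 0 1 * (C : Matrix (Fin 2) (Fin 2) ℝ) 1 0 = 1 := by
    rw [← Matrix.det_fin_two]; exact C.2
  rw [show ∀ X Y : SL2, X = Y ↔ (X : Matrix (Fin 2) (Fin 2) ℝ) = Y from fun X Y => Subtype.ext_iff]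
  simp only [Matrix.SpecialLinearGroup.coe_mul, Matrix.SpecialLinearGroup.coe_inv]
  simp only [Umat, Matrix.SpecialLinearGroup.coe_mk]
  rw [coe_eta C, Matrix.adjugate_fin_two_of]
  simp only [Matrix.mul_fin_two]
  rw [← Matrix.ext_iff]
  constructor
  · intro h
    have h00 := h 0 0
    simp only [Matrix.cons_val', Matrix.cons_val_zero, Matrix.cons_val_one, Matrix.head_cons,
      Matrix.empty_val', Matrix.cons_val_fin_one, Matrix.of_apply] at h00
    have hsq : ((C : Matrix (Fin 2) (Fin 2) ℝ) 1 0) ^ 2 = 0 := by nlinarith [h00]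
    exact (pow_eq_zero_iff (two_ne_zero)).mp hsq
  · intro hc i j
    have hc' : (C : Matrix (Fin 2) (Fin 2) ℝ) 1 0 = 0 := by simpa using hc
    fin_cases i <;> fin_cases j <;>
      simp only [Matrix.cons_val', Matrix.cons_val_zero, Matrix.cons_val_one, Matrix.head_cons,
        Matrix.empty_val', Matrix.cons_val_fin_one, Matrix.of_apply, Fin.zero_eta, Fin.mk_one,
        hc'] <;>
      ring

lemma trSL_conj (P X : SL2) : trSL (P * X * P⁻¹) = trSL X := by
  simp only [trSL, Matrix.SpecialLinearGroup.coe_mul]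
  rw [Matrix.trace_mul_cycle, ← Matrix.SpecialLinearGroup.coe_mul,
    ← Matrix.SpecialLinearGroup.coe_mul, show P⁻¹ * P * X = X by group]

/-- (i) If A is conjugate to U₁ and B is conjugate to U₋₁, then tr(A·B) ≥ 2, with equality
iff A·B = B·A.  (ii) Every τ > 2 is realized as tr(A·B) for such A, B. -/
theorem stmt5 :
    (∀ A B : SL2, IsConjTo A (Umat 1) → IsConjTo B (Umat (-1)) →
      2 ≤ trSL (A * B) ∧ (trSL (A * B) = 2 ↔ A * B = B * A)) ∧
    (∀ τ : ℝ, 2 < τ →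
      ∃ A B : SL2, IsConjTo A (Umat 1) ∧ IsConjTo B (Umat (-1)) ∧ trSL (A * B) = τ) := by
  constructor
  · rintro A B ⟨P, rfl⟩ ⟨Q, rfl⟩
    set C : SL2 := P⁻¹ * Q with hC
    have hB : Q * Umat (-1) * Q⁻¹ = P * (C * Umat (-1) * C⁻¹) * P⁻¹ := by
      simp [hC, mul_assoc]
    have hAB : (P * Umat 1 * P⁻¹) * (Q * Umat (-1) * Q⁻¹)
        = P * (Umat 1 * (C * Umat (-1) * C⁻¹)) * P⁻¹ := by
      rw [hB]; group
    have htr : trSL ((P * Umat 1 * P⁻¹) * (Q * Umat (-1) * Q⁻¹))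
        = trSL (Umat 1 * (C * Umat (-1) * C⁻¹)) := by
      rw [hAB, trSL_conj]
    rw [htr, key_tr]
    refine ⟨by nlinarith [sq_nonneg ((C : Matrix (Fin 2) (Fin 2) ℝ) 1 0)], ?_⟩
    have hcomm : (P * Umat 1 * P⁻¹) * (Q * Umat (-1) * Q⁻¹) = (Q * Umat (-1) * Q⁻¹) * (P * Umat 1 * P⁻¹)
        ↔ Umat 1 * (C * Umat (-1) * C⁻¹) = (C * Umat (-1) * C⁻¹) * Umat 1 := by
      rw [hB]
      constructor <;> intro h
      · have := congrArg (fun M => P⁻¹ * M * P) h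
        simpa [mul_assoc] using this
      · have := congrArg (fun M => P * M * P⁻¹) h
        simpa [mul_assoc] using this
    rw [hcomm, key_comm]
    constructor
    · intro h; nlinarith [h, sq_nonneg ((C : Matrix (Fin 2) (Fin 2) ℝ) 1 0)]
    · intro h; rw [h]; ring
  · intro τ hτ
    set c : ℝ := Real.sqrt (τ - 2) with hc
    have hc2 : c ^ 2 = τ - 2 := Real.sq_sqrt (by linarith)
    set C : SL2 := ⟨!![1, 0; c, 1], by rw [Matrix.det_fin_two_of]; ring⟩ with hCdef
    refine ⟨Umat 1, C * Umat (-1) * C⁻¹, ⟨1, by simp⟩, ⟨C, rfl⟩, ?_⟩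
    rw [key_tr]
    have : (C : Matrix (Fin 2) (Fin 2) ℝ) 1 0 = c := by
      simp [hCdef]
    rw [this, hc2]; ring
end

section
/- Let s ∈ {1,−1}, and let A, B ∈ SL(2,ℝ) each be SL(2,ℝ)-conjugate to U_s. If −2 < tr(A·B) < 2, then A·B is SL(2,ℝ)-conjugate to the matrix [[cos θ, s·sin θ],[−s·sin θ, cos θ]] for some θ ∈ (0, π). -/
open Matrix

/-- The matrix `[[cos θ, s·sin θ],[−s·sin θ, cos θ]]`. -/
noncomputable def RotS (s θ : ℝ) : Matrix (Fin 2) (Fin 2) ℝ :=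
  !![Real.cos θ, s * Real.sin θ; -(s * Real.sin θ), Real.cos θ]

/-- A matrix `A` is `SL(2,ℝ)`-conjugate to a matrix `M` if `A = P·M·P⁻¹` for some
`P ∈ SL(2,ℝ)`. -/
def IsMatConjTo (A M : Matrix (Fin 2) (Fin 2) ℝ) : Prop :=
  ∃ P : SL2, A = (P : Matrix (Fin 2) (Fin 2) ℝ) * M * ((P⁻¹ : SL2) : Matrix (Fin 2) (Fin 2) ℝ)

set_option maxHeartbeats 1000000 in
lemma conj_U_form (s : ℝ) (P : SL2) :
    ((P * Umat s * P⁻¹ : SL2) : Matrix (Fin 2) (Fin 2) ℝ) =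
      !![1 - s * (P : Matrix (Fin 2) (Fin 2) ℝ) 0 0 * (P : Matrix (Fin 2) (Fin 2) ℝ) 1 0,
          s * (P : Matrix (Fin 2) (Fin 2) ℝ) 0 0 ^ 2;
        -(s * (P : Matrix (Fin 2) (Fin 2) ℝ) 1 0 ^ 2),
          1 + s * (P : Matrix (Fin 2) (Fin 2) ℝ) 0 0 * (P : Matrix (Fin 2) (Fin 2) ℝ) 1 0] := by
  have hdet : (P : Matrix (Fin 2) (Fin 2) ℝ) 0 0 * (P : Matrix (Fin 2) (Fin 2) ℝ) 1 1
      - (P : Matrix (Fin 2) (Fin 2) ℝ) 0 1 * (P : Matrix (Fin 2) (Fin 2) ℝ) 1 0 = 1 := by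
    have := P.property
    rwa [Matrix.det_fin_two] at this
  have h1 : ((P⁻¹ : SL2) : Matrix (Fin 2) (Fin 2) ℝ) = adjugate (P : Matrix (Fin 2) (Fin 2) ℝ) :=
    Matrix.SpecialLinearGroup.coe_inv P
  rw [Matrix.SpecialLinearGroup.coe_mul, Matrix.SpecialLinearGroup.coe_mul, h1,
    Matrix.adjugate_fin_two]
  rw [show (Umat s : Matrix (Fin 2) (Fin 2) ℝ) = !![1, s; 0, 1] from rfl]
  rw [Matrix.eta_fin_two (P : Matrix (Fin 2) (Fin 2) ℝ)]
  ext i j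
  fin_cases i <;> fin_cases j <;>
    simp [Matrix.mul_apply, Fin.sum_univ_two] <;> nlinarith [hdet]

set_option maxHeartbeats 1000000 in
lemma elliptic_conj (s : ℝ) (hs2 : s ^ 2 = 1) (M : Matrix (Fin 2) (Fin 2) ℝ)
    (hdet : M 0 0 * M 1 1 - M 0 1 * M 1 0 = 1)
    (htr1 : -2 < M 0 0 + M 1 1) (htr2 : M 0 0 + M 1 1 < 2)
    (hb : 0 < s * M 0 1) :
    ∃ θ ∈ Set.Ioo 0 Real.pi, IsMatConjTo M (RotS s θ) := by
  have ht1 : (-1 : ℝ) < (M 0 0 + M 1 1) / 2 := by linarith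
  have ht2 : (M 0 0 + M 1 1) / 2 < 1 := by linarith
  set θ := Real.arccos ((M 0 0 + M 1 1) / 2) with hθ
  have hθ1 : 0 < θ := Real.arccos_pos.mpr ht2
  have hθ2 : θ < Real.pi := by
    rw [hθ, Real.arccos]
    have := Real.neg_pi_div_two_lt_arcsin.mpr ht1
    linarith
  have hcos : Real.cos θ = (M 0 0 + M 1 1) / 2 := Real.cos_arccos (le_of_lt ht1) (le_of_lt ht2)
  have hσpos : 0 < Real.sin θ := Real.sin_pos_of_pos_of_lt_pi hθ1 hθ2
  have hσne : Real.sin θ ≠ 0 := ne_of_gt hσpos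
  have hσsq : Real.sin θ ^ 2 = 1 - ((M 0 0 + M 1 1) / 2) ^ 2 := by
    have := Real.sin_sq_add_cos_sq θ
    rw [hcos] at this; linarith
  obtain ⟨a, ha'⟩ : ∃ a : ℝ, a * (2 * Real.sin θ) = s * (M 0 0 - M 1 1) :=
    ⟨s * (M 0 0 - M 1 1) / (2 * Real.sin θ), by field_simp⟩
  obtain ⟨β, hβpos, hβ'⟩ : ∃ β : ℝ, 0 < β ∧ β ^ 2 * Real.sin θ = s * M 0 1 := by
    refine ⟨Real.sqrt (s * M 0 1 / Real.sin θ), Real.sqrt_pos.mpr (div_pos hb hσpos), ?_⟩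
    rw [Real.sq_sqrt (le_of_lt (div_pos hb hσpos))]; field_simp
  have hβne : β ≠ 0 := ne_of_gt hβpos
  have h10 : M 1 0 = -(s * Real.sin θ * (1 + a ^ 2)) / β ^ 2 := by
    rw [eq_div_iff (pow_ne_zero 2 hβne)]
    have hkey : Real.sin θ ^ 2 * (M 1 0 * β ^ 2)
        = Real.sin θ ^ 2 * (-(s * Real.sin θ * (1 + a ^ 2))) := by
      linear_combination (Real.sin θ * M 1 0) * hβ'
        + (s * Real.sin θ / 4 * (a * (2 * Real.sin θ) + s * (M 0 0 - M 1 1))) * ha'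
        + (s * Real.sin θ) * hσsq + (-(s * Real.sin θ)) * hdet
        + (s * Real.sin θ * (M 0 0 - M 1 1) ^ 2 / 4) * hs2
    exact mul_left_cancel₀ (pow_ne_zero 2 hσne) hkey
  have e00 : M 0 0 = (M 0 0 + M 1 1) / 2 + s * Real.sin θ * a := by
    linear_combination (-(s) / 2) * ha' + (-(M 0 0 - M 1 1) / 2) * hs2
  have e01 : M 0 1 = s * Real.sin θ * β ^ 2 := by
    linear_combination (-s) * hβ' + (-(M 0 1)) * hs2
  have e11 : M 1 1 = (M 0 0 + M 1 1) / 2 - s * Real.sin θ * a := by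
    linear_combination (s / 2) * ha' + ((M 0 0 - M 1 1) / 2) * hs2
  have hPdet : (!![β, 0; -a / β, 1 / β] : Matrix (Fin 2) (Fin 2) ℝ).det = 1 := by
    rw [Matrix.det_fin_two_of]; field_simp; ring
  refine ⟨θ, ⟨hθ1, hθ2⟩, ⟨⟨!![β, 0; -a / β, 1 / β], hPdet⟩, ?_⟩⟩
  have hcoeinv : (((⟨!![β, 0; -a / β, 1 / β], hPdet⟩ : SL2)⁻¹ : SL2) : Matrix (Fin 2) (Fin 2) ℝ)
      = !![1 / β, 0; a / β, β] := by
    rw [show (((⟨!![β, 0; -a / β, 1 / β], hPdet⟩ : SL2)⁻¹ : SL2) : Matrix (Fin 2) (Fin 2) ℝ) = adjugate ((⟨!![β, 0; -a / β, 1 / β], hPdet⟩ : SL2) : Matrix (Fin 2) (Fin 2) ℝ) from Matrix.SpecialLinearGroup.coe_inv _]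
    rw [show ((⟨!![β, 0; -a / β, 1 / β], hPdet⟩ : SL2) : Matrix (Fin 2) (Fin 2) ℝ)
      = !![β, 0; -a / β, 1 / β] from rfl]
    rw [Matrix.adjugate_fin_two]
    ext i j; fin_cases i <;> fin_cases j <;> simp <;> ring
  rw [hcoeinv]
  rw [show ((⟨!![β, 0; -a / β, 1 / β], hPdet⟩ : SL2) : Matrix (Fin 2) (Fin 2) ℝ)
      = !![β, 0; -a / β, 1 / β] from rfl]
  rw [RotS, hcos]
  have hprod : (!![β, 0; -a / β, 1 / β] : Matrix (Fin 2) (Fin 2) ℝ)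
      * !![(M 0 0 + M 1 1) / 2, s * Real.sin θ; -(s * Real.sin θ), (M 0 0 + M 1 1) / 2]
      * !![1 / β, 0; a / β, β]
      = !![(M 0 0 + M 1 1) / 2 + s * Real.sin θ * a, s * Real.sin θ * β ^ 2;
           -(s * Real.sin θ * (1 + a ^ 2)) / β ^ 2, (M 0 0 + M 1 1) / 2 - s * Real.sin θ * a] := by
    ext i j
    fin_cases i <;> fin_cases j <;>
      simp [Matrix.mul_apply, Fin.sum_univ_two]
    all_goals try field_simp
    all_goals ring_nf
  rw [hprod]
  ext i j
  fin_cases i <;> fin_cases j <;> simp only [Matrix.cons_val', Matrix.cons_val_zero,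
    Matrix.cons_val_one, Matrix.head_cons, Matrix.empty_val', Matrix.cons_val_fin_one,
    Matrix.head_fin_const]
  · exact e00
  · exact e01
  · exact h10
  · exact e11


set_option maxHeartbeats 1000000 in
/-- Let s ∈ {1,−1} and A, B ∈ SL(2,ℝ) each conjugate to U_s.  If −2 < tr(A·B) < 2, then
A·B is conjugate to [[cos θ, s·sin θ],[−s·sin θ, cos θ]] for some θ ∈ (0, π). -/
theorem stmt6 (s : ℝ) (hs : s = 1 ∨ s = -1) (A B : SL2)
    (hA : IsConjTo A (Umat s)) (hB : IsConjTo B (Umat s))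
    (h₁ : -2 < trSL (A * B)) (h₂ : trSL (A * B) < 2) :
    ∃ θ ∈ Set.Ioo 0 Real.pi,
      IsMatConjTo ((A * B : SL2) : Matrix (Fin 2) (Fin 2) ℝ) (RotS s θ) := by
  have hs2 : s ^ 2 = 1 := by rcases hs with h | h <;> rw [h] <;> norm_num
  obtain ⟨P, hP⟩ := hA
  obtain ⟨Q, hQ⟩ := hB
  set p : ℝ := (P : Matrix (Fin 2) (Fin 2) ℝ) 0 0 with hp
  set r : ℝ := (P : Matrix (Fin 2) (Fin 2) ℝ) 1 0 with hr
  set u : ℝ := (Q : Matrix (Fin 2) (Fin 2) ℝ) 0 0 with hu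
  set w : ℝ := (Q : Matrix (Fin 2) (Fin 2) ℝ) 1 0 with hw
  have hAm : (A : Matrix (Fin 2) (Fin 2) ℝ)
      = !![1 - s * p * r, s * p ^ 2; -(s * r ^ 2), 1 + s * p * r] := by
    rw [hP]; exact conj_U_form s P
  have hBm : (B : Matrix (Fin 2) (Fin 2) ℝ)
      = !![1 - s * u * w, s * u ^ 2; -(s * w ^ 2), 1 + s * u * w] := by
    rw [hQ]; exact conj_U_form s Q
  set M : Matrix (Fin 2) (Fin 2) ℝ := ((A * B : SL2) : Matrix (Fin 2) (Fin 2) ℝ) with hM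
  have hMm : M = !![1 - s * p * r, s * p ^ 2; -(s * r ^ 2), 1 + s * p * r]
      * !![1 - s * u * w, s * u ^ 2; -(s * w ^ 2), 1 + s * u * w] := by
    rw [hM, Matrix.SpecialLinearGroup.coe_mul, hAm, hBm]
  have hM00 : M 0 0 = (1 - s * p * r) * (1 - s * u * w) + s * p ^ 2 * (-(s * w ^ 2)) := by
    rw [hMm]; simp [Matrix.mul_apply, Fin.sum_univ_two]
  have hM01 : M 0 1 = (1 - s * p * r) * (s * u ^ 2) + s * p ^ 2 * (1 + s * u * w) := by
    rw [hMm]; simp [Matrix.mul_apply, Fin.sum_univ_two]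
  have hM11 : M 1 1 = -(s * r ^ 2) * (s * u ^ 2) + (1 + s * p * r) * (1 + s * u * w) := by
    rw [hMm]; simp [Matrix.mul_apply, Fin.sum_univ_two]
  have hdet : M 0 0 * M 1 1 - M 0 1 * M 1 0 = 1 := by
    have := (A * B : SL2).property
    rw [Matrix.det_fin_two] at this
    linarith [this]
  have htr : trSL (A * B) = M 0 0 + M 1 1 := by
    rw [trSL, ← hM, Matrix.trace_fin_two]
  set d : ℝ := p * w - r * u with hd
  have htreq : M 0 0 + M 1 1 = 2 - d ^ 2 := by
    rw [hM00, hM11, hd]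
    linear_combination (2 * p * r * u * w - p ^ 2 * w ^ 2 - r ^ 2 * u ^ 2) * hs2
  have hd2 : d ^ 2 < 4 := by rw [htr, htreq] at h₁; linarith
  have hdne : d ≠ 0 := by
    intro h
    rw [htr, htreq, h] at h₂; norm_num at h₂
  have hbval : s * M 0 1 = p ^ 2 + u ^ 2 + s * p * u * d := by
    rw [hM01, hd]
    linear_combination (u ^ 2 - p * r * u ^ 2 * s + p ^ 2 * u * w * s + p ^ 2) * hs2
  have hb : 0 < s * M 0 1 := by
    rw [hbval]
    have h4 : 4 * (p ^ 2 + u ^ 2 + s * p * u * d)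
        = (s * p * d + 2 * u) ^ 2 + p ^ 2 * (4 - d ^ 2) := by
      linear_combination (p ^ 2 * d ^ 2 + 2 * p * u * d * s + 2*p*u^2*r*s - 2*p^2*u*s*w - 2*p^2*u^2*r^2 + 4*p^3*u*w*r - 2*p^4*w^2) * hs2
    by_cases hpz : p = 0
    · have huz : u ≠ 0 := by
        intro h; apply hdne; rw [hd, hpz, h]; ring
      have h0 : s * p * u * d = 0 := by rw [hpz]; ring
      have hp2 : p ^ 2 = 0 := by rw [hpz]; ring
      have : 0 < u ^ 2 := by positivity
      linarith
    · have : 0 < p ^ 2 * (4 - d ^ 2) := by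
        apply mul_pos (by positivity) (by linarith)
      nlinarith [sq_nonneg (s * p * d + 2 * u)]
  rw [hM] at hdet hb ⊢
  rw [htr] at h₁ h₂
  rw [hM] at h₁ h₂
  exact elliptic_conj s hs2 _ hdet h₁ h₂ hb
end

section
/- Let s ∈ {1,−1}, let A ∈ SL(2,ℝ) be SL(2,ℝ)-conjugate to U_s, and let B ∈ SL(2,ℝ) be SL(2,ℝ)-conjugate to R(θ₀) for some θ₀ ∈ (0, π). If −2 < tr(A·B) < 2, then A·B is SL(2,ℝ)-conjugate to R(θ) for some θ ∈ (0, π). -/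
open Matrix

/-- The rotation matrix `R(θ) = [[cos θ, sin θ],[−sin θ, cos θ]] ∈ SL(2,ℝ)`. -/
noncomputable def Rot (θ : ℝ) : SL2 :=
  ⟨!![Real.cos θ, Real.sin θ; -Real.sin θ, Real.cos θ], by
    rw [Matrix.det_fin_two_of]; linear_combination Real.sin_sq_add_cos_sq θ⟩

-- key entry computation for conjugate of rotation
lemma rot_conj_entry (θ : ℝ) (hθ : 0 < Real.sin θ) (Q : SL2) :
    ((Q * Rot θ * Q⁻¹ : SL2) : Matrix (Fin 2) (Fin 2) ℝ) 1 0 < 0 := by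
  have hr : (Q : Matrix (Fin 2) (Fin 2) ℝ) 1 0 ≠ 0 ∨
      (Q : Matrix (Fin 2) (Fin 2) ℝ) 1 1 ≠ 0 := by
    by_contra h
    push_neg at h
    have hd := Q.2
    rw [Matrix.det_fin_two, h.1, h.2] at hd
    simp at hd
  have hinv : ((Q⁻¹ : SL2) : Matrix (Fin 2) (Fin 2) ℝ) =
      !![(Q : Matrix (Fin 2) (Fin 2) ℝ) 1 1, -(Q : Matrix (Fin 2) (Fin 2) ℝ) 0 1;
         -(Q : Matrix (Fin 2) (Fin 2) ℝ) 1 0, (Q : Matrix (Fin 2) (Fin 2) ℝ) 0 0] := by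
    rw [Matrix.SpecialLinearGroup.coe_inv, Matrix.adjugate_fin_two]
  set r := (Q : Matrix (Fin 2) (Fin 2) ℝ) 1 0
  set u := (Q : Matrix (Fin 2) (Fin 2) ℝ) 1 1
  have hru : 0 < r ^ 2 + u ^ 2 := by
    rcases hr with h | h
    · have := sq_nonneg u; nlinarith [sq_nonneg r, sq_pos_of_ne_zero h]
    · nlinarith [sq_nonneg r, sq_pos_of_ne_zero h]
  have : ((Q * Rot θ * Q⁻¹ : SL2) : Matrix (Fin 2) (Fin 2) ℝ) 1 0
      = - Real.sin θ * (r ^ 2 + u ^ 2) := by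
    simp only [Matrix.SpecialLinearGroup.coe_mul, hinv]
    simp only [Rot]
    rw [Matrix.mul_apply]
    simp [Matrix.mul_apply, Fin.sum_univ_two]
    ring
  rw [this]
  nlinarith

lemma aux_mul (a b c d co ω k : ℝ) (hω : ω ≠ 0) (hk : k ≠ 0)
    (hdet : a * d - b * c = 1) (hco : a + d = 2 * co) (hω2 : ω ^ 2 = 1 - co ^ 2) :
    !![a, b; c, d] * !![(a - co) / (ω * k), 1 / k; c / (ω * k), 0] =
      !![(a - co) / (ω * k), 1 / k; c / (ω * k), 0] * !![co, ω; -ω, co] := by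
  ext i j
  fin_cases i <;> fin_cases j
  · simp [Matrix.mul_apply, Fin.sum_univ_two]
    field_simp
    linear_combination a * hco - hdet + hω2
  · simp [Matrix.mul_apply, Fin.sum_univ_two]
    field_simp
    ring
  · simp [Matrix.mul_apply, Fin.sum_univ_two]
    field_simp
    linear_combination c * hco
  · simp [Matrix.mul_apply, Fin.sum_univ_two]
    field_simp

lemma elliptic_conj_rot (M : SL2)
    (hc : (M : Matrix (Fin 2) (Fin 2) ℝ) 1 0 < 0)
    (h₁ : -2 < trSL M) (h₂ : trSL M < 2) :
    ∃ θ ∈ Set.Ioo 0 Real.pi, IsConjTo M (Rot θ) := by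
  set a := (M : Matrix (Fin 2) (Fin 2) ℝ) 0 0 with ha
  set b := (M : Matrix (Fin 2) (Fin 2) ℝ) 0 1 with hb
  set c := (M : Matrix (Fin 2) (Fin 2) ℝ) 1 0 with hcdef
  set d := (M : Matrix (Fin 2) (Fin 2) ℝ) 1 1 with hd
  have hdet : a * d - b * c = 1 := by
    have := M.2; rwa [Matrix.det_fin_two] at this
  have htr : trSL M = a + d := by
    simp [trSL, Matrix.trace_fin_two, ha, hd]
  rw [htr] at h₁ h₂
  set t : ℝ := a + d with ht
  have ht1 : -1 < t / 2 := by linarith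
  have ht2 : t / 2 < 1 := by linarith
  set θ : ℝ := Real.arccos (t / 2) with hθdef
  have hθ0 : 0 < θ := Real.arccos_pos.2 ht2
  have hθπ : θ < Real.pi := by
    refine lt_of_le_of_ne (Real.arccos_le_pi _) fun h => ?_
    have := Real.arccos_eq_pi.1 h; linarith
  have hcos : Real.cos θ = t / 2 := Real.cos_arccos (le_of_lt ht1) (le_of_lt ht2)
  set ω : ℝ := Real.sin θ with hω
  have hωpos : 0 < ω := Real.sin_pos_of_pos_of_lt_pi hθ0 hθπ
  have hω2 : ω ^ 2 = 1 - (t / 2) ^ 2 := by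
    have := Real.sin_sq_add_cos_sq θ
    rw [hcos] at this; linarith
  set k : ℝ := Real.sqrt (-c / ω) with hk
  have hkpos : 0 < k := Real.sqrt_pos.2 (div_pos (neg_pos.2 hc) hωpos)
  have hk2 : k ^ 2 = -c / ω := Real.sq_sqrt (le_of_lt (div_pos (neg_pos.2 hc) hωpos))
  have hk2' : ω * k ^ 2 = -c := by
    rw [hk2]; field_simp
  have hωne : ω ≠ 0 := ne_of_gt hωpos
  have hkne : k ≠ 0 := ne_of_gt hkpos
  refine ⟨θ, ⟨hθ0, hθπ⟩, ?_⟩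
  set Pm : Matrix (Fin 2) (Fin 2) ℝ :=
    !![(a - t / 2) / (ω * k), 1 / k; c / (ω * k), 0] with hPm
  have hPdet : Pm.det = 1 := by
    rw [hPm, Matrix.det_fin_two_of]
    field_simp
    linear_combination (-2) * hk2'
  let P0 : SL2 := ⟨Pm, hPdet⟩
  refine ⟨P0, ?_⟩
  rw [eq_mul_inv_iff_mul_eq]
  have hM : (M : Matrix (Fin 2) (Fin 2) ℝ) = !![a, b; c, d] := by
    rw [ha, hb, hcdef, hd]; exact (Matrix.etaExpand_eq (M : Matrix (Fin 2) (Fin 2) ℝ)).symm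
  have key := aux_mul a b c d (t / 2) ω k hωne hkne hdet (by ring) hω2
  apply Subtype.ext
  show (M : Matrix (Fin 2) (Fin 2) ℝ) * Pm = Pm * (Rot θ : Matrix (Fin 2) (Fin 2) ℝ)
  rw [hM, hPm]
  have hR : (Rot θ : Matrix (Fin 2) (Fin 2) ℝ) = !![t / 2, ω; -ω, t / 2] := by
    simp [Rot, hcos, hω]
  rw [hR]
  exact key

/-- Let s ∈ {1,−1}, A conjugate to U_s and B conjugate to R(θ₀) for some θ₀ ∈ (0, π).
If −2 < tr(A·B) < 2, then A·B is conjugate to R(θ) for some θ ∈ (0, π). -/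
theorem stmt7 (s : ℝ) (hs : s = 1 ∨ s = -1) (A B : SL2)
    (hA : IsConjTo A (Umat s))
    (hB : ∃ θ₀ ∈ Set.Ioo 0 Real.pi, IsConjTo B (Rot θ₀))
    (h₁ : -2 < trSL (A * B)) (h₂ : trSL (A * B) < 2) :
    ∃ θ ∈ Set.Ioo 0 Real.pi, IsConjTo (A * B) (Rot θ) := by
  obtain ⟨P, hP⟩ := hA
  obtain ⟨θ₀, hθ₀, Q, hQ⟩ := hB
  set M : SL2 := Umat s * (P⁻¹ * B * P) with hM
  have hAB : A * B = P * M * P⁻¹ := by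
    rw [hP, hM]; group
  have hB' : P⁻¹ * B * P = (P⁻¹ * Q) * Rot θ₀ * (P⁻¹ * Q)⁻¹ := by
    rw [hQ]; group
  have hsin : 0 < Real.sin θ₀ := Real.sin_pos_of_pos_of_lt_pi hθ₀.1 hθ₀.2
  have hent : (M : Matrix (Fin 2) (Fin 2) ℝ) 1 0 < 0 := by
    have h1 := rot_conj_entry θ₀ hsin (P⁻¹ * Q)
    rw [← hB'] at h1
    have h2 : (M : Matrix (Fin 2) (Fin 2) ℝ) 1 0
        = ((P⁻¹ * B * P : SL2) : Matrix (Fin 2) (Fin 2) ℝ) 1 0 := by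
      rw [hM, Matrix.SpecialLinearGroup.coe_mul, Matrix.mul_apply, Fin.sum_univ_two]
      simp [Umat]
    rw [h2]; exact h1
  have htr : trSL M = trSL (A * B) := by rw [hAB, trSL_conj]
  obtain ⟨θ, hθ, P', hP'⟩ := elliptic_conj_rot M hent (htr ▸ h₁) (htr ▸ h₂)
  exact ⟨θ, hθ, P * P', by rw [hAB, hP']; group⟩
end

section
/- Let s ∈ {1,−1} and let C ∈ SL(2,ℝ) with tr C < −2. Then the set {(A,B) ∈ SL(2,ℝ) × SL(2,ℝ) : A and B are each SL(2,ℝ)-conjugate to U_s, and A·B = C}, endowed with the subspace topology of SL(2,ℝ) × SL(2,ℝ), is nonempty and connected. -/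
open Matrix

/-- The standard (matrix) topology on `SL(2,ℝ)`, as a subspace of the 2×2 real matrices. -/
instance : TopologicalSpace SL2 := instTopologicalSpaceSubtype

def Apar (s a c : ℝ) : SL2 :=
  ⟨!![1 - s*a*c, s*a^2; -(s*c^2), 1 + s*a*c], by rw [Matrix.det_fin_two_of]; ring⟩
lemma Apar_coe (s a c : ℝ) :
    (Apar s a c : Matrix (Fin 2) (Fin 2) ℝ) = !![1 - s*a*c, s*a^2; -(s*c^2), 1 + s*a*c] := rfl

lemma trApar (s a c : ℝ) : trSL (Apar s a c) = 2 := by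
  rw [trSL, Apar_coe, Matrix.trace_fin_two_of]; ring

lemma L1 (s a c : ℝ) (h : a ≠ 0 ∨ c ≠ 0) : IsConjTo (Apar s a c) (Umat s) := by
  have hn : 0 < a^2 + c^2 := by
    rcases h with h | h
    · positivity
    · positivity
  refine ⟨⟨!![a, -c/(a^2+c^2); c, a/(a^2+c^2)], by
    rw [Matrix.det_fin_two_of]; field_simp; ring⟩, ?_⟩
  refine eq_mul_inv_iff_mul_eq.mpr ?_
  apply Subtype.ext
  show (Apar s a c : Matrix (Fin 2) (Fin 2) ℝ) * _ = (_ * (Umat s : Matrix (Fin 2) (Fin 2) ℝ))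
  rw [Apar_coe]
  show _ = (!![a, -c/(a^2+c^2); c, a/(a^2+c^2)] : Matrix (Fin 2) (Fin 2) ℝ) * !![1, s; 0, 1]
  rw [Matrix.mul_fin_two, Matrix.mul_fin_two]
  ext i j
  fin_cases i <;> fin_cases j <;> simp only [Fin.zero_eta, Fin.mk_one, Fin.isValue, Matrix.cons_val_zero, Matrix.cons_val_one, Matrix.head_cons, Matrix.of_apply, Matrix.cons_val_fin_one, Matrix.head_fin_const] <;> field_simp <;> ring

lemma L3 (s : ℝ) (A : SL2) (h : IsConjTo A (Umat s)) :
    ∃ a c, (a ≠ 0 ∨ c ≠ 0) ∧ A = Apar s a c := by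
  obtain ⟨P, hP⟩ := h
  have hdet : P.1 0 0 * P.1 1 1 - P.1 0 1 * P.1 1 0 = 1 := by
    have := P.2
    rw [Matrix.det_fin_two] at this
    linarith
  refine ⟨P.1 0 0, P.1 1 0, ?_, ?_⟩
  · by_contra hc
    push_neg at hc
    rw [hc.1, hc.2] at hdet
    simp at hdet
  · apply Subtype.ext
    rw [hP]
    show (P.1 * (Umat s : Matrix (Fin 2) (Fin 2) ℝ)) * (P⁻¹).1 = _
    rw [Matrix.SpecialLinearGroup.coe_inv, Matrix.adjugate_fin_two, Apar_coe]
    have hPe : P.1 = !![P.1 0 0, P.1 0 1; P.1 1 0, P.1 1 1] := by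
      exact (Matrix.eta_fin_two P.1)
    rw [hPe]
    show (!![P.1 0 0, P.1 0 1; P.1 1 0, P.1 1 1] * !![1, s; 0, 1]) * _ = _
    rw [Matrix.mul_fin_two]
    ext i j
    fin_cases i <;> fin_cases j <;>
      simp [Matrix.mul_fin_two, Matrix.cons_val_zero, Matrix.cons_val_one] <;> nlinarith [hdet]

lemma L2 (s : ℝ) (hs : s = 1 ∨ s = -1) (A : SL2) (htr : trSL A = 2)
    (hsgn : 0 < s * (A.1 0 1 - A.1 1 0)) :
    ∃ a c, (a ≠ 0 ∨ c ≠ 0) ∧ A = Apar s a c := by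
  have hs2 : s^2 = 1 := by rcases hs with h | h <;> rw [h] <;> ring
  have hs0 : s ≠ 0 := by rcases hs with h | h <;> rw [h] <;> norm_num
  set x := A.1 0 0 with hx
  set y := A.1 0 1 with hy
  set z := A.1 1 0 with hz
  set w := A.1 1 1 with hw
  have hdet : x * w - y * z = 1 := by
    have := A.2
    rw [Matrix.det_fin_two] at this
    linarith
  have hT : x + w = 2 := by
    have h2 : trSL A = x + w := by rw [trSL, Matrix.trace_fin_two]
    linarith [htr, h2]
  have hyz : y * z = -(x-1)^2 := by linear_combination (-1)*hdet + x*hT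
  have hsy : 0 ≤ s * y := by nlinarith [sq_nonneg (x-1), sq_nonneg s]
  have hsz : s * z ≤ 0 := by nlinarith [sq_nonneg (x-1)]
  have hAe : A.1 = !![x, y; z, w] := Matrix.eta_fin_two A.1
  rcases lt_or_eq_of_le hsy with hy0 | hy0
  · -- s*y > 0
    set a := Real.sqrt (s*y) with hadef
    have ha0 : 0 < a := Real.sqrt_pos.mpr hy0
    have ha2 : a^2 = s*y := Real.sq_sqrt hy0.le
    set c := -s*(x-1)/a with hcdef
    have hac : a * c = -(s*(x-1)) := by rw [hcdef]; field_simp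
    have h00 : 1 - s*a*c = x := by linear_combination (-s)*hac + (x-1)*hs2
    have h01 : s*a^2 = y := by linear_combination s*ha2 + y*hs2
    have h10' : y * (s*c^2 + z) = 0 := by
      linear_combination (a*c - s*(x-1)) * hac - c^2 * ha2 + hyz + (x-1)^2 * hs2
    have hyne : y ≠ 0 := by
      intro h; rw [h] at hy0; simp at hy0
    have h10 : -(s*c^2) = z := by
      rcases mul_eq_zero.mp h10' with h | h
      · exact absurd h hyne
      · linarith
    have h11 : 1 + s*a*c = w := by linear_combination s*hac - (x-1)*hs2 - hT
    refine ⟨a, c, Or.inl ha0.ne', ?_⟩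
    apply Subtype.ext
    rw [hAe, Apar_coe, h00, h01, h10, h11]
  · -- s*y = 0 hence y = 0
    have hy' : y = 0 := by
      rcases mul_eq_zero.mp hy0.symm with h | h
      · exact absurd h hs0
      · exact h
    have hx1 : x = 1 := by nlinarith
    have hzlt : s * z < 0 := by rw [hy'] at hsgn; nlinarith
    set c := Real.sqrt (-(s*z)) with hcdef
    have hc0 : 0 < c := Real.sqrt_pos.mpr (by linarith)
    have hc2 : c^2 = -(s*z) := Real.sq_sqrt (by linarith)
    have h00 : 1 - s*0*c = x := by rw [hx1]; ring
    have h01 : s*0^2 = y := by rw [hy']; ring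
    have h10 : -(s*c^2) = z := by linear_combination (-s)*hc2 + z*hs2
    have h11 : 1 + s*0*c = w := by
      have : w = 1 := by linarith
      rw [this]; ring
    refine ⟨0, c, Or.inr hc0.ne', ?_⟩
    apply Subtype.ext
    rw [hAe, Apar_coe, h00, h01, h10, h11]

lemma L4 (s : ℝ) (hs : s = 1 ∨ s = -1) (B : SL2) (htr : trSL B = 2)
    (hsgn : 0 < s * (B.1 0 1 - B.1 1 0)) : IsConjTo B (Umat s) := by
  obtain ⟨a, c, hac, hB⟩ := L2 s hs B htr hsgn
  rw [hB]; exact L1 s a c hac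

lemma conj_transfer (R A B : SL2) (h : IsConjTo A B) : IsConjTo (R * A * R⁻¹) B := by
  obtain ⟨P, hP⟩ := h
  exact ⟨R * P, by rw [hP]; group⟩

lemma diagOf (C : SL2) (hC : trSL C < -2) :
    ∃ (R : SL2) (μ ν : ℝ), μ < 0 ∧ ν < 0 ∧ μ ≠ ν ∧ μ * ν = 1 ∧
      ((R⁻¹ * C * R : SL2) : Matrix (Fin 2) (Fin 2) ℝ) = !![μ, 0; 0, ν] := by
  set x := C.1 0 0 with hx
  set y := C.1 0 1 with hy
  set z := C.1 1 0 with hz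
  set w := C.1 1 1 with hw
  have hdet : x * w - y * z = 1 := by
    have := C.2
    rw [Matrix.det_fin_two] at this
    linarith
  have hT : x + w < -2 := by
    have h2 : trSL C = x + w := by rw [trSL, Matrix.trace_fin_two]
    linarith [hC, h2]
  have hCe : C.1 = !![x, y; z, w] := Matrix.eta_fin_two C.1
  clear_value x y z w
  clear hx hy hz hw
  have hT4 : 0 < (x+w)^2 - 4 := by nlinarith
  obtain ⟨δ, hδ0, hδ2⟩ : ∃ δ : ℝ, 0 < δ ∧ δ^2 = (x+w)^2 - 4 :=
    ⟨Real.sqrt ((x+w)^2-4), Real.sqrt_pos.mpr hT4, Real.sq_sqrt hT4.le⟩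
  have hδT : δ < -(x+w) := by nlinarith
  obtain ⟨μ, hμdef⟩ : ∃ μ : ℝ, μ = (x + w - δ)/2 := ⟨_, rfl⟩
  obtain ⟨ν, hνdef⟩ : ∃ ν : ℝ, ν = (x + w + δ)/2 := ⟨_, rfl⟩
  have hνneg : ν < 0 := by rw [hνdef]; linarith
  have hμν : μ * ν = 1 := by rw [hμdef, hνdef]; linear_combination (-1/4 : ℝ) * hδ2
  have hμneg : μ < 0 := by rw [hμdef]; linarith
  have hne : μ ≠ ν := by
    intro h
    rw [hμdef, hνdef] at h
    linarith
  have hsum : μ + ν = x + w := by rw [hμdef, hνdef]; ring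
  have hμc : μ^2 - (x+w)*μ + 1 = 0 := by
    rw [hμdef]; linear_combination (1/4 : ℝ) * hδ2
  have hνc : ν^2 - (x+w)*ν + 1 = 0 := by
    rw [hνdef]; linear_combination (1/4 : ℝ) * hδ2
  clear hμdef hνdef hδ2 hδT hδ0
  have key : ∀ R : SL2, C.1 * R.1 = R.1 * !![μ, 0; 0, ν] →
      ((R⁻¹ * C * R : SL2) : Matrix (Fin 2) (Fin 2) ℝ) = !![μ, 0; 0, ν] := by
    intro R h
    have h1 : ((R⁻¹ * C * R : SL2) : Matrix (Fin 2) (Fin 2) ℝ) = (R⁻¹).1 * C.1 * R.1 := rfl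
    rw [h1, Matrix.SpecialLinearGroup.coe_inv, Matrix.mul_assoc, h, ← Matrix.mul_assoc,
      Matrix.adjugate_mul, R.2, one_smul, Matrix.one_mul]
  by_cases hy0 : y ≠ 0
  · have hd0 : y*(ν-μ) ≠ 0 := by
      apply mul_ne_zero hy0
      intro h; exact hne (by linarith)
    refine ⟨⟨!![y/(y*(ν-μ)), y; (μ-x)/(y*(ν-μ)), ν-x], by
      rw [Matrix.det_fin_two_of]; field_simp; ring⟩,
      μ, ν, hμneg, hνneg, hne, hμν, ?_⟩
    apply key
    show C.1 * !![y/(y*(ν-μ)), y; (μ-x)/(y*(ν-μ)), ν-x] = _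
    rw [hCe, Matrix.mul_fin_two, Matrix.mul_fin_two]
    ext i j
    fin_cases i <;> fin_cases j <;>
      simp only [Fin.mk_zero, Fin.mk_one, Fin.isValue, Matrix.cons_val', Matrix.cons_val_zero,
        Matrix.cons_val_one, Matrix.head_cons, Matrix.of_apply, Matrix.head_fin_const,
        Matrix.empty_val', Matrix.cons_val_fin_one]
    · ring
    · ring
    · linear_combination ((-1)/(y*(ν-μ)))*hdet + ((-1)/(y*(ν-μ)))*hμc
    · linear_combination -hdet - hνc
  · push_neg at hy0
    have hfac : (x - μ) * (x - ν) = 0 := by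
      rw [hy0] at hdet
      linear_combination hμν - x*hsum - hdet
    have hμ0 : μ ≠ 0 := fun h => by rw [h] at hμν; simp at hμν
    have hν0 : ν ≠ 0 := fun h => by rw [h] at hμν; simp at hμν
    have hne' : μ - ν ≠ 0 := fun h => hne (by linarith)
    rw [hy0] at hCe hdet
    rcases mul_eq_zero.mp hfac with hxμ | hxν
    · have hxμ' : x = μ := by linarith
      have hwν : w = ν := by
        have h1 : μ * w = 1 := by rw [← hxμ']; linarith
        have h2 : μ * w = μ * ν := by rw [h1, hμν]
        exact mul_left_cancel₀ hμ0 h2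
      refine ⟨⟨!![1, 0; z/(μ-ν), 1], by rw [Matrix.det_fin_two_of]; ring⟩,
        μ, ν, hμneg, hνneg, hne, hμν, ?_⟩
      apply key
      show C.1 * !![1, 0; z/(μ-ν), 1] = _
      rw [hCe, Matrix.mul_fin_two, Matrix.mul_fin_two]
      ext i j
      fin_cases i <;> fin_cases j <;>
        simp only [Fin.mk_zero, Fin.mk_one, Fin.isValue, Matrix.cons_val', Matrix.cons_val_zero,
          Matrix.cons_val_one, Matrix.head_cons, Matrix.of_apply, Matrix.head_fin_const,
          Matrix.empty_val', Matrix.cons_val_fin_one]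
      · linear_combination hxμ'
      · ring
      · rw [hwν]; field_simp; ring
      · linear_combination hwν
    · have hxν' : x = ν := by linarith
      have hwμ : w = μ := by
        have h1 : ν * w = 1 := by rw [← hxν']; linarith
        have h2 : ν * w = ν * μ := by linear_combination h1 - hμν
        exact mul_left_cancel₀ hν0 h2
      refine ⟨⟨!![0, ν-μ; 1/(μ-ν), z], by rw [Matrix.det_fin_two_of]; field_simp; ring⟩,
        μ, ν, hμneg, hνneg, hne, hμν, ?_⟩
      apply key
      show C.1 * !![0, ν-μ; 1/(μ-ν), z] = _
      rw [hCe, Matrix.mul_fin_two, Matrix.mul_fin_two]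
      ext i j
      fin_cases i <;> fin_cases j <;>
        simp only [Fin.mk_zero, Fin.mk_one, Fin.isValue, Matrix.cons_val', Matrix.cons_val_zero,
          Matrix.cons_val_one, Matrix.head_cons, Matrix.of_apply, Matrix.head_fin_const,
          Matrix.empty_val', Matrix.cons_val_fin_one]
      · ring
      · linear_combination (ν-μ)*hxν'
      · linear_combination (1/(μ-ν))*hwμ
      · linear_combination z*hwμ

lemma contApar (s : ℝ) (f g : ℝ → ℝ) (hf : Continuous f) (hg : Continuous g) :
    Continuous fun t => (Apar s (f t) (g t) : SL2) := by
  apply Continuous.subtype_mk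
  apply continuous_matrix
  intro i j
  fin_cases i <;> fin_cases j <;>
    simp only [Fin.mk_zero, Fin.mk_one, Fin.isValue, Matrix.cons_val', Matrix.cons_val_zero,
      Matrix.cons_val_one, Matrix.head_cons, Matrix.of_apply, Matrix.head_fin_const,
      Matrix.empty_val', Matrix.cons_val_fin_one] <;>
    fun_prop

lemma contInvMul (D : SL2) (A : ℝ → SL2) (hA : Continuous A) :
    Continuous fun t => ((A t)⁻¹ * D : SL2) := by
  apply continuous_induced_rng.mpr
  have h : (fun t => (((A t)⁻¹ * D : SL2) : Matrix (Fin 2) (Fin 2) ℝ))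
      = fun t => (Matrix.adjugate ((A t) : Matrix (Fin 2) (Fin 2) ℝ)) * (D : Matrix (Fin 2) (Fin 2) ℝ) := by
    funext t
    rw [Matrix.SpecialLinearGroup.coe_mul, Matrix.SpecialLinearGroup.coe_inv]
  show Continuous fun t => (((A t)⁻¹ * D : SL2) : Matrix (Fin 2) (Fin 2) ℝ)
  rw [h]
  exact ((continuous_subtype_val.comp hA).matrix_adjugate).matrix_mul continuous_const

lemma Bcoe (s a c μ ν : ℝ) (D : SL2) (hD : (D : Matrix (Fin 2) (Fin 2) ℝ) = !![μ,0;0,ν]) :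
    (((Apar s a c)⁻¹ * D : SL2) : Matrix (Fin 2) (Fin 2) ℝ)
      = !![(1+s*a*c)*μ, -(s*a^2)*ν; s*c^2*μ, (1-s*a*c)*ν] := by
  rw [Matrix.SpecialLinearGroup.coe_mul, Matrix.SpecialLinearGroup.coe_inv, Apar_coe,
    Matrix.adjugate_fin_two, hD, Matrix.mul_fin_two]
  ext i j
  fin_cases i <;> fin_cases j <;>
    simp only [Fin.mk_zero, Fin.mk_one, Fin.isValue, Matrix.cons_val', Matrix.cons_val_zero,
      Matrix.cons_val_one, Matrix.head_cons, Matrix.of_apply, Matrix.head_fin_const,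
      Matrix.empty_val', Matrix.cons_val_fin_one] <;> ring

lemma Apar_neg (s a c : ℝ) : Apar s a c = Apar s (-a) (-c) := by
  apply Subtype.ext
  rw [Apar_coe, Apar_coe]
  ext i j
  fin_cases i <;> fin_cases j <;>
    simp only [Fin.mk_zero, Fin.mk_one, Fin.isValue, Matrix.cons_val', Matrix.cons_val_zero,
      Matrix.cons_val_one, Matrix.head_cons, Matrix.of_apply, Matrix.head_fin_const,
      Matrix.empty_val', Matrix.cons_val_fin_one] <;> ring

lemma stmt9_diag (s : ℝ) (hs : s = 1 ∨ s = -1) (μ ν : ℝ) (hμ : μ < 0) (hν : ν < 0)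
    (hne : μ ≠ ν) (hμν : μ * ν = 1) (D : SL2)
    (hD : (D : Matrix (Fin 2) (Fin 2) ℝ) = !![μ, 0; 0, ν]) :
    IsConnected {p : SL2 × SL2 |
      IsConjTo p.1 (Umat s) ∧ IsConjTo p.2 (Umat s) ∧ p.1 * p.2 = D} := by
  have hs2 : s^2 = 1 := by rcases hs with h | h <;> rw [h] <;> ring
  have hs0 : s ≠ 0 := by rcases hs with h | h <;> rw [h] <;> norm_num
  have hμν0 : μ - ν ≠ 0 := sub_ne_zero.mpr hne
  set k := s*(2 - (μ+ν))/(μ - ν) with hk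
  have hk0 : k ≠ 0 := by
    apply div_ne_zero _ hμν0
    exact mul_ne_zero hs0 (by intro h; linarith)
  set g : ℝ → SL2 × SL2 := fun t => (Apar s (Real.exp t) (k*Real.exp (-t)),
     (Apar s (Real.exp t) (k*Real.exp (-t)))⁻¹ * D) with hgdef
  have hc1 : Continuous fun t : ℝ => Apar s (Real.exp t) (k*Real.exp (-t)) :=
    contApar s _ _ (Real.continuous_exp) (by fun_prop)
  have hgc : Continuous g := hc1.prodMk (contInvMul D _ hc1)
  have hset : {p : SL2 × SL2 |
      IsConjTo p.1 (Umat s) ∧ IsConjTo p.2 (Umat s) ∧ p.1 * p.2 = D} = Set.range g := by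
    ext p
    simp only [Set.mem_setOf_eq, Set.mem_range]
    constructor
    · rintro ⟨hA, hB, hAB⟩
      obtain ⟨a, c, hac0, hAe⟩ := L3 s p.1 hA
      have hBdef : p.2 = p.1⁻¹ * D := by rw [← hAB, inv_mul_cancel_left]
      have htrB : trSL p.2 = 2 := by
        obtain ⟨a', c', _, hBe⟩ := L3 s p.2 hB
        rw [hBe]; exact trApar s a' c'
      have htr2 : (1+s*a*c)*μ + (1-s*a*c)*ν = 2 := by
        rw [hBdef, hAe] at htrB
        rw [trSL, Bcoe s a c μ ν D hD, Matrix.trace_fin_two_of] at htrB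
        linarith
      have h1 : s*(a*c)*(μ-ν) = 2-(μ+ν) := by linear_combination htr2
      have hack : a*c = k := by
        rw [hk, eq_div_iff hμν0]
        linear_combination s*h1 - (a*c*(μ-ν))*hs2
      have ha0 : a ≠ 0 := by
        intro h; rw [h] at hack; simp at hack; exact hk0 hack.symm
      have hcka : c = k/a := by
        rw [eq_div_iff ha0]; linear_combination hack
      rcases lt_or_gt_of_ne (fun h => ha0 h) with hneg | hpos
      · refine ⟨Real.log (-a), ?_⟩
        have hexp : Real.exp (Real.log (-a)) = -a := Real.exp_log (by linarith)
        have hexp' : k * Real.exp (-(Real.log (-a))) = -c := by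
          rw [Real.exp_neg, hexp, hcka]
          field_simp
        have hcomp1 : Apar s (Real.exp (Real.log (-a))) (k*Real.exp (-(Real.log (-a)))) = p.1 := by
          rw [hexp, hexp', hAe, Apar_neg s a c]
        apply Prod.ext
        · exact hcomp1
        · show (Apar s (Real.exp (Real.log (-a))) (k*Real.exp (-(Real.log (-a)))))⁻¹ * D = p.2
          rw [hcomp1, hBdef]
      · refine ⟨Real.log a, ?_⟩
        have hexp : Real.exp (Real.log a) = a := Real.exp_log hpos
        have hexp' : k * Real.exp (-(Real.log a)) = c := by
          rw [Real.exp_neg, hexp, hcka]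
          field_simp
        have hcomp1 : Apar s (Real.exp (Real.log a)) (k*Real.exp (-(Real.log a))) = p.1 := by
          rw [hexp, hexp', hAe]
        apply Prod.ext
        · exact hcomp1
        · show (Apar s (Real.exp (Real.log a)) (k*Real.exp (-(Real.log a))))⁻¹ * D = p.2
          rw [hcomp1, hBdef]
    · rintro ⟨t, rfl⟩
      set a := Real.exp t with ha
      set c := k * Real.exp (-t) with hc
      have ha0 : a ≠ 0 := Real.exp_ne_zero t
      have hapos : 0 < a := Real.exp_pos t
      have hack : a * c = k := by
        rw [ha, hc, Real.exp_neg]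
        field_simp
      refine ⟨L1 s a c (Or.inl ha0), ?_, by rw [mul_inv_cancel_left]⟩
      apply L4 s hs
      · show trSL ((Apar s a c)⁻¹ * D) = 2
        rw [trSL, Bcoe s a c μ ν D hD, Matrix.trace_fin_two_of]
        have h1 : s*(a*c)*(μ-ν) = 2-(μ+ν) := by
          rw [hack, hk]
          field_simp
          linear_combination (2-μ-ν)*hs2
        linear_combination h1
      · show 0 < s * ((((Apar s a c)⁻¹ * D : SL2) : Matrix (Fin 2) (Fin 2) ℝ) 0 1
            - (((Apar s a c)⁻¹ * D : SL2) : Matrix (Fin 2) (Fin 2) ℝ) 1 0)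
        rw [Bcoe s a c μ ν D hD]
        have hred : s * ((!![(1+s*a*c)*μ, -(s*a^2)*ν; s*c^2*μ, (1-s*a*c)*ν]
            : Matrix (Fin 2) (Fin 2) ℝ) 0 1
            - (!![(1+s*a*c)*μ, -(s*a^2)*ν; s*c^2*μ, (1-s*a*c)*ν]
            : Matrix (Fin 2) (Fin 2) ℝ) 1 0) = -(a^2*ν) - c^2*μ := by
          simp only [Matrix.cons_val', Matrix.cons_val_zero, Matrix.cons_val_one,
            Matrix.head_cons, Matrix.of_apply, Matrix.head_fin_const, Matrix.empty_val',
            Matrix.cons_val_fin_one]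
          linear_combination (-(a^2*ν) - c^2*μ) * hs2
        rw [hred]
        have h2 : 0 < a^2 := by positivity
        nlinarith [sq_nonneg c]
  rw [hset]
  exact isConnected_range hgc

lemma contConj (R : SL2) : Continuous fun A : SL2 => R * A * R⁻¹ := by
  apply continuous_induced_rng.mpr
  show Continuous fun A : SL2 => ((R * A * R⁻¹ : SL2) : Matrix (Fin 2) (Fin 2) ℝ)
  have h : (fun A : SL2 => ((R * A * R⁻¹ : SL2) : Matrix (Fin 2) (Fin 2) ℝ))
      = fun A : SL2 => (R : Matrix (Fin 2) (Fin 2) ℝ) * (A : Matrix (Fin 2) (Fin 2) ℝ)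
        * ((R⁻¹ : SL2) : Matrix (Fin 2) (Fin 2) ℝ) := by
    funext A
    rw [Matrix.SpecialLinearGroup.coe_mul, Matrix.SpecialLinearGroup.coe_mul]
  rw [h]
  exact (continuous_const.matrix_mul continuous_subtype_val).matrix_mul continuous_const


/-- Let s ∈ {1,−1} and C ∈ SL(2,ℝ) with tr C < −2.  The set of pairs (A,B) with A and B
each conjugate to U_s and A·B = C is nonempty and connected. -/
theorem stmt9 (s : ℝ) (hs : s = 1 ∨ s = -1) (C : SL2) (hC : trSL C < -2) :
    IsConnected {p : SL2 × SL2 |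
      IsConjTo p.1 (Umat s) ∧ IsConjTo p.2 (Umat s) ∧ p.1 * p.2 = C} := by
  obtain ⟨R, μ, ν, hμ, hν, hne, hμν, hD⟩ := diagOf C hC
  have hconn := stmt9_diag s hs μ ν hμ hν hne hμν (R⁻¹ * C * R) hD
  set f : SL2 × SL2 → SL2 × SL2 := fun p => (R * p.1 * R⁻¹, R * p.2 * R⁻¹) with hf
  have hfc : Continuous f :=
    ((contConj R).comp continuous_fst).prodMk ((contConj R).comp continuous_snd)
  have himg : f '' {p : SL2 × SL2 | IsConjTo p.1 (Umat s) ∧ IsConjTo p.2 (Umat s)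
      ∧ p.1 * p.2 = R⁻¹ * C * R}
      = {p : SL2 × SL2 | IsConjTo p.1 (Umat s) ∧ IsConjTo p.2 (Umat s) ∧ p.1 * p.2 = C} := by
    ext q
    constructor
    · rintro ⟨p, ⟨h1, h2, h3⟩, rfl⟩
      refine ⟨conj_transfer R _ _ h1, conj_transfer R _ _ h2, ?_⟩
      show (R * p.1 * R⁻¹) * (R * p.2 * R⁻¹) = C
      have h4 : (R * p.1 * R⁻¹) * (R * p.2 * R⁻¹) = R * (p.1 * p.2) * R⁻¹ := by group
      rw [h4, h3]
      group
    · rintro ⟨h1, h2, h3⟩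
      refine ⟨(R⁻¹ * q.1 * R, R⁻¹ * q.2 * R), ⟨?_, ?_, ?_⟩, ?_⟩
      · have := conj_transfer R⁻¹ _ _ h1
        simpa [inv_inv] using this
      · have := conj_transfer R⁻¹ _ _ h2
        simpa [inv_inv] using this
      · show (R⁻¹ * q.1 * R) * (R⁻¹ * q.2 * R) = R⁻¹ * C * R
        have h4 : (R⁻¹ * q.1 * R) * (R⁻¹ * q.2 * R) = R⁻¹ * (q.1 * q.2) * R := by group
        rw [h4, h3]
      · show (R * (R⁻¹ * q.1 * R) * R⁻¹, R * (R⁻¹ * q.2 * R) * R⁻¹) = q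
        have e1 : R * (R⁻¹ * q.1 * R) * R⁻¹ = q.1 := by group
        have e2 : R * (R⁻¹ * q.2 * R) * R⁻¹ = q.2 := by group
        rw [e1, e2]
  rw [← himg]
  exact hconn.image f hfc.continuousOn
end

section
/- Let s ∈ {1,−1} and let C ∈ SL(2,ℝ) be SL(2,ℝ)-conjugate to the matrix [[cos θ, s·sin θ],[−s·sin θ, cos θ]] for some θ ∈ (0, π). Then the set {(A,B) ∈ SL(2,ℝ) × SL(2,ℝ) : A and B are each SL(2,ℝ)-conjugate to U_s, and A·B = C}, endowed with the subspace topology of SL(2,ℝ) × SL(2,ℝ), is nonempty and connected. -/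
open Matrix

-- auxiliary

def matAux (s x y : ℝ) : Matrix (Fin 2) (Fin 2) ℝ :=
  !![1 - s*x*y, s*x^2; -(s*y^2), 1 + s*x*y]

lemma matAux_det (s x y : ℝ) : (matAux s x y).det = 1 := by
  rw [matAux, Matrix.det_fin_two_of]; ring

def slA (s x y : ℝ) : SL2 := ⟨matAux s x y, matAux_det s x y⟩

@[simp] lemma slA_coe (s x y : ℝ) :
    ((slA s x y : SL2) : Matrix (Fin 2) (Fin 2) ℝ) = matAux s x y := rfl

lemma trace_matAux (s x y : ℝ) : Matrix.trace (matAux s x y) = 2 := by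
  rw [matAux, Matrix.trace_fin_two_of]; ring

lemma IsConjTo.conj {A U : SL2} (h : IsConjTo A U) (P : SL2) :
    IsConjTo (P * A * P⁻¹) U := by
  obtain ⟨Q, rfl⟩ := h
  exact ⟨P * Q, by group⟩

lemma conj_exists {s : ℝ} {A : SL2} (h : IsConjTo A (Umat s)) :
    ∃ x y : ℝ, (x ≠ 0 ∨ y ≠ 0) ∧
      (A : Matrix (Fin 2) (Fin 2) ℝ) = matAux s x y := by
  obtain ⟨P, rfl⟩ := h
  have hdet : (P : Matrix (Fin 2) (Fin 2) ℝ) 0 0 * (P : Matrix (Fin 2) (Fin 2) ℝ) 1 1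
      - (P : Matrix (Fin 2) (Fin 2) ℝ) 0 1 * (P : Matrix (Fin 2) (Fin 2) ℝ) 1 0 = 1 := by
    rw [← Matrix.det_fin_two]; exact P.2
  refine ⟨(P : Matrix (Fin 2) (Fin 2) ℝ) 0 0, (P : Matrix (Fin 2) (Fin 2) ℝ) 1 0, ?_, ?_⟩
  · by_contra hc
    push_neg at hc
    rw [hc.1, hc.2] at hdet
    simp at hdet
  · have hcoe : ((P * Umat s * P⁻¹ : SL2) : Matrix (Fin 2) (Fin 2) ℝ)
        = (P : Matrix (Fin 2) (Fin 2) ℝ) * !![1, s; 0, 1]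
          * adjugate (P : Matrix (Fin 2) (Fin 2) ℝ) := by
      simp [Umat, Matrix.SpecialLinearGroup.coe_mul, Matrix.SpecialLinearGroup.coe_inv,
        Matrix.SpecialLinearGroup.coe_mk]
      rfl
    rw [hcoe, (P : Matrix (Fin 2) (Fin 2) ℝ).eta_fin_two, Matrix.adjugate_fin_two_of,
      Matrix.mul_fin_two, Matrix.mul_fin_two, matAux]
    ext i j
    fin_cases i <;> fin_cases j <;>
      simp only [Matrix.cons_val', Matrix.cons_val_zero, Matrix.cons_val_one, Matrix.head_cons,
        Matrix.empty_val', Matrix.cons_val_fin_one, Matrix.head_fin_const, Matrix.of_apply,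
        Fin.mk_zero, Fin.mk_one]
    · linear_combination hdet
    · ring
    · ring
    · linear_combination hdet

lemma slA_conj (s x y : ℝ) (h : x ≠ 0 ∨ y ≠ 0) : IsConjTo (slA s x y) (Umat s) := by
  rcases h with hx | hy
  · have hdP : (!![x, 0; y, x⁻¹]).det = 1 := by rw [Matrix.det_fin_two_of]; field_simp; ring
    set Q : SL2 := (⟨!![x, 0; y, x⁻¹], hdP⟩ : SL2) with hQ
    refine ⟨Q, ?_⟩
    apply Subtype.ext
    have hc : ((Q * Umat s * Q⁻¹ : SL2) : Matrix (Fin 2) (Fin 2) ℝ)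
        = !![x, 0; y, x⁻¹] * !![1, s; 0, 1] * adjugate !![x, 0; y, x⁻¹] := by
      rw [Matrix.SpecialLinearGroup.coe_mul, Matrix.SpecialLinearGroup.coe_mul,
        Matrix.SpecialLinearGroup.coe_inv]
      simp [hQ, Umat, Matrix.SpecialLinearGroup.coe_mul, Matrix.SpecialLinearGroup.coe_inv,
        Matrix.SpecialLinearGroup.coe_mk]
    rw [slA_coe, hc, Matrix.adjugate_fin_two_of, Matrix.mul_fin_two, Matrix.mul_fin_two, matAux]
    ext i j
    fin_cases i <;> fin_cases j <;>
      simp only [Matrix.cons_val', Matrix.cons_val_zero, Matrix.cons_val_one, Matrix.head_cons,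
        Matrix.empty_val', Matrix.cons_val_fin_one, Matrix.head_fin_const, Matrix.of_apply,
        Fin.mk_zero, Fin.mk_one] <;>
      field_simp <;> ring
  · have hdP : (!![x, -y⁻¹; y, 0]).det = 1 := by rw [Matrix.det_fin_two_of]; field_simp; ring
    set Q : SL2 := (⟨!![x, -y⁻¹; y, 0], hdP⟩ : SL2) with hQ
    refine ⟨Q, ?_⟩
    apply Subtype.ext
    have hc : ((Q * Umat s * Q⁻¹ : SL2) : Matrix (Fin 2) (Fin 2) ℝ)
        = !![x, -y⁻¹; y, 0] * !![1, s; 0, 1] * adjugate !![x, -y⁻¹; y, 0] := by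
      rw [Matrix.SpecialLinearGroup.coe_mul, Matrix.SpecialLinearGroup.coe_mul,
        Matrix.SpecialLinearGroup.coe_inv]
      simp [hQ, Umat, Matrix.SpecialLinearGroup.coe_mul, Matrix.SpecialLinearGroup.coe_inv,
        Matrix.SpecialLinearGroup.coe_mk]
    rw [slA_coe, hc, Matrix.adjugate_fin_two_of, Matrix.mul_fin_two, Matrix.mul_fin_two, matAux]
    ext i j
    fin_cases i <;> fin_cases j <;>
      simp only [Matrix.cons_val', Matrix.cons_val_zero, Matrix.cons_val_one, Matrix.head_cons,
        Matrix.empty_val', Matrix.cons_val_fin_one, Matrix.head_fin_const, Matrix.of_apply,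
        Fin.mk_zero, Fin.mk_one] <;>
      field_simp <;> ring

lemma matAux_mul (s st ct x y : ℝ) (hss : s*s = 1) (hpy : st^2 + ct^2 = 1)
    (hcirc : (x^2 + y^2) * ct = 2*st) :
    matAux s x y * matAux s (s*x*st + y*ct) (s*y*st - x*ct)
      = !![2*ct^2 - 1, s*(2*st*ct); -(s*(2*st*ct)), 2*ct^2 - 1] := by
  rw [matAux, matAux, Matrix.mul_fin_two]
  ext i j
  fin_cases i <;> fin_cases j <;>
    simp only [Matrix.cons_val', Matrix.cons_val_zero, Matrix.cons_val_one, Matrix.head_cons,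
      Matrix.empty_val', Matrix.cons_val_fin_one, Matrix.head_fin_const, Matrix.of_apply,
      Fin.mk_zero, Fin.mk_one]
  · linear_combination (-(ct^2*x^2*y^2) - ct^2*x^4 - st*ct*y^2 + st*ct*x^2 + s*st*ct*x*y^3
      + s*st*ct*x^3*y - s*st^2*x*y) * hss + (s*x*y - 2) * hpy
      + (s*st*x*y - ct*x^2 - st) * hcirc
  · linear_combination (-(ct^2*x*y^3) - ct^2*x^3*y + 2*st*ct*x*y - s*st*ct*x^2*y^2 - s*st*ct*x^4
      + s*st^2*x^2) * hss + (-(s*x^2)) * hpy + (s*ct - ct*x*y - s*st*x^2) * hcirc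
  · linear_combination (-(ct^2*x*y^3) - ct^2*x^3*y + 2*st*ct*x*y + s*st*ct*y^4 + s*st*ct*x^2*y^2
      - s*st^2*y^2) * hss + (s*y^2) * hpy + (-(ct*x*y) - s*ct + s*st*y^2) * hcirc
  · linear_combination (-(ct^2*y^4) - ct^2*x^2*y^2 + st*ct*y^2 - st*ct*x^2 - s*st*ct*x*y^3
      - s*st*ct*x^3*y + s*st^2*x*y) * hss + (-2 - s*x*y) * hpy
      + (-(ct*y^2) - st - s*st*x*y) * hcirc

/-- Let s ∈ {1,−1} and C ∈ SL(2,ℝ) conjugate to [[cos θ, s·sin θ],[−s·sin θ, cos θ]] for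
some θ ∈ (0, π).  The set of pairs (A,B) with A and B each conjugate to U_s and A·B = C is
nonempty and connected. -/
theorem stmt10 (s : ℝ) (hs : s = 1 ∨ s = -1) (C : SL2)
    (hC : ∃ θ ∈ Set.Ioo 0 Real.pi,
      IsMatConjTo (C : Matrix (Fin 2) (Fin 2) ℝ) (RotS s θ)) :
    IsConnected {p : SL2 × SL2 |
      IsConjTo p.1 (Umat s) ∧ IsConjTo p.2 (Umat s) ∧ p.1 * p.2 = C} := by
  obtain ⟨θ, ⟨hθ0, hθπ⟩, P, hCP⟩ := hC
  have hss : s * s = 1 := by rcases hs with h | h <;> rw [h] <;> norm_num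
  have hπ := Real.pi_pos
  set t := θ / 2 with ht
  have hθt : θ = 2 * t := by rw [ht]; ring
  have ht0 : 0 < t := by rw [ht]; linarith
  have htlt : t < Real.pi / 2 := by rw [ht]; linarith
  set st := Real.sin t with hstdef
  set ct := Real.cos t with hctdef
  have hst : 0 < st := Real.sin_pos_of_pos_of_lt_pi ht0 (by linarith)
  have hct : 0 < ct := Real.cos_pos_of_mem_Ioo ⟨by linarith, htlt⟩
  have hpy : st ^ 2 + ct ^ 2 = 1 := Real.sin_sq_add_cos_sq t
  set a := Real.sqrt (2 * st / ct) with hadef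
  have ha2 : a ^ 2 = 2 * st / ct := Real.sq_sqrt (by positivity)
  have ha0 : 0 < a := Real.sqrt_pos.mpr (by positivity)
  have hact : a ^ 2 * ct = 2 * st := by rw [ha2]; field_simp
  have hcosθ : Real.cos θ = 2 * ct ^ 2 - 1 := by rw [hθt]; exact Real.cos_two_mul t
  have hsinθ : Real.sin θ = 2 * st * ct := by rw [hθt, Real.sin_two_mul]
  have hRot : RotS s θ = !![2*ct^2 - 1, s*(2*st*ct); -(s*(2*st*ct)), 2*ct^2 - 1] := by
    rw [RotS, hcosθ, hsinθ]
  set X : ℝ → ℝ := fun φ => a * Real.cos φ with hX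
  set Y : ℝ → ℝ := fun φ => a * Real.sin φ with hY
  set V₀ : ℝ → ℝ := fun φ => s * X φ * st + Y φ * ct with hV0
  set V₁ : ℝ → ℝ := fun φ => s * Y φ * st - X φ * ct with hV1
  set R₀ : SL2 := P⁻¹ * C * P with hR0
  have hR0mat : (R₀ : Matrix (Fin 2) (Fin 2) ℝ) = RotS s θ := by
    have h1 : ((P⁻¹ : SL2) : Matrix (Fin 2) (Fin 2) ℝ) * (P : Matrix (Fin 2) (Fin 2) ℝ)
        = 1 := by
      rw [← Matrix.SpecialLinearGroup.coe_mul, inv_mul_cancel,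
        Matrix.SpecialLinearGroup.coe_one]
    calc (R₀ : Matrix (Fin 2) (Fin 2) ℝ)
        = ((P⁻¹ : SL2) : Matrix (Fin 2) (Fin 2) ℝ) * (C : Matrix (Fin 2) (Fin 2) ℝ)
          * (P : Matrix (Fin 2) (Fin 2) ℝ) := by
          rw [hR0]; simp [Matrix.SpecialLinearGroup.coe_mul]
      _ = ((P⁻¹ : SL2) : Matrix (Fin 2) (Fin 2) ℝ)
          * ((P : Matrix (Fin 2) (Fin 2) ℝ) * RotS s θ
            * ((P⁻¹ : SL2) : Matrix (Fin 2) (Fin 2) ℝ))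
          * (P : Matrix (Fin 2) (Fin 2) ℝ) := by rw [hCP]
      _ = (((P⁻¹ : SL2) : Matrix (Fin 2) (Fin 2) ℝ) * (P : Matrix (Fin 2) (Fin 2) ℝ))
          * RotS s θ
          * (((P⁻¹ : SL2) : Matrix (Fin 2) (Fin 2) ℝ) * (P : Matrix (Fin 2) (Fin 2) ℝ)) := by
          noncomm_ring
      _ = RotS s θ := by rw [h1, one_mul, mul_one]
  have hCR : C = P * R₀ * P⁻¹ := by rw [hR0]; group
  set F : ℝ → SL2 × SL2 := fun φ =>
    (P * slA s (X φ) (Y φ) * P⁻¹, P * slA s (V₀ φ) (V₁ φ) * P⁻¹) with hF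
  have hXY : ∀ φ : ℝ, (X φ ^ 2 + Y φ ^ 2) * ct = 2 * st := by
    intro φ
    simp only [hX, hY]
    linear_combination (a ^ 2 * ct) * Real.sin_sq_add_cos_sq φ + hact
  have hkey : ∀ φ : ℝ, slA s (X φ) (Y φ) * slA s (V₀ φ) (V₁ φ) = R₀ := by
    intro φ
    apply Subtype.ext
    rw [Matrix.SpecialLinearGroup.coe_mul, slA_coe, slA_coe, hR0mat, hRot]
    simp only [hV0, hV1]
    exact matAux_mul s st ct (X φ) (Y φ) hss hpy (hXY φ)
  have hFprod : ∀ φ : ℝ, (F φ).1 * (F φ).2 = C := by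
    intro φ
    simp only [hF]
    calc P * slA s (X φ) (Y φ) * P⁻¹ * (P * slA s (V₀ φ) (V₁ φ) * P⁻¹)
        = P * (slA s (X φ) (Y φ) * slA s (V₀ φ) (V₁ φ)) * P⁻¹ := by group
      _ = C := by rw [hkey φ, ← hCR]
  have hcont : ∀ f g : ℝ → ℝ, Continuous f → Continuous g →
      Continuous (fun φ : ℝ => (P * slA s (f φ) (g φ) * P⁻¹ : SL2)) := by
    intro f g hf hg
    apply continuous_induced_rng.mpr
    have heq : (Subtype.val ∘ fun φ : ℝ => (P * slA s (f φ) (g φ) * P⁻¹ : SL2))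
        = fun φ : ℝ => (P : Matrix (Fin 2) (Fin 2) ℝ) * matAux s (f φ) (g φ)
          * ((P⁻¹ : SL2) : Matrix (Fin 2) (Fin 2) ℝ) := by
      funext φ
      simp [Matrix.SpecialLinearGroup.coe_mul]
      rfl
    refine heq ▸ ?_
    refine Continuous.matrix_mul (Continuous.matrix_mul continuous_const ?_) continuous_const
    apply continuous_matrix
    intro i j
    fin_cases i <;> fin_cases j <;>
      simp only [matAux, Matrix.cons_val', Matrix.cons_val_zero, Matrix.cons_val_one,
        Matrix.head_cons, Matrix.empty_val', Matrix.cons_val_fin_one, Matrix.head_fin_const,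
        Matrix.of_apply, Fin.mk_zero, Fin.mk_one] <;> fun_prop
  have hFcont : Continuous F := by
    simp only [hF]
    exact Continuous.prodMk
      (hcont _ _ (by fun_prop) (by fun_prop))
      (hcont _ _ (by simp only [hV0, hX, hY]; fun_prop) (by simp only [hV1, hX, hY]; fun_prop))
  suffices hset : {p : SL2 × SL2 |
      IsConjTo p.1 (Umat s) ∧ IsConjTo p.2 (Umat s) ∧ p.1 * p.2 = C} = Set.range F by
    rw [hset]; exact isConnected_range hFcont
  ext p
  simp only [Set.mem_setOf_eq, Set.mem_range]
  constructor
  · rintro ⟨hA, hB, hAB⟩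
    have hA0 : IsConjTo (P⁻¹ * p.1 * P) (Umat s) := by
      have := hA.conj P⁻¹; rwa [inv_inv] at this
    have hB0 : IsConjTo (P⁻¹ * p.2 * P) (Umat s) := by
      have := hB.conj P⁻¹; rwa [inv_inv] at this
    obtain ⟨x', y', hne', hA0mat⟩ := conj_exists hA0
    obtain ⟨xB, yB, -, hB0mat⟩ := conj_exists hB0
    have htr : Matrix.trace ((P⁻¹ * p.2 * P : SL2) : Matrix (Fin 2) (Fin 2) ℝ) = 2 := by
      rw [hB0mat]; exact trace_matAux s xB yB
    have hBeq : (P⁻¹ * p.2 * P : SL2) = (P⁻¹ * p.1 * P)⁻¹ * R₀ := by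
      rw [hR0, ← hAB]; group
    rw [hBeq, Matrix.SpecialLinearGroup.coe_mul, Matrix.SpecialLinearGroup.coe_inv, hA0mat,
      hR0mat, hRot] at htr
    rw [matAux, Matrix.adjugate_fin_two_of, Matrix.mul_fin_two, Matrix.trace_fin_two_of] at htr
    have h5 : (x' ^ 2 + y' ^ 2) * ct * (2 * st) = 2 * st * (2 * st) := by
      linear_combination htr + (-(2 * st * ct * (x' ^ 2 + y' ^ 2))) * hss + (-4) * hpy
    have hcirc' : (x' ^ 2 + y' ^ 2) * ct = 2 * st :=
      mul_right_cancel₀ (by positivity) h5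
    have hx'y' : x' ^ 2 + y' ^ 2 = a ^ 2 := by
      rw [ha2]; field_simp; linear_combination hcirc'
    set z : ℂ := ⟨x', y'⟩ with hz
    have hzne : z ≠ 0 := by
      intro h0
      rw [Complex.ext_iff] at h0
      have h1 : x' = 0 := h0.1
      have h2 : y' = 0 := h0.2
      rw [h1, h2] at hx'y'
      nlinarith
    have habs : ‖z‖ = a := by
      rw [Complex.norm_def, Complex.normSq_apply]
      rw [show (z.re * z.re + z.im * z.im : ℝ) = a ^ 2 by
        rw [hz]; simp only []; linear_combination hx'y']
      exact Real.sqrt_sq ha0.le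
    refine ⟨Complex.arg z, ?_⟩
    have hXφ : X (Complex.arg z) = x' := by
      rw [hX]
      simp only []
      rw [Complex.cos_arg hzne, habs]
      field_simp [hz]
      rfl
    have hYφ : Y (Complex.arg z) = y' := by
      rw [hY]
      simp only []
      rw [Complex.sin_arg, habs]
      field_simp [hz]
      rfl
    have hfst : (F (Complex.arg z)).1 = p.1 := by
      simp only [hF]
      have hslA : slA s (X (Complex.arg z)) (Y (Complex.arg z)) = P⁻¹ * p.1 * P := by
        apply Subtype.ext
        rw [slA_coe, hXφ, hYφ]
        exact hA0mat.symm
      rw [hslA]; group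
    refine Prod.ext hfst ?_
    have h6 := hFprod (Complex.arg z)
    rw [hfst] at h6
    have h7 : p.1 * (F (Complex.arg z)).2 = p.1 * p.2 := by rw [h6, hAB]
    exact mul_left_cancel h7
  · rintro ⟨φ, rfl⟩
    refine ⟨?_, ?_, hFprod φ⟩
    · have hne : X φ ≠ 0 ∨ Y φ ≠ 0 := by
        rcases eq_or_ne (Real.cos φ) 0 with h | h
        · right
          have h2 : Real.sin φ ≠ 0 := by
            intro h3
            have h4 := Real.sin_sq_add_cos_sq φ
            rw [h, h3] at h4; norm_num at h4
          simp only [hY]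
          exact mul_ne_zero ha0.ne' h2
        · left
          simp only [hX]
          exact mul_ne_zero ha0.ne' h
      exact (slA_conj s (X φ) (Y φ) hne).conj P
    · have hne : V₀ φ ≠ 0 ∨ V₁ φ ≠ 0 := by
        by_contra hcn
        push_neg at hcn
        obtain ⟨h0, h1⟩ := hcn
        have hnorm : V₀ φ ^ 2 + V₁ φ ^ 2 = X φ ^ 2 + Y φ ^ 2 := by
          simp only [hV0, hV1]
          linear_combination (st ^ 2 * Y φ ^ 2 + st ^ 2 * X φ ^ 2) * hss
            + (Y φ ^ 2 + X φ ^ 2) * hpy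
        have hXY2 : X φ ^ 2 + Y φ ^ 2 = a ^ 2 := by
          simp only [hX, hY]
          linear_combination a ^ 2 * Real.sin_sq_add_cos_sq φ
        rw [h0, h1, hXY2] at hnorm
        nlinarith
      exact (slA_conj s (V₀ φ) (V₁ φ) hne).conj P
end

section
/- If A, B ∈ SL(2,ℝ) satisfy tr A = 2, tr B = 2, and tr(A·B) = 2, then A·B = B·A. -/
open Matrix

lemma key (a b c e f g : ℝ) (E1 : b*c + (a-1)^2 = 0) (E2 : f*g + (e-1)^2 = 0)
    (E3 : b*g + c*f + 2*(a-1)*(e-1) = 0) :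
    b*g = c*f ∧ f*(a-1) = b*(e-1) ∧ g*(a-1) = c*(e-1) := by
  have h1 : (b*g - c*f)^2 = 0 := by
    linear_combination (b*g + c*f - 2*(a-1)*(e-1)) * E3 - 4*f*g*E1 + 4*(a-1)^2*E2
  have h2 : (f*(a-1) - b*(e-1))^2 = 0 := by
    linear_combination f^2*E1 + b^2*E2 - b*f*E3
  have h3 : (g*(a-1) - c*(e-1))^2 = 0 := by
    linear_combination g^2*E1 + c^2*E2 - c*g*E3
  have h1' := pow_eq_zero_iff (two_ne_zero) |>.mp h1
  have h2' := pow_eq_zero_iff (two_ne_zero) |>.mp h2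
  have h3' := pow_eq_zero_iff (two_ne_zero) |>.mp h3
  refine ⟨by linarith, by linarith, by linarith⟩

lemma key2 (a b c d e f g h : ℝ) (hdA : a*d - b*c = 1) (hdB : e*h - f*g = 1)
    (hA : a + d = 2) (hB : e + h = 2) (hAB : a*e + b*g + (c*f + d*h) = 2) :
    (a*e + b*g = e*a + f*c) ∧ (a*f + b*h = e*b + f*d) ∧
      (c*e + d*g = g*a + h*c) ∧ (c*f + d*h = g*b + h*d) := by
  have hd : d = 2 - a := by linarith
  have hh : h = 2 - e := by linarith
  subst hd hh
  have E1 : b*c + (a-1)^2 = 0 := by linear_combination -hdA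
  have E2 : f*g + (e-1)^2 = 0 := by linear_combination -hdB
  have E3 : b*g + c*f + 2*(a-1)*(e-1) = 0 := by linear_combination hAB
  obtain ⟨k1, k2, k3⟩ := key a b c e f g E1 E2 E3
  refine ⟨by linear_combination k1, by linear_combination 2*k2,
    by linear_combination -2*k3, by linear_combination -k1⟩

/-- If A, B ∈ SL(2,ℝ) satisfy tr A = 2, tr B = 2 and tr(A·B) = 2, then A·B = B·A. -/
theorem stmt11 (A B : SL2) (hA : trSL A = 2) (hB : trSL B = 2) (hAB : trSL (A * B) = 2) :
    A * B = B * A := by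
  have hdA := A.2
  have hdB := B.2
  rw [Matrix.det_fin_two] at hdA hdB
  simp only [trSL, Matrix.trace_fin_two, Matrix.SpecialLinearGroup.coe_mul,
    Matrix.mul_apply, Fin.sum_univ_two] at hA hB hAB
  obtain ⟨k1, k2, k3, k4⟩ := key2 (A.1 0 0) (A.1 0 1) (A.1 1 0) (A.1 1 1)
    (B.1 0 0) (B.1 0 1) (B.1 1 0) (B.1 1 1) hdA hdB hA hB hAB
  ext i j
  fin_cases i <;> fin_cases j
  · simpa [Matrix.mul_apply, Fin.sum_univ_two] using k1
  · simpa [Matrix.mul_apply, Fin.sum_univ_two] using k2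
  · simpa [Matrix.mul_apply, Fin.sum_univ_two] using k3
  · simpa [Matrix.mul_apply, Fin.sum_univ_two] using k4
end

section
/- Let s₁, s₂, s₃ ∈ {1,−1}. There exist A, B ∈ SL(2,ℝ) such that A is SL(2,ℝ)-conjugate to U_{s₁}, B is SL(2,ℝ)-conjugate to U_{s₂}, and (A·B)⁻¹ is SL(2,ℝ)-conjugate to U_{s₃}, if and only if it is not the case that s₁ = s₂ = s₃. -/
open Matrix

lemma Umat_mul (a b : ℝ) : Umat a * Umat b = Umat (a + b) := by
  ext i j
  simp [Umat, Matrix.mul_apply, Fin.sum_univ_two]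
  fin_cases i <;> fin_cases j <;> erw [Matrix.SpecialLinearGroup.coe_mul] <;> simp [Matrix.mul_apply, Fin.sum_univ_two] <;> ring


lemma conj_Umat_smul (s c : ℝ) (hc : 0 < c) : IsConjTo (Umat (c * s)) (Umat s) := by
  obtain ⟨x, hx0, hxx⟩ : ∃ x : ℝ, x ≠ 0 ∧ x * x = c :=
    ⟨Real.sqrt c, by positivity, Real.mul_self_sqrt hc.le⟩
  subst hxx
  refine ⟨⟨!![x, 0; 0, x⁻¹], by rw [Matrix.det_fin_two_of]; simp [hx0]⟩, ?_⟩
  apply eq_mul_inv_iff_mul_eq.mpr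
  ext i j
  erw [Matrix.SpecialLinearGroup.coe_mul, Matrix.SpecialLinearGroup.coe_mul]
  fin_cases i <;> fin_cases j <;>
    simp [Umat, Matrix.mul_apply, Fin.sum_univ_two]
  field_simp

lemma conjU (t s : ℝ) (h : 0 < t * s) (hss : s * s = 1) : IsConjTo (Umat t) (Umat s) := by
  have ht : (t * s) * s = t := by linear_combination t * hss
  rw [← ht]
  exact conj_Umat_smul s (t * s) h

lemma Umat_inv (a : ℝ) : (Umat a)⁻¹ = Umat (-a) := by
  rw [inv_eq_iff_mul_eq_one]
  ext i j
  fin_cases i <;> fin_cases j <;> erw [Matrix.SpecialLinearGroup.coe_mul] <;> simp [Umat, Matrix.mul_apply, Fin.sum_univ_two]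

lemma entry_eqs (s : ℝ) (A P : SL2) (h : A = P * Umat s * P⁻¹) :
    ((A:Matrix (Fin 2) (Fin 2) ℝ) 0 0) = 1 - s * (P:Matrix (Fin 2) (Fin 2) ℝ) 0 0 * (P:Matrix (Fin 2) (Fin 2) ℝ) 1 0 ∧
    ((A:Matrix (Fin 2) (Fin 2) ℝ) 0 1) = s * (P:Matrix (Fin 2) (Fin 2) ℝ) 0 0 ^ 2 ∧
    ((A:Matrix (Fin 2) (Fin 2) ℝ) 1 0) = -(s * (P:Matrix (Fin 2) (Fin 2) ℝ) 1 0 ^ 2) ∧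
    ((A:Matrix (Fin 2) (Fin 2) ℝ) 1 1) = 1 + s * (P:Matrix (Fin 2) (Fin 2) ℝ) 0 0 * (P:Matrix (Fin 2) (Fin 2) ℝ) 1 0 := by
  have h' : A * P = P * Umat s := by rw [h]; simp [mul_assoc]
  have hm : (A : Matrix (Fin 2) (Fin 2) ℝ) * P = (P : Matrix (Fin 2) (Fin 2) ℝ) * (Umat s : Matrix (Fin 2) (Fin 2) ℝ) := by
    have := congrArg (Subtype.val) h'
    simpa using this
  have hdP : (P:Matrix (Fin 2) (Fin 2) ℝ) 0 0 * (P:Matrix (Fin 2) (Fin 2) ℝ) 1 1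
      - (P:Matrix (Fin 2) (Fin 2) ℝ) 0 1 * (P:Matrix (Fin 2) (Fin 2) ℝ) 1 0 = 1 := by
    have := P.2
    rwa [Matrix.det_fin_two] at this
  have e1 := congrFun (congrFun hm 0) 0
  have e2 := congrFun (congrFun hm 0) 1
  have e3 := congrFun (congrFun hm 1) 0
  have e4 := congrFun (congrFun hm 1) 1
  simp [Matrix.mul_apply, Fin.sum_univ_two, Umat] at e1 e2 e3 e4
  set a := (P:Matrix (Fin 2) (Fin 2) ℝ) 0 0
  set b := (P:Matrix (Fin 2) (Fin 2) ℝ) 0 1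
  set c := (P:Matrix (Fin 2) (Fin 2) ℝ) 1 0
  set d := (P:Matrix (Fin 2) (Fin 2) ℝ) 1 1
  set A00 := (A:Matrix (Fin 2) (Fin 2) ℝ) 0 0
  set A01 := (A:Matrix (Fin 2) (Fin 2) ℝ) 0 1
  set A10 := (A:Matrix (Fin 2) (Fin 2) ℝ) 1 0
  set A11 := (A:Matrix (Fin 2) (Fin 2) ℝ) 1 1
  refine ⟨?_, ?_, ?_, ?_⟩
  · linear_combination d*e1 - c*e2 - (A00-1)*hdP
  · linear_combination (-b)*e1 + a*e2 - A01*hdP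
  · linear_combination d*e3 - c*e4 - A10*hdP
  · linear_combination (-b)*e3 + a*e4 - (A11-1)*hdP

set_option maxHeartbeats 1000000 in
lemma forward_case (s : ℝ) (hs : s * s = 1) (A B : SL2)
    (hA : IsConjTo A (Umat s)) (hB : IsConjTo B (Umat s))
    (hC : IsConjTo (A * B)⁻¹ (Umat s)) : False := by
  obtain ⟨P, hP⟩ := hA
  obtain ⟨Q, hQ⟩ := hB
  obtain ⟨R, hR⟩ := hC
  obtain ⟨hA00, hA01, hA10, hA11⟩ := entry_eqs s A P hP
  obtain ⟨hB00, hB01, hB10, hB11⟩ := entry_eqs s B Q hQ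
  -- third condition: (A*B)*R = R * Umat (-s)
  have h3 : (A * B) * R = R * Umat (-s) := by
    rw [← Umat_inv, ← inv_inv (A*B), hR]
    simp [_root_.mul_inv_rev, mul_assoc]
  have hm : ((A : Matrix (Fin 2) (Fin 2) ℝ) * B) * R
      = (R : Matrix (Fin 2) (Fin 2) ℝ) * (Umat (-s) : Matrix (Fin 2) (Fin 2) ℝ) := by
    have := congrArg (Subtype.val) h3
    simpa [mul_assoc] using this
  have hdR : (R:Matrix (Fin 2) (Fin 2) ℝ) 0 0 * (R:Matrix (Fin 2) (Fin 2) ℝ) 1 1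
      - (R:Matrix (Fin 2) (Fin 2) ℝ) 0 1 * (R:Matrix (Fin 2) (Fin 2) ℝ) 1 0 = 1 := by
    have := R.2
    rwa [Matrix.det_fin_two] at this
  have e1 := congrFun (congrFun hm 0) 0
  have e2 := congrFun (congrFun hm 0) 1
  have e3 := congrFun (congrFun hm 1) 0
  have e4 := congrFun (congrFun hm 1) 1
  simp [Matrix.mul_apply, Fin.sum_univ_two, Umat] at e1 e2 e3 e4
  simp only [hA00, hA01, hA10, hA11, hB00, hB01, hB10, hB11] at e1 e2 e3 e4
  set a := (P:Matrix (Fin 2) (Fin 2) ℝ) 0 0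
  set c := (P:Matrix (Fin 2) (Fin 2) ℝ) 1 0
  set e := (Q:Matrix (Fin 2) (Fin 2) ℝ) 0 0
  set g := (Q:Matrix (Fin 2) (Fin 2) ℝ) 1 0
  set p := (R:Matrix (Fin 2) (Fin 2) ℝ) 0 0
  set q := (R:Matrix (Fin 2) (Fin 2) ℝ) 0 1
  set r := (R:Matrix (Fin 2) (Fin 2) ℝ) 1 0
  set t := (R:Matrix (Fin 2) (Fin 2) ℝ) 1 1
  have hδ : (a*g - c*e)^2 = 0 := by
    linear_combination (-(t*e1) + r*e2 + q*e3 - p*e4) - s*s*(a*g-c*e)^2*hdR - (a*g-c*e)^2*hs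
  have hδ0 : a*g - c*e = 0 := (pow_eq_zero_iff two_ne_zero).mp hδ
  have g1 : a^2 + e^2 + p^2 = 0 := by
    linear_combination s*p*e2 - s*q*e1 - (a^2+e^2)*hdR
      + (-p^2 + e^2*q*r - e^2*p*t + a^2*q*r - a^2*p*t - s*a*c*e^2*q*r + s*a*c*e^2*p*t
        + s*a^2*e*g*q*r - s*a^2*e*g*p*t)*hs
      + (s*a*e*q*r - s*a*e*p*t)*hδ0
  have g2 : c^2 + g^2 + r^2 = 0 := by
    linear_combination (-(s*t*e3)) + s*r*e4 - (c^2+g^2)*hdR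
      + (-r^2 + g^2*q*r - g^2*p*t + c^2*q*r - c^2*p*t - s*c^2*e*g*q*r + s*c^2*e*g*p*t
        + s*a*c*g^2*q*r - s*a*c*g^2*p*t)*hs
      + (s*c*g*q*r - s*c*g*p*t)*hδ0
  have hp : p = 0 := by
    have h2 : p^2 = 0 := le_antisymm (by linarith only [g1, sq_nonneg a, sq_nonneg e]) (sq_nonneg p)
    exact (pow_eq_zero_iff two_ne_zero).mp h2
  have hr : r = 0 := by
    have h2 : r^2 = 0 := le_antisymm (by linarith only [g2, sq_nonneg c, sq_nonneg g]) (sq_nonneg r)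
    exact (pow_eq_zero_iff two_ne_zero).mp h2
  rw [hp, hr] at hdR
  simp at hdR

/-- Let s₁, s₂, s₃ ∈ {1,−1}.  There exist A, B ∈ SL(2,ℝ) with A conjugate to U_{s₁},
B conjugate to U_{s₂} and (A·B)⁻¹ conjugate to U_{s₃}, iff not s₁ = s₂ = s₃. -/
theorem stmt12 (s₁ s₂ s₃ : ℝ) (h₁ : s₁ = 1 ∨ s₁ = -1) (h₂ : s₂ = 1 ∨ s₂ = -1)
    (h₃ : s₃ = 1 ∨ s₃ = -1) :
    (∃ A B : SL2, IsConjTo A (Umat s₁) ∧ IsConjTo B (Umat s₂) ∧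
      IsConjTo (A * B)⁻¹ (Umat s₃)) ↔ ¬(s₁ = s₂ ∧ s₂ = s₃) := by
  constructor
  · rintro ⟨A, B, hA, hB, hC⟩ ⟨h12, h23⟩
    subst h12; subst h23
    have hs : s₁ * s₁ = 1 := by rcases h₁ with rfl | rfl <;> norm_num
    exact forward_case s₁ hs A B hA hB hC
  · intro hne
    rcases h₁ with rfl | rfl <;> rcases h₂ with rfl | rfl <;> rcases h₃ with rfl | rfl
    · exact absurd ⟨rfl, rfl⟩ hne
    · exact ⟨Umat 1, Umat 1, conjU _ _ (by norm_num) (by norm_num),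
        conjU _ _ (by norm_num) (by norm_num), by
        rw [Umat_mul, Umat_inv]; exact conjU _ _ (by norm_num) (by norm_num)⟩
    · exact ⟨Umat 1, Umat (-2), conjU _ _ (by norm_num) (by norm_num),
        conjU _ _ (by norm_num) (by norm_num), by
        rw [Umat_mul, Umat_inv]; exact conjU _ _ (by norm_num) (by norm_num)⟩
    · exact ⟨Umat 1, Umat (-1/2), conjU _ _ (by norm_num) (by norm_num),
        conjU _ _ (by norm_num) (by norm_num), by
        rw [Umat_mul, Umat_inv]; exact conjU _ _ (by norm_num) (by norm_num)⟩
    · exact ⟨Umat (-1), Umat (1/2), conjU _ _ (by norm_num) (by norm_num),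
        conjU _ _ (by norm_num) (by norm_num), by
        rw [Umat_mul, Umat_inv]; exact conjU _ _ (by norm_num) (by norm_num)⟩
    · exact ⟨Umat (-1), Umat 2, conjU _ _ (by norm_num) (by norm_num),
        conjU _ _ (by norm_num) (by norm_num), by
        rw [Umat_mul, Umat_inv]; exact conjU _ _ (by norm_num) (by norm_num)⟩
    · exact ⟨Umat (-1), Umat (-1), conjU _ _ (by norm_num) (by norm_num),
        conjU _ _ (by norm_num) (by norm_num), by
        rw [Umat_mul, Umat_inv]; exact conjU _ _ (by norm_num) (by norm_num)⟩
    · exact absurd ⟨rfl, rfl⟩ hne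
end

section
/- Let ε ∈ {1,−1} and let A, B ∈ SL(2,ℝ) with tr A = 2 and tr B = 2. If −(A·B) (the negative of the matrix A·B, which again lies in SL(2,ℝ)) is SL(2,ℝ)-conjugate to U_{−ε}, then A and B are each SL(2,ℝ)-conjugate to U_ε. -/
open Matrix

instance : Fact (Even (Fintype.card (Fin 2))) := ⟨by rw [Fintype.card_fin]; exact even_two⟩


lemma key_conj (ε : ℝ) (hε2 : ε * ε = 1) (M : SL2) (htr : trSL M = 2)
    (hc : M.1 1 0 = -4 * ε) : IsConjTo M (Umat ε) := by
  have hdet : M.1 0 0 * M.1 1 1 - M.1 0 1 * M.1 1 0 = 1 := by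
    have := M.2
    rwa [Matrix.det_fin_two] at this
  have htr' : M.1 0 0 + M.1 1 1 = 2 := by
    simpa [trSL, Matrix.trace_fin_two] using htr
  refine ⟨⟨!![(1 - M.1 0 0) * ε / 2, -1/2; 2, 0], by
    rw [Matrix.det_fin_two_of]; ring⟩, ?_⟩
  apply Subtype.ext
  erw [Matrix.SpecialLinearGroup.coe_mul, Matrix.SpecialLinearGroup.coe_mul,
    Matrix.SpecialLinearGroup.coe_inv]
  have hd : M.1 1 1 = 2 - M.1 0 0 := by linarith
  have hb : M.1 0 1 * ε = (1 - M.1 0 0)^2 / 4 := by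
    rw [hd, hc] at hdet; linear_combination hdet / 4
  ext i j
  fin_cases i <;> fin_cases j <;>
    simp [Umat, Matrix.mul_apply, Fin.sum_univ_two, Matrix.adjugate_fin_two] <;>
    first
      | linear_combination (1 - M.1 0 0) * hε2
      | linear_combination ε^3 * hb - M.1 0 1 * (1 + ε^2) * hε2
      | linear_combination htr' - (1 - M.1 0 0) * hε2
      | linear_combination hc

/-- Let ε ∈ {1,−1} and A, B ∈ SL(2,ℝ) with tr A = 2 and tr B = 2.  If −(A·B) is conjugate
to U_{−ε}, then A and B are each conjugate to U_ε. -/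
theorem stmt13 (ε : ℝ) (hε : ε = 1 ∨ ε = -1) (A B : SL2)
    (hA : trSL A = 2) (hB : trSL B = 2)
    (h : IsConjTo (-(A * B)) (Umat (-ε))) :
    IsConjTo A (Umat ε) ∧ IsConjTo B (Umat ε) := by
  obtain ⟨P, hP⟩ := h
  have hε2 : ε * ε = 1 := by rcases hε with rfl | rfl <;> norm_num
  set A' : SL2 := P⁻¹ * A * P with hA'
  set B' : SL2 := P⁻¹ * B * P with hB'
  have hAB : A' * B' = -(Umat (-ε)) := by
    have h1 : A * B = P * (-(Umat (-ε))) * P⁻¹ := by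
      rw [mul_neg, neg_mul, ← hP, neg_neg]
    calc A' * B' = P⁻¹ * (A * B) * P := by rw [hA', hB']; group
    _ = P⁻¹ * (P * (-(Umat (-ε))) * P⁻¹) * P := by rw [h1]
    _ = -(Umat (-ε)) := by group
  have hB'eq : B' = A'⁻¹ * (-(Umat (-ε))) := by
    rw [← hAB]; group
  have htrA' : trSL A' = 2 := by
    rw [trSL, hA', Matrix.SpecialLinearGroup.coe_mul, Matrix.SpecialLinearGroup.coe_mul,
      Matrix.trace_mul_comm, ← Matrix.mul_assoc, ← Matrix.SpecialLinearGroup.coe_mul,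
      mul_inv_cancel, Matrix.SpecialLinearGroup.coe_one, Matrix.one_mul]
    exact hA
  have htrB' : trSL B' = 2 := by
    rw [trSL, hB', Matrix.SpecialLinearGroup.coe_mul, Matrix.SpecialLinearGroup.coe_mul,
      Matrix.trace_mul_comm, ← Matrix.mul_assoc, ← Matrix.SpecialLinearGroup.coe_mul,
      mul_inv_cancel, Matrix.SpecialLinearGroup.coe_one, Matrix.one_mul]
    exact hB
  have hdetA' : A'.1 0 0 * A'.1 1 1 - A'.1 0 1 * A'.1 1 0 = 1 := by
    have := A'.2; rwa [Matrix.det_fin_two] at this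
  have htrA'' : A'.1 0 0 + A'.1 1 1 = 2 := by
    simpa [trSL, Matrix.trace_fin_two] using htrA'
  have hB'mat : B'.1 = (Matrix.adjugate A'.1) * (-(Umat (-ε))).1 := by
    rw [hB'eq, Matrix.SpecialLinearGroup.coe_mul, Matrix.SpecialLinearGroup.coe_inv]
  have hnegU : (-(Umat (-ε))).1 = !![-1, ε; 0, -1] := by
    rw [show (-(Umat (-ε))).1 = -(Umat (-ε) : Matrix (Fin 2) (Fin 2) ℝ) from Matrix.SpecialLinearGroup.coe_neg _]
    ext i j
    fin_cases i <;> fin_cases j <;> simp [Umat]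
  have hB'10 : B'.1 1 0 = A'.1 1 0 := by
    rw [hB'mat, hnegU]
    simp [Matrix.mul_apply, Fin.sum_univ_two, Matrix.adjugate_fin_two]
  have hB'tr : -(A'.1 1 1) + (-(A'.1 1 0 * ε) - A'.1 0 0) = 2 := by
    have h2 : B'.1 0 0 + B'.1 1 1 = 2 := by
      simpa [trSL, Matrix.trace_fin_two] using htrB'
    rw [hB'mat, hnegU] at h2
    simpa [Matrix.mul_apply, Fin.sum_univ_two, Matrix.adjugate_fin_two, sub_eq_add_neg] using h2
  have hc : A'.1 1 0 = -4 * ε := by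
    linear_combination -ε * hB'tr - ε * htrA'' - A'.1 1 0 * hε2
  have hcB : B'.1 1 0 = -4 * ε := by rw [hB'10]; exact hc
  have kA := key_conj ε hε2 A' htrA' hc
  have kB := key_conj ε hε2 B' htrB' hcB
  constructor
  · obtain ⟨Q, hQ⟩ := kA
    refine ⟨P * Q, ?_⟩
    have : A = P * A' * P⁻¹ := by rw [hA']; group
    rw [this, hQ, _root_.mul_inv_rev]; group
  · obtain ⟨Q, hQ⟩ := kB
    refine ⟨P * Q, ?_⟩
    have : B = P * B' * P⁻¹ := by rw [hB']; group
    rw [this, hQ, _root_.mul_inv_rev]; group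
end

section
/- The subspace X = {(a,b) ∈ PSL(2,ℝ) × PSL(2,ℝ) : a is parabolic, b is parabolic, and a·b is parabolic} of PSL(2,ℝ) × PSL(2,ℝ) has exactly eight connected components. (This is the space of type-preserving representations of the fundamental group of the three-hole sphere, identified with pairs (a,b) such that a, b and (ab)⁻¹ are all parabolic.) -/
open Matrix

/-- PSL(2,ℝ): the quotient of SL(2,ℝ) by its center {I, −I}, with the quotient topology. -/
abbrev PSL2 : Type := SL2 ⧸ Subgroup.center SL2

/-- An element of PSL(2,ℝ) is parabolic if it is the image of some A ∈ SL(2,ℝ) with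
tr A = 2 and A ≠ I. -/
def IsParabolic (x : PSL2) : Prop :=
  ∃ A : SL2, trSL A = 2 ∧ A ≠ 1 ∧ (QuotientGroup.mk A : PSL2) = x

namespace Stmt15

abbrev M2 := Matrix (Fin 2) (Fin 2) ℝ

def Pm (v₀ v₁ t : ℝ) : M2 := !![1 - t*v₀*v₁, t*v₀^2; -(t*v₁^2), 1 + t*v₀*v₁]

lemma det_Pm (v₀ v₁ t : ℝ) : det (Pm v₀ v₁ t) = 1 := by
  simp [Pm, Matrix.det_fin_two_of]; ring

def PS (v₀ v₁ t : ℝ) : SL2 := ⟨Pm v₀ v₁ t, det_Pm v₀ v₁ t⟩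

lemma PS_coe (v₀ v₁ t : ℝ) : (PS v₀ v₁ t : M2) = Pm v₀ v₁ t := rfl

lemma trSL_PS (v₀ v₁ t : ℝ) (hv : v₀^2 + v₁^2 = 1) : trSL (PS v₀ v₁ t) = 2 := by
  simp [trSL, PS, Pm, Matrix.trace_fin_two_of]; norm_num

lemma Pm_mul (v₀ v₁ w₀ w₁ t₁ t₂ : ℝ) :
    Pm v₀ v₁ t₁ * Pm w₀ w₁ t₂ =
      !![(1 - t₁*v₀*v₁)*(1 - t₂*w₀*w₁) + (t₁*v₀^2)*(-(t₂*w₁^2)),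
         (1 - t₁*v₀*v₁)*(t₂*w₀^2) + (t₁*v₀^2)*(1 + t₂*w₀*w₁);
         (-(t₁*v₁^2))*(1 - t₂*w₀*w₁) + (1 + t₁*v₀*v₁)*(-(t₂*w₁^2)),
         (-(t₁*v₁^2))*(t₂*w₀^2) + (1 + t₁*v₀*v₁)*(1 + t₂*w₀*w₁)] := by
  simp [Pm, Matrix.mul_fin_two]

lemma PS_mul_same (v₀ v₁ t₁ t₂ : ℝ) : PS v₀ v₁ t₁ * PS v₀ v₁ t₂ = PS v₀ v₁ (t₁ + t₂) := by
  apply Subtype.ext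
  show Pm v₀ v₁ t₁ * Pm v₀ v₁ t₂ = Pm v₀ v₁ (t₁+t₂)
  rw [Pm_mul]
  unfold Pm
  congr 1 <;> ring

lemma trace_Pm_mul (v₀ v₁ w₀ w₁ t₁ t₂ : ℝ) :
    Matrix.trace (Pm v₀ v₁ t₁ * Pm w₀ w₁ t₂) = 2 - t₁*t₂*(v₀*w₁ - v₁*w₀)^2 := by
  simp [Pm, Matrix.mul_fin_two, Matrix.trace_fin_two_of]; ring

lemma delta_Pm_mul (v₀ v₁ w₀ w₁ t₁ t₂ : ℝ) :
    (Pm v₀ v₁ t₁ * Pm w₀ w₁ t₂) 0 1 - (Pm v₀ v₁ t₁ * Pm w₀ w₁ t₂) 1 0 =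
      t₁*(v₀^2+v₁^2) + t₂*(w₀^2+w₁^2)
        + t₁*t₂*(v₀*w₀ + v₁*w₁)*(v₀*w₁ - v₁*w₀) := by
  simp [Pm, Matrix.mul_fin_two]; ring

lemma trSL_mk (A : SL2) : trSL A = (A : M2) 0 0 + (A : M2) 1 1 := by
  simp [trSL, Matrix.trace_fin_two]

lemma det_rel (A : SL2) : (A : M2) 0 0 * (A : M2) 1 1 - (A : M2) 0 1 * (A : M2) 1 0 = 1 := by
  have := A.property
  rwa [Matrix.det_fin_two] at this

lemma parabolic_decomp (A : SL2) (htr : trSL A = 2) (hne : A ≠ 1) :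
    ∃ v₀ v₁ t : ℝ, v₀^2+v₁^2 = 1 ∧ t ≠ 0 ∧ A = PS v₀ v₁ t ∧
      t = (A : M2) 0 1 - (A : M2) 1 0 := by
  set a := (A : M2) 0 0 with ha
  set b := (A : M2) 0 1 with hb
  set c := (A : M2) 1 0 with hc
  set d := (A : M2) 1 1 with hd
  have hdet : a*d - b*c = 1 := det_rel A
  have htr' : a + d = 2 := by rw [trSL_mk] at htr; exact htr
  have hsq : (a-1)^2 = -(b*c) := by linear_combination (-1) * hdet + a * htr'
  have hAeq : ∀ v₀ v₁ t : ℝ, 1 - t*v₀*v₁ = a → t*v₀^2 = b → -(t*v₁^2) = c →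
      1 + t*v₀*v₁ = d → A = PS v₀ v₁ t := by
    intro v₀ v₁ t h1 h2 h3 h4
    apply Subtype.ext
    show (A : M2) = Pm v₀ v₁ t
    have : (A : M2) = !![a, b; c, d] := by
      ext i j; fin_cases i <;> fin_cases j <;> rfl
    rw [this, Pm]
    congr 1 <;> simp [h1, h2, h3, h4]
  by_cases hb0 : b = 0
  · have ha0 : (a-1)^2 = 0 := by rw [hsq, hb0]; ring
    have ha1 : a = 1 := by nlinarith [ha0]
    have hd1 : d = 1 := by linarith
    have hcne : c ≠ 0 := by
      intro hc0
      apply hne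
      apply Subtype.ext
      show (A : M2) = (1 : M2)
      have : (A : M2) = !![a, b; c, d] := by
        ext i j; fin_cases i <;> fin_cases j <;> rfl
      rw [this, ha1, hb0, hc0, hd1]
      exact Matrix.one_fin_two.symm
    refine ⟨0, 1, -c, by norm_num, by simpa using hcne, ?_, by rw [hb0]; ring⟩
    apply hAeq
    · norm_num [ha1]
    · norm_num [hb0]
    · norm_num
    · norm_num [hd1]
  · set t := b - c with htdef
    have hbcle : b * c ≤ 0 := by nlinarith [sq_nonneg (a-1)]
    have hbt : 0 < b * t := by
      rcases lt_or_gt_of_ne hb0 with h | h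
      · have : 0 ≤ c := by nlinarith
        nlinarith
      · have : c ≤ 0 := by nlinarith
        nlinarith
    have ht0 : t ≠ 0 := by intro h; rw [h] at hbt; simp at hbt
    have hbtpos : 0 < b / t := by
      rcases lt_or_gt_of_ne ht0 with h | h
      · have hblt : b < 0 := by nlinarith
        exact div_pos_of_neg_of_neg hblt h
      · have : 0 < b := by nlinarith
        exact div_pos this h
    set v₀ := Real.sqrt (b / t) with hv₀
    have hv₀sq : v₀^2 = b / t := Real.sq_sqrt hbtpos.le
    have hv₀pos : 0 < v₀ := Real.sqrt_pos.mpr hbtpos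
    set v₁ := -(a-1)/(t*v₀) with hv₁
    have hv₁sq : v₁^2 = -c/t := by
      rw [hv₁, div_pow, mul_pow, hv₀sq, neg_div]
      field_simp
      nlinarith [hsq]
    have hb' : t * v₀^2 = b := by
      rw [hv₀sq, mul_comm, div_mul_cancel₀ _ ht0]
    have hc' : -(t * v₁^2) = c := by
      rw [hv₁sq, neg_div, mul_neg, mul_comm, div_mul_cancel₀ _ ht0, neg_neg]
    have hprod : t * v₀ * v₁ = -(a-1) := by
      rw [hv₁]
      field_simp
    refine ⟨v₀, v₁, t, ?_, ht0, ?_, rfl⟩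
    · rw [hv₀sq, hv₁sq, ← add_div, div_eq_one_iff_eq ht0, htdef]; ring
    · apply hAeq
      · rw [hprod]; ring
      · exact hb'
      · exact hc'
      · rw [hprod]; linarith

end Stmt15

section Chunk3
open Matrix
namespace Stmt15

lemma key_pos (t₁ t₂ c d : ℝ) (h1 : 0 < t₁) (h2 : 0 < t₂)
    (h4 : t₁*t₂*d^2 = 4) (hcd : c^2 + d^2 = 1) :
    0 < t₁ + t₂ + t₁*t₂*c*d := by
  have hid : (t₁+t₂+t₁*t₂*c*d)*(t₁+t₂-t₁*t₂*c*d) = (t₁-t₂)^2 + 16 := by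
    linear_combination (4 - t₁*t₂*c^2) * h4 + (-4*t₁*t₂) * hcd
  by_contra h
  push_neg at h
  have h2' : 0 < t₁ + t₂ - t₁*t₂*c*d := by nlinarith
  nlinarith

lemma key_neg (t₁ t₂ c d : ℝ) (h1 : t₁ < 0) (h2 : t₂ < 0)
    (h4 : t₁*t₂*d^2 = 4) (hcd : c^2 + d^2 = 1) :
    t₁ + t₂ + t₁*t₂*c*d < 0 := by
  have := key_pos (-t₁) (-t₂) c (-d) (by linarith) (by linarith)
    (by ring_nf; linarith [h4]) (by ring_nf; linarith [hcd])
  linarith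

-- continuity infrastructure
lemma continuous_val : Continuous (fun A : SL2 => (A : M2)) := continuous_subtype_val

instance : IsTopologicalGroup SL2 where
  continuous_mul := by
    apply Continuous.subtype_mk
    exact (continuous_val.comp continuous_fst).matrix_mul (continuous_val.comp continuous_snd)
  continuous_inv := by
    apply Continuous.subtype_mk
    exact continuous_val.matrix_adjugate

lemma continuous_trSL : Continuous trSL := continuous_val.matrix_trace

lemma continuous_entry (i j : Fin 2) : Continuous (fun A : SL2 => (A : M2) i j) :=
  continuous_val.matrix_elem i j

-- center of SL2
lemma scalar_neg_one : (Matrix.scalar (Fin 2)) (-1 : ℝ) = (-(1:M2)) := by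
  ext i j
  simp [Matrix.scalar_apply, Matrix.diagonal_apply, Matrix.neg_apply, Matrix.one_apply]
  split <;> simp

lemma mem_center_iff' (A : SL2) :
    A ∈ Subgroup.center SL2 ↔ A = 1 ∨ (A : M2) = -1 := by
  rw [Matrix.SpecialLinearGroup.mem_center_iff]
  constructor
  · rintro ⟨r, hr, hrA⟩
    have hr2 : r^2 = 1 := by simpa using hr
    have : (r - 1) * (r + 1) = 0 := by linear_combination hr2
    rcases mul_eq_zero.mp this with h | h
    · left
      have hr1 : r = 1 := by linarith
      apply Subtype.ext
      rw [← hrA, hr1]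
      simp
    · right
      have hr1 : r = -1 := by linarith
      rw [← hrA, hr1]
      exact scalar_neg_one
  · rintro (h | h)
    · exact ⟨1, by norm_num, by rw [h]; simp⟩
    · exact ⟨-1, by norm_num, by rw [h]; exact scalar_neg_one⟩

lemma coe_inv_mul (A B : SL2) : ((A⁻¹ * B : SL2) : M2) = ((A⁻¹ : SL2) : M2) * (B : M2) := by
  simp

lemma mk_eq_mk (A B : SL2) :
    (QuotientGroup.mk A : PSL2) = QuotientGroup.mk B ↔ (B = A ∨ (B : M2) = -(A : M2)) := by
  rw [QuotientGroup.eq]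
  rw [mem_center_iff' (A⁻¹ * B)]
  have hAAinv : (A : M2) * ((A⁻¹ : SL2) : M2) = 1 := by
    have := Matrix.SpecialLinearGroup.coe_mul A A⁻¹
    rw [mul_inv_cancel] at this
    exact this.symm
  have hAinvA : ((A⁻¹ : SL2) : M2) * (A : M2) = 1 := by
    have := Matrix.SpecialLinearGroup.coe_mul A⁻¹ A
    rw [inv_mul_cancel] at this
    exact this.symm
  constructor
  · rintro (h | h)
    · left; exact (inv_mul_eq_one.mp h).symm
    · right
      have h2 : ((A : M2)) * ((A⁻¹ * B : SL2) : M2) = (A : M2) * (-1) := by rw [h]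
      rw [coe_inv_mul, ← mul_assoc, hAAinv, one_mul, mul_neg, mul_one] at h2
      exact h2
  · rintro (h | h)
    · left; rw [h]; group
    · right
      rw [coe_inv_mul, h, mul_neg, hAinvA]

end Stmt15
end Chunk3

section Chunk4
open Matrix
namespace Stmt15

def negSL (C : SL2) : SL2 := ⟨-(C : M2), by
  rw [Matrix.det_neg]
  simp [C.property]⟩

lemma coe_negSL (C : SL2) : ((negSL C : SL2) : M2) = -(C : M2) := rfl

lemma trSL_negSL (C : SL2) : trSL (negSL C) = -trSL C := by
  simp [trSL, coe_negSL]

lemma isParabolic_mk_iff (C : SL2) :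
    IsParabolic (QuotientGroup.mk C) ↔
      ((trSL C = 2 ∧ C ≠ 1) ∨ (trSL C = -2 ∧ (C : M2) ≠ -1)) := by
  constructor
  · rintro ⟨D, htr, hne, heq⟩
    rcases (mk_eq_mk D C).mp heq with h | h
    · left; exact ⟨h ▸ htr, h ▸ hne⟩
    · right
      constructor
      · have : trSL C = -trSL D := by simp [trSL, h, Matrix.trace_neg]
        rw [this, htr]
      · intro hC
        apply hne
        apply Subtype.ext
        have h3 : -(D : M2) = -1 := by rw [← h, hC]
        have h4 := congrArg Neg.neg h3
        simpa using h4
  · rintro (⟨h1, h2⟩ | ⟨h1, h2⟩)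
    · exact ⟨C, h1, h2, rfl⟩
    · refine ⟨negSL C, by rw [trSL_negSL, h1]; norm_num, ?_, ?_⟩
      · intro hD
        apply h2
        have : (negSL C : M2) = (1 : M2) := by rw [hD]; rfl
        rw [coe_negSL] at this
        have := congrArg Neg.neg this
        simpa using this
      · rw [mk_eq_mk]
        right
        rw [coe_negSL]
        exact (neg_neg _).symm

def Yset : Set (SL2 × SL2) := {p | trSL p.1 = 2 ∧ p.1 ≠ 1 ∧ trSL p.2 = 2 ∧ p.2 ≠ 1 ∧
  ((trSL (p.1*p.2) = 2 ∧ p.1*p.2 ≠ 1) ∨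
    (trSL (p.1*p.2) = -2 ∧ ((p.1*p.2 : SL2) : M2) ≠ -1))}

noncomputable def T1 (p : SL2 × SL2) : ℝ := (p.1 : M2) 0 1 - (p.1 : M2) 1 0
noncomputable def T2 (p : SL2 × SL2) : ℝ := (p.2 : M2) 0 1 - (p.2 : M2) 1 0
noncomputable def T3 (p : SL2 × SL2) : ℝ :=
  (trSL (p.1*p.2)/2) * (((p.1*p.2 : SL2) : M2) 0 1 - ((p.1*p.2 : SL2) : M2) 1 0)

lemma contT1 : Continuous T1 :=
  (((continuous_entry 0 1).comp continuous_fst)).sub ((continuous_entry 1 0).comp continuous_fst)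
lemma contT2 : Continuous T2 :=
  (((continuous_entry 0 1).comp continuous_snd)).sub ((continuous_entry 1 0).comp continuous_snd)
lemma contT3 : Continuous T3 := by
  have hm : Continuous (fun p : SL2 × SL2 => p.1 * p.2) := continuous_mul
  exact ((continuous_trSL.comp hm).div_const 2).mul
    (((continuous_entry 0 1).comp hm).sub ((continuous_entry 1 0).comp hm))

lemma b_ne_c (A : SL2) (e : ℝ) (he : e = 1 ∨ e = -1) (htr : trSL A = 2*e)
    (hne : (A : M2) ≠ e • (1 : M2)) : (A : M2) 0 1 - (A : M2) 1 0 ≠ 0 := by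
  intro hbc
  set a := (A : M2) 0 0
  set b := (A : M2) 0 1
  set c := (A : M2) 1 0
  set d := (A : M2) 1 1
  have hdet : a*d - b*c = 1 := det_rel A
  have htr' : a + d = 2*e := by rw [trSL_mk] at htr; exact htr
  have he2 : e^2 = 1 := by rcases he with h | h <;> rw [h] <;> norm_num
  have hcb : c = b := by linarith
  have hdet' : a*d - b^2 = 1 := by rw [hcb] at hdet; linear_combination hdet
  have hsum2 : (a+d)^2 = 4*e^2 := by rw [htr']; ring
  have hb2 : b^2 ≤ 0 := by nlinarith [sq_nonneg (a - d)]
  have hb0 : b = 0 := by nlinarith [sq_nonneg b]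
  have hc0 : c = 0 := by linarith
  have had0 : (a - d)^2 = 0 := by nlinarith
  have had : a = d := by
    have := pow_eq_zero_iff (n := 2) (by norm_num) |>.mp had0
    linarith
  have hae : a = e := by linarith
  apply hne
  have hmat : (A : M2) = !![a, b; c, d] := by
    ext i j; fin_cases i <;> fin_cases j <;> rfl
  rw [hmat, hb0, hc0, hae, ← had, hae]
  ext i j; fin_cases i <;> fin_cases j <;>
    simp [Matrix.smul_apply, Matrix.one_apply]

lemma ne_one_iff_coe (A : SL2) : (A : M2) ≠ (1:ℝ) • (1 : M2) ↔ A ≠ 1 := by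
  constructor
  · intro h h'
    apply h
    rw [h']
    simp
  · intro h h'
    apply h
    apply Subtype.ext
    rw [h']
    simp

lemma T1_ne (p : SL2 × SL2) (hp : p ∈ Yset) : T1 p ≠ 0 := by
  obtain ⟨h1, h2, _⟩ := hp
  exact b_ne_c p.1 1 (Or.inl rfl) (by rw [h1]; norm_num) ((ne_one_iff_coe p.1).mpr h2)

lemma T2_ne (p : SL2 × SL2) (hp : p ∈ Yset) : T2 p ≠ 0 := by
  obtain ⟨h1, h2, h3, h4, _⟩ := hp
  exact b_ne_c p.2 1 (Or.inl rfl) (by rw [h3]; norm_num) ((ne_one_iff_coe p.2).mpr h4)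

lemma T3_ne (p : SL2 × SL2) (hp : p ∈ Yset) : T3 p ≠ 0 := by
  obtain ⟨h1, h2, h3, h4, h5 | h5⟩ := hp
  · have := b_ne_c (p.1*p.2) 1 (Or.inl rfl) (by rw [h5.1]; norm_num)
      ((ne_one_iff_coe (p.1*p.2)).mpr h5.2)
    unfold T3
    rw [h5.1]
    simpa using this
  · have := b_ne_c (p.1*p.2) (-1) (Or.inr rfl) (by rw [h5.1]; norm_num)
      (by rw [neg_smul, one_smul]; exact h5.2)
    have this2 : ((p.1*p.2 : SL2) : M2) 1 0 - ((p.1*p.2 : SL2) : M2) 0 1 ≠ 0 := by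
      intro h
      exact this (by linarith)
    unfold T3
    rw [h5.1]
    simpa using this2

end Stmt15
end Chunk4

section Chunk5
open Matrix
namespace Stmt15

lemma PS_ne_one (v₀ v₁ t : ℝ) (hv : v₀^2 + v₁^2 = 1) (ht : t ≠ 0) : PS v₀ v₁ t ≠ 1 := by
  intro h
  have h1 : (PS v₀ v₁ t : M2) 0 1 = (1 : M2) 0 1 := by rw [h]; simp
  have h2 : (PS v₀ v₁ t : M2) 1 0 = (1 : M2) 1 0 := by rw [h]; simp
  have e1 : t * v₀^2 = 0 := by simpa [PS, Pm] using h1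
  have e2 : -(t * v₁^2) = 0 := by simpa [PS, Pm] using h2
  apply ht
  have : t * (v₀^2 + v₁^2) = 0 := by linarith
  rwa [hv, mul_one] at this

lemma delta_PS (v₀ v₁ t : ℝ) :
    (PS v₀ v₁ t : M2) 0 1 - (PS v₀ v₁ t : M2) 1 0 = t * (v₀^2 + v₁^2) := by
  show Pm v₀ v₁ t 0 1 - Pm v₀ v₁ t 1 0 = _
  simp [Pm]
  ring

lemma coe_PS_mul (v₀ v₁ w₀ w₁ t₁ t₂ : ℝ) :
    ((PS v₀ v₁ t₁ * PS w₀ w₁ t₂ : SL2) : M2) = Pm v₀ v₁ t₁ * Pm w₀ w₁ t₂ := by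
  rfl

lemma trSL_PS_mul (v₀ v₁ w₀ w₁ t₁ t₂ : ℝ) :
    trSL (PS v₀ v₁ t₁ * PS w₀ w₁ t₂) = 2 - t₁*t₂*(v₀*w₁ - v₁*w₀)^2 := by
  rw [trSL, coe_PS_mul, trace_Pm_mul]

lemma delta_PS_mul (v₀ v₁ w₀ w₁ t₁ t₂ : ℝ) :
    ((PS v₀ v₁ t₁ * PS w₀ w₁ t₂ : SL2) : M2) 0 1 -
    ((PS v₀ v₁ t₁ * PS w₀ w₁ t₂ : SL2) : M2) 1 0 =
      t₁*(v₀^2+v₁^2) + t₂*(w₀^2+w₁^2) + t₁*t₂*(v₀*w₀ + v₁*w₁)*(v₀*w₁ - v₁*w₀) := by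
  rw [coe_PS_mul, delta_Pm_mul]

lemma Pm_neg_vec (v₀ v₁ t : ℝ) : Pm (-v₀) (-v₁) t = Pm v₀ v₁ t := by
  unfold Pm
  congr 1 <;> ring

lemma PS_neg_vec (v₀ v₁ t : ℝ) : PS (-v₀) (-v₁) t = PS v₀ v₁ t :=
  Subtype.ext (Pm_neg_vec v₀ v₁ t)

lemma cont_decide {α : Type*} [TopologicalSpace α] {f : α → ℝ} (hf : Continuous f)
    (hne : ∀ a, f a ≠ 0) : Continuous (fun a => decide (0 < f a)) := by
  have hlc : IsLocallyConstant (fun a => decide (0 < f a)) := by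
    rw [IsLocallyConstant.iff_isOpen_fiber]
    intro b
    cases b
    · have hset : ((fun a => decide (0 < f a)) ⁻¹' {false}) = f ⁻¹' (Set.Iio 0) := by
        ext x
        simp only [Set.mem_preimage, Set.mem_singleton_iff, decide_eq_false_iff_not,
          Set.mem_Iio]
        constructor
        · intro h
          exact lt_of_le_of_ne (not_lt.mp h) (hne x)
        · intro h
          exact not_lt.mpr h.le
      rw [hset]
      exact isOpen_Iio.preimage hf
    · have hset : ((fun a => decide (0 < f a)) ⁻¹' {true}) = f ⁻¹' (Set.Ioi 0) := by
        ext x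
        simp [Set.mem_preimage, Set.mem_Ioi]
      rw [hset]
      exact isOpen_Ioi.preimage hf
  exact hlc.continuous

noncomputable def sgn (p : ↥Yset) : Bool × Bool × Bool :=
  (decide (0 < T1 p.val), decide (0 < T2 p.val), decide (0 < T3 p.val))

lemma cont_sgn : Continuous sgn := by
  refine Continuous.prodMk ?_ (Continuous.prodMk ?_ ?_)
  · exact cont_decide (contT1.comp continuous_subtype_val) (fun p => T1_ne p.val p.property)
  · exact cont_decide (contT2.comp continuous_subtype_val) (fun p => T2_ne p.val p.property)
  · exact cont_decide (contT3.comp continuous_subtype_val) (fun p => T3_ne p.val p.property)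

end Stmt15
end Chunk5

section Chunk6
open Matrix Real
namespace Stmt15

def rs (b : Bool) : ℝ := if b then 1 else -1

lemma rs_sq (b : Bool) : rs b ^ 2 = 1 := by cases b <;> norm_num [rs]
lemma rs_ne (b : Bool) : rs b ≠ 0 := by cases b <;> norm_num [rs]
lemma rs_not (b : Bool) : rs (!b) = -rs b := by cases b <;> norm_num [rs]

lemma sign_iff (b : Bool) (x : ℝ) (hx : x ≠ 0) : decide (0 < x) = b ↔ 0 < rs b * x := by
  rcases lt_or_gt_of_ne hx with h | h
  · have hnot : ¬ (0 < x) := not_lt.mpr h.le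
    cases b <;> simp [rs, hnot] <;> linarith
  · cases b <;> simp [rs, h] <;> linarith

lemma angle_exists (v₀ v₁ : ℝ) (hv : v₀^2 + v₁^2 = 1) :
    ∃ θ : ℝ, Real.cos θ = v₀ ∧ Real.sin θ = v₁ := by
  have hv₀le : -1 ≤ v₀ ∧ v₀ ≤ 1 := by constructor <;> nlinarith [sq_nonneg v₁]
  have hsin : Real.sin (Real.arccos v₀) = Real.sqrt (1 - v₀^2) := Real.sin_arccos v₀
  have h1v : 1 - v₀^2 = v₁^2 := by linarith
  by_cases h : 0 ≤ v₁
  · refine ⟨Real.arccos v₀, Real.cos_arccos hv₀le.1 hv₀le.2, ?_⟩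
    rw [hsin, h1v, Real.sqrt_sq h]
  · refine ⟨-Real.arccos v₀, ?_, ?_⟩
    · rw [Real.cos_neg]; exact Real.cos_arccos hv₀le.1 hv₀le.2
    · rw [Real.sin_neg, hsin, h1v]
      push_neg at h
      rw [Real.sqrt_sq_eq_abs, abs_of_neg h]
      ring

lemma lagrange (v₀ v₁ w₀ w₁ : ℝ) (hv : v₀^2+v₁^2 = 1) (hw : w₀^2+w₁^2 = 1) :
    (v₀*w₀ + v₁*w₁)^2 + (v₀*w₁ - v₁*w₀)^2 = 1 := by
  nlinarith [hv, hw]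

lemma Pm_scale (c v₀ v₁ t : ℝ) (hc : c^2 = 1) : Pm (c*v₀) (c*v₁) t = Pm v₀ v₁ t := by
  have : c = 1 ∨ c = -1 := by
    rcases mul_eq_zero.mp (show (c-1)*(c+1) = 0 by linear_combination hc) with h | h
    · left; linarith
    · right; linarith
  rcases this with h | h
  · rw [h]; congr 1 <;> ring
  · rw [h]
    have h1 : (-1 : ℝ) * v₀ = -v₀ := by ring
    have h2 : (-1 : ℝ) * v₁ = -v₁ := by ring
    rw [h1, h2, Pm_neg_vec]

lemma PS_scale (c v₀ v₁ t : ℝ) (hc : c^2 = 1) : PS (c*v₀) (c*v₁) t = PS v₀ v₁ t :=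
  Subtype.ext (Pm_scale c v₀ v₁ t hc)

lemma classify_same (p : SL2 × SL2) (hp : p ∈ Yset) (htr2 : trSL (p.1*p.2) = 2) :
    ∃ v₀ v₁ t₁ t₂ : ℝ, v₀^2+v₁^2 = 1 ∧ t₁ ≠ 0 ∧ t₂ ≠ 0 ∧ t₁+t₂ ≠ 0 ∧
      p.1 = PS v₀ v₁ t₁ ∧ p.2 = PS v₀ v₁ t₂ ∧
      T1 p = t₁ ∧ T2 p = t₂ ∧ T3 p = t₁+t₂ := by
  obtain ⟨hA, hA1, hB, hB1, hdisj⟩ := hp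
  obtain ⟨v₀, v₁, t₁, hv, ht₁, hPA, hT1⟩ := parabolic_decomp p.1 hA hA1
  obtain ⟨w₀, w₁, t₂, hw, ht₂, hPB, hT2⟩ := parabolic_decomp p.2 hB hB1
  have htr' : trSL (p.1 * p.2) = 2 - t₁*t₂*(v₀*w₁ - v₁*w₀)^2 := by
    rw [hPA, hPB, trSL_PS_mul]
  have hd0 : v₀*w₁ - v₁*w₀ = 0 := by
    have : t₁*t₂*(v₀*w₁ - v₁*w₀)^2 = 0 := by rw [htr2] at htr'; linarith
    have h2 : (v₀*w₁ - v₁*w₀)^2 = 0 := by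
      rcases mul_eq_zero.mp this with h | h
      · exact absurd h (mul_ne_zero ht₁ ht₂)
      · exact h
    exact pow_eq_zero_iff (n := 2) (by norm_num) |>.mp h2
  set c := v₀*w₀ + v₁*w₁ with hcdef
  have hc2 : c^2 = 1 := by
    have := lagrange v₀ v₁ w₀ w₁ hv hw
    rw [hd0] at this
    simpa using this
  have hw₀ : w₀ = c*v₀ := by rw [hcdef]; linear_combination (-w₀) * hv + (-v₁) * hd0
  have hw₁ : w₁ = c*v₁ := by rw [hcdef]; linear_combination (-w₁) * hv + v₀ * hd0
  have hPB' : p.2 = PS v₀ v₁ t₂ := by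
    rw [hPB, hw₀, hw₁]
    exact PS_scale c v₀ v₁ t₂ hc2
  have hmul : p.1 * p.2 = PS v₀ v₁ (t₁ + t₂) := by
    rw [hPA, hPB', PS_mul_same]
  have hsum : t₁ + t₂ ≠ 0 := by
    intro h0
    rcases hdisj with ⟨_, hne⟩ | ⟨htr'', _⟩
    · apply hne
      rw [hmul, h0]
      apply Subtype.ext
      show Pm v₀ v₁ 0 = (1 : M2)
      unfold Pm
      rw [Matrix.one_fin_two]
      congr 1 <;> ring
    · rw [htr2] at htr''; norm_num at htr''
  refine ⟨v₀, v₁, t₁, t₂, hv, ht₁, ht₂, hsum, hPA, hPB', ?_, ?_, ?_⟩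
  · rw [T1, ← hT1]
  · rw [T2, ← hT2]
  · rw [T3, hmul, trSL_PS v₀ v₁ (t₁+t₂) hv, delta_PS, hv]
    ring

lemma classify_dist (p : SL2 × SL2) (hp : p ∈ Yset) (htr2 : trSL (p.1*p.2) = -2) :
    ∃ v₀ v₁ w₀ w₁ t₁ t₂ : ℝ, v₀^2+v₁^2 = 1 ∧ w₀^2+w₁^2 = 1 ∧
      p.1 = PS v₀ v₁ t₁ ∧ p.2 = PS w₀ w₁ t₂ ∧
      T1 p = t₁ ∧ T2 p = t₂ ∧ 0 < v₀*w₁ - v₁*w₀ ∧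
      t₁*t₂*(v₀*w₁ - v₁*w₀)^2 = 4 ∧
      T3 p = -(t₁ + t₂ + t₁*t₂*(v₀*w₀ + v₁*w₁)*(v₀*w₁ - v₁*w₀)) := by
  obtain ⟨hA, hA1, hB, hB1, hdisj⟩ := hp
  obtain ⟨v₀, v₁, t₁, hv, ht₁, hPA, hT1⟩ := parabolic_decomp p.1 hA hA1
  obtain ⟨w₀', w₁', t₂, hw', ht₂, hPB', hT2⟩ := parabolic_decomp p.2 hB hB1
  -- normalize sign of d
  have key : ∀ w₀ w₁ : ℝ, w₀^2+w₁^2 = 1 → p.2 = PS w₀ w₁ t₂ → 0 < v₀*w₁ - v₁*w₀ →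
      ∃ v₀' v₁' w₀'' w₁'' t₁' t₂' : ℝ, v₀'^2+v₁'^2 = 1 ∧ w₀''^2+w₁''^2 = 1 ∧
      p.1 = PS v₀' v₁' t₁' ∧ p.2 = PS w₀'' w₁'' t₂' ∧
      T1 p = t₁' ∧ T2 p = t₂' ∧ 0 < v₀'*w₁'' - v₁'*w₀'' ∧
      t₁'*t₂'*(v₀'*w₁'' - v₁'*w₀'')^2 = 4 ∧
      T3 p = -(t₁' + t₂' + t₁'*t₂'*(v₀'*w₀'' + v₁'*w₁'')*(v₀'*w₁'' - v₁'*w₀'')) := by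
    intro w₀ w₁ hw hPB hdpos
    have htr' : trSL (p.1 * p.2) = 2 - t₁*t₂*(v₀*w₁ - v₁*w₀)^2 := by
      rw [hPA, hPB, trSL_PS_mul]
    have h4 : t₁*t₂*(v₀*w₁ - v₁*w₀)^2 = 4 := by rw [htr2] at htr'; linarith
    refine ⟨v₀, v₁, w₀, w₁, t₁, t₂, hv, hw, hPA, hPB, by rw [T1, ← hT1],
      by rw [T2, ← hT2], hdpos, h4, ?_⟩
    rw [T3, htr2, hPA, hPB, delta_PS_mul, hv, hw]
    ring
  have hd : v₀*w₁' - v₁*w₀' ≠ 0 := by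
    intro h0
    have htr' : trSL (p.1 * p.2) = 2 - t₁*t₂*(v₀*w₁' - v₁*w₀')^2 := by
      rw [hPA, hPB', trSL_PS_mul]
    rw [h0, htr2] at htr'
    norm_num at htr'
  rcases lt_or_gt_of_ne hd with h | h
  · have hwneg : w₀'^2 + w₁'^2 = 1 → ((-w₀')^2 + (-w₁')^2 = 1) := by intro hh; nlinarith
    have := key (-w₀') (-w₁') (hwneg hw') (by rw [hPB', PS_neg_vec]) (by nlinarith)
    obtain ⟨a,b,c,d,e,f,h1,h2,h3,h4,h5,h6,h7,h8,h9⟩ := this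
    exact ⟨a,b,c,d,e,f,h1,h2,h3,h4,h5,h6,h7,h8,h9⟩
  · exact key w₀' w₁' hw' hPB' h

end Stmt15
end Chunk6

section Chunk7
open Matrix Real
namespace Stmt15

noncomputable def Phis : ℝ × ℝ × ℝ → SL2 × SL2 := fun z =>
  (PS (Real.cos z.1) (Real.sin z.1) z.2.1, PS (Real.cos z.1) (Real.sin z.1) z.2.2)

noncomputable def Phid : ℝ × ℝ × ℝ → SL2 × SL2 := fun z =>
  (PS (Real.cos z.1) (Real.sin z.1) z.2.1,
   PS ((z.2.2 * Real.cos z.1 - Real.sin z.1)/Real.sqrt (1+z.2.2^2))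
      ((z.2.2 * Real.sin z.1 + Real.cos z.1)/Real.sqrt (1+z.2.2^2))
      (4*(1+z.2.2^2)/z.2.1))

def Zs (b₁ b₂ b₃ : Bool) : Set (ℝ×ℝ×ℝ) :=
  {z | 0 < rs b₁ * z.2.1 ∧ 0 < rs b₂ * z.2.2 ∧ 0 < rs b₃ * (z.2.1 + z.2.2)}

def Zd (b : Bool) : Set (ℝ×ℝ×ℝ) := {z | 0 < rs b * z.2.1}

lemma combo_pos {a b u v : ℝ} (ha : 0 ≤ a) (hb : 0 ≤ b) (hab : a + b = 1)
    (hu : 0 < u) (hv : 0 < v) : 0 < a*u + b*v := by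
  rcases eq_or_lt_of_le ha with h | h
  · have hb1 : b = 1 := by linarith
    rw [← h, hb1]; simpa using hv
  · have : 0 ≤ b * v := mul_nonneg hb hv.le
    nlinarith

lemma Zs_convex (b₁ b₂ b₃ : Bool) : Convex ℝ (Zs b₁ b₂ b₃) := by
  intro x hx y hy a b ha hb hab
  obtain ⟨hx1, hx2, hx3⟩ := hx
  obtain ⟨hy1, hy2, hy3⟩ := hy
  refine ⟨?_, ?_, ?_⟩
  · show 0 < rs b₁ * (a * x.2.1 + b * y.2.1)
    have := combo_pos ha hb hab hx1 hy1
    calc (0:ℝ) < a * (rs b₁ * x.2.1) + b * (rs b₁ * y.2.1) := this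
    _ = rs b₁ * (a * x.2.1 + b * y.2.1) := by ring
  · show 0 < rs b₂ * (a * x.2.2 + b * y.2.2)
    have := combo_pos ha hb hab hx2 hy2
    calc (0:ℝ) < a * (rs b₂ * x.2.2) + b * (rs b₂ * y.2.2) := this
    _ = rs b₂ * (a * x.2.2 + b * y.2.2) := by ring
  · show 0 < rs b₃ * ((a * x.2.1 + b * y.2.1) + (a * x.2.2 + b * y.2.2))
    have := combo_pos ha hb hab hx3 hy3
    calc (0:ℝ) < a * (rs b₃ * (x.2.1 + x.2.2)) + b * (rs b₃ * (y.2.1 + y.2.2)) := this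
    _ = rs b₃ * ((a * x.2.1 + b * y.2.1) + (a * x.2.2 + b * y.2.2)) := by ring

lemma Zd_convex (b : Bool) : Convex ℝ (Zd b) := by
  intro x hx y hy a b' ha hb hab
  show 0 < rs b * (a * x.2.1 + b' * y.2.1)
  have := combo_pos ha hb hab hx hy
  calc (0:ℝ) < a * (rs b * x.2.1) + b' * (rs b * y.2.1) := this
  _ = rs b * (a * x.2.1 + b' * y.2.1) := by ring

lemma continuousOn_PS_comp {α : Type*} [TopologicalSpace α] {f g h : α → ℝ} {s : Set α}
    (hf : ContinuousOn f s) (hg : ContinuousOn g s) (hh : ContinuousOn h s) :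
    ContinuousOn (fun x => PS (f x) (g x) (h x)) s := by
  refine Topology.IsInducing.subtypeVal.continuousOn_iff.mpr ?_
  show ContinuousOn (fun x => Pm (f x) (g x) (h x)) s
  refine continuousOn_pi.mpr fun i => continuousOn_pi.mpr fun j => ?_
  fin_cases i <;> fin_cases j
  · show ContinuousOn (fun x => 1 - h x * f x * g x) s
    exact continuousOn_const.sub ((hh.mul hf).mul hg)
  · show ContinuousOn (fun x => h x * f x ^ 2) s
    exact hh.mul (hf.pow 2)
  · show ContinuousOn (fun x => -(h x * g x ^ 2)) s
    exact (hh.mul (hg.pow 2)).neg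
  · show ContinuousOn (fun x => 1 + h x * f x * g x) s
    exact continuousOn_const.add ((hh.mul hf).mul hg)

lemma continuousOn_Phis : ContinuousOn Phis Set.univ := by
  apply ContinuousOn.prodMk
  · exact continuousOn_PS_comp (Real.continuous_cos.comp continuous_fst).continuousOn
      (Real.continuous_sin.comp continuous_fst).continuousOn
      (continuous_fst.comp continuous_snd).continuousOn
  · exact continuousOn_PS_comp (Real.continuous_cos.comp continuous_fst).continuousOn
      (Real.continuous_sin.comp continuous_fst).continuousOn
      (continuous_snd.comp continuous_snd).continuousOn

lemma sqrt_one_add_sq_pos (u : ℝ) : 0 < Real.sqrt (1 + u^2) :=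
  Real.sqrt_pos.mpr (by positivity)

lemma continuousOn_Phid (b : Bool) : ContinuousOn Phid (Zd b) := by
  have ht₁ : ∀ z ∈ Zd b, z.2.1 ≠ 0 := by
    intro z hz h0
    have : (0:ℝ) < rs b * z.2.1 := hz
    rw [h0, mul_zero] at this
    exact lt_irrefl 0 this
  have hcos : ContinuousOn (fun z : ℝ×ℝ×ℝ => Real.cos z.1) (Zd b) :=
    (Real.continuous_cos.comp continuous_fst).continuousOn
  have hsin : ContinuousOn (fun z : ℝ×ℝ×ℝ => Real.sin z.1) (Zd b) :=
    (Real.continuous_sin.comp continuous_fst).continuousOn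
  have hu : Continuous (fun z : ℝ×ℝ×ℝ => z.2.2) := continuous_snd.comp continuous_snd
  have ht : Continuous (fun z : ℝ×ℝ×ℝ => z.2.1) := continuous_fst.comp continuous_snd
  have hsq : Continuous (fun z : ℝ×ℝ×ℝ => Real.sqrt (1 + z.2.2^2)) :=
    Real.continuous_sqrt.comp (continuous_const.add (hu.pow 2))
  have hsqne : ∀ z : ℝ×ℝ×ℝ, Real.sqrt (1 + z.2.2^2) ≠ 0 :=
    fun z => (sqrt_one_add_sq_pos z.2.2).ne'
  apply ContinuousOn.prodMk
  · exact continuousOn_PS_comp hcos hsin ht.continuousOn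
  · apply continuousOn_PS_comp
    · exact ((hu.mul (Real.continuous_cos.comp continuous_fst)).sub
        (Real.continuous_sin.comp continuous_fst)).continuousOn.div
          hsq.continuousOn (fun z _ => hsqne z)
    · exact ((hu.mul (Real.continuous_sin.comp continuous_fst)).add
        (Real.continuous_cos.comp continuous_fst)).continuousOn.div
          hsq.continuousOn (fun z _ => hsqne z)
    · exact (continuous_const.mul (continuous_const.add (hu.pow 2))).continuousOn.div
        ht.continuousOn ht₁

end Stmt15
end Chunk7

section Chunk8
open Matrix Real
namespace Stmt15

lemma sign_ne {b : Bool} {x : ℝ} (h : 0 < rs b * x) : x ≠ 0 := by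
  intro h0
  rw [h0, mul_zero] at h
  exact lt_irrefl _ h

lemma T1_pair (v₀ v₁ t : ℝ) (B : SL2) (hv : v₀^2+v₁^2 = 1) : T1 (PS v₀ v₁ t, B) = t := by
  show (PS v₀ v₁ t : M2) 0 1 - (PS v₀ v₁ t : M2) 1 0 = t
  rw [delta_PS, hv, mul_one]

lemma T2_pair (v₀ v₁ t : ℝ) (B : SL2) (hv : v₀^2+v₁^2 = 1) : T2 (B, PS v₀ v₁ t) = t := by
  show (PS v₀ v₁ t : M2) 0 1 - (PS v₀ v₁ t : M2) 1 0 = t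
  rw [delta_PS, hv, mul_one]

lemma T3_same (v₀ v₁ t₁ t₂ : ℝ) (hv : v₀^2+v₁^2 = 1) :
    T3 (PS v₀ v₁ t₁, PS v₀ v₁ t₂) = t₁ + t₂ := by
  show (trSL (PS v₀ v₁ t₁ * PS v₀ v₁ t₂)/2) * _ = _
  rw [PS_mul_same, trSL_PS _ _ _ hv, delta_PS, hv, mul_one]
  ring

lemma T3_dist (v₀ v₁ w₀ w₁ t₁ t₂ : ℝ) (hv : v₀^2+v₁^2 = 1) (hw : w₀^2+w₁^2 = 1)
    (h4 : t₁*t₂*(v₀*w₁ - v₁*w₀)^2 = 4) :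
    T3 (PS v₀ v₁ t₁, PS w₀ w₁ t₂) =
      -(t₁ + t₂ + t₁*t₂*(v₀*w₀ + v₁*w₁)*(v₀*w₁ - v₁*w₀)) := by
  show (trSL (PS v₀ v₁ t₁ * PS w₀ w₁ t₂)/2) * _ = _
  rw [trSL_PS_mul, delta_PS_mul, hv, hw, h4]
  ring

lemma mem_Yset_same (v₀ v₁ t₁ t₂ : ℝ) (hv : v₀^2+v₁^2 = 1) (ht₁ : t₁ ≠ 0) (ht₂ : t₂ ≠ 0)
    (hsum : t₁ + t₂ ≠ 0) : (PS v₀ v₁ t₁, PS v₀ v₁ t₂) ∈ Yset := by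
  refine ⟨trSL_PS _ _ _ hv, PS_ne_one _ _ _ hv ht₁, trSL_PS _ _ _ hv, PS_ne_one _ _ _ hv ht₂,
    Or.inl ⟨?_, ?_⟩⟩
  · show trSL (PS v₀ v₁ t₁ * PS v₀ v₁ t₂) = 2
    rw [PS_mul_same]
    exact trSL_PS _ _ _ hv
  · show PS v₀ v₁ t₁ * PS v₀ v₁ t₂ ≠ 1
    rw [PS_mul_same]
    exact PS_ne_one _ _ _ hv hsum

lemma mem_Yset_dist (v₀ v₁ w₀ w₁ t₁ t₂ : ℝ) (hv : v₀^2+v₁^2 = 1) (hw : w₀^2+w₁^2 = 1)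
    (ht₁ : t₁ ≠ 0) (ht₂ : t₂ ≠ 0) (h4 : t₁*t₂*(v₀*w₁ - v₁*w₀)^2 = 4)
    (hδ : t₁ + t₂ + t₁*t₂*(v₀*w₀ + v₁*w₁)*(v₀*w₁ - v₁*w₀) ≠ 0) :
    (PS v₀ v₁ t₁, PS w₀ w₁ t₂) ∈ Yset := by
  refine ⟨trSL_PS _ _ _ hv, PS_ne_one _ _ _ hv ht₁, trSL_PS _ _ _ hw, PS_ne_one _ _ _ hw ht₂,
    Or.inr ⟨?_, ?_⟩⟩
  · show trSL (PS v₀ v₁ t₁ * PS w₀ w₁ t₂) = -2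
    rw [trSL_PS_mul, h4]
    norm_num
  · show ((PS v₀ v₁ t₁ * PS w₀ w₁ t₂ : SL2) : M2) ≠ -1
    intro h
    apply hδ
    have hd := delta_PS_mul v₀ v₁ w₀ w₁ t₁ t₂
    rw [h, hv, hw] at hd
    have h01 : (-1 : M2) 0 1 = 0 := by simp
    have h10 : (-1 : M2) 1 0 = 0 := by simp
    rw [h01, h10] at hd
    rw [mul_one, mul_one] at hd
    linarith

def G (b : Bool×Bool×Bool) : Set (SL2×SL2) :=
  {p | p ∈ Yset ∧ 0 < rs b.1 * T1 p ∧ 0 < rs b.2.1 * T2 p ∧ 0 < rs b.2.2 * T3 p}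

lemma val_F_eq_G (b : Bool×Bool×Bool) :
    (Subtype.val '' (sgn ⁻¹' {b} : Set ↥Yset)) = G b := by
  ext p
  constructor
  · rintro ⟨⟨q, hq⟩, hmem, rfl⟩
    simp only [Set.mem_preimage, Set.mem_singleton_iff] at hmem
    have h1 := congrArg Prod.fst hmem
    have h2 := congrArg (fun x => x.2.1) hmem
    have h3 := congrArg (fun x => x.2.2) hmem
    simp only [sgn] at h1 h2 h3
    exact ⟨hq, (sign_iff _ _ (T1_ne q hq)).mp h1, (sign_iff _ _ (T2_ne q hq)).mp h2,
      (sign_iff _ _ (T3_ne q hq)).mp h3⟩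
  · rintro ⟨hp, h1, h2, h3⟩
    refine ⟨⟨p, hp⟩, ?_, rfl⟩
    simp only [Set.mem_preimage, Set.mem_singleton_iff, sgn]
    have e1 := (sign_iff b.1 _ (T1_ne p hp)).mpr h1
    have e2 := (sign_iff b.2.1 _ (T2_ne p hp)).mpr h2
    have e3 := (sign_iff b.2.2 _ (T3_ne p hp)).mpr h3
    rw [e1, e2, e3]

end Stmt15
end Chunk8

section Chunk9
open Matrix Real
namespace Stmt15

lemma unit_cs (θ : ℝ) : Real.cos θ ^ 2 + Real.sin θ ^ 2 = 1 := by
  have := Real.sin_sq_add_cos_sq θ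
  linarith

lemma same_signs_of_pos_prod {b₁ b₂ : Bool} {t₁ t₂ : ℝ} (h1 : 0 < rs b₁ * t₁)
    (h2 : 0 < rs b₂ * t₂) (h : 0 < t₁ * t₂) : b₁ = b₂ := by
  cases b₁ <;> cases b₂ <;> simp [rs] at h1 h2 <;> first | rfl | nlinarith

lemma G_eq_same (b₁ b₂ b₃ : Bool) (hcompat : b₁ = b₂ → b₃ = b₁) :
    G (b₁, b₂, b₃) = Phis '' (Zs b₁ b₂ b₃) := by
  ext p
  constructor
  · rintro ⟨hp, h1, h2, h3⟩
    rcases hp.2.2.2.2 with hcase | hcase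
    · -- trace 2 : same fixed point
      obtain ⟨v₀, v₁, t₁, t₂, hv, ht₁, ht₂, hsum, hPA, hPB, hT1, hT2, hT3⟩ :=
        classify_same p hp hcase.1
      obtain ⟨θ, hθc, hθs⟩ := angle_exists v₀ v₁ hv
      refine ⟨(θ, t₁, t₂), ⟨?_, ?_, ?_⟩, ?_⟩
      · show 0 < rs b₁ * t₁
        rw [← hT1]; exact h1
      · show 0 < rs b₂ * t₂
        rw [← hT2]; exact h2
      · show 0 < rs b₃ * (t₁ + t₂)
        rw [← hT3]; exact h3
      · show (PS (Real.cos θ) (Real.sin θ) t₁, PS (Real.cos θ) (Real.sin θ) t₂) = p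
        rw [hθc, hθs]
        exact Prod.ext hPA.symm hPB.symm
    · -- trace -2 : impossible given compat
      exfalso
      obtain ⟨v₀, v₁, w₀, w₁, t₁, t₂, hv, hw, hPA, hPB, hT1, hT2, hdpos, h4, hT3⟩ :=
        classify_dist p hp hcase.1
      have hprodpos : 0 < t₁ * t₂ := by
        have hd2 : 0 < (v₀*w₁ - v₁*w₀)^2 := by positivity
        nlinarith
      have hb12 : b₁ = b₂ := by
        rw [hT1] at h1; rw [hT2] at h2
        exact same_signs_of_pos_prod h1 h2 hprodpos
      have hb3 : b₃ = b₁ := hcompat hb12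
      have hcd : (v₀*w₀ + v₁*w₁)^2 + (v₀*w₁ - v₁*w₀)^2 = 1 := lagrange v₀ v₁ w₀ w₁ hv hw
      rw [hT1] at h1
      rw [hT3] at h3
      rw [hb3] at h3
      cases b₁
      · -- negative: t₁ < 0, t₂ < 0, δ < 0, so T3 > 0, but rs false * T3 > 0 means T3 < 0
        simp [rs] at h1 h3
        have ht₂neg : t₂ < 0 := by nlinarith
        have := key_neg t₁ t₂ (v₀*w₀ + v₁*w₁) (v₀*w₁ - v₁*w₀) h1 ht₂neg h4 hcd
        linarith
      · simp [rs] at h1 h3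
        have ht₂pos : 0 < t₂ := by nlinarith
        have := key_pos t₁ t₂ (v₀*w₀ + v₁*w₁) (v₀*w₁ - v₁*w₀) h1 ht₂pos h4 hcd
        linarith
  · rintro ⟨z, ⟨hz1, hz2, hz3⟩, rfl⟩
    have hv := unit_cs z.1
    have ht₁ : z.2.1 ≠ 0 := sign_ne hz1
    have ht₂ : z.2.2 ≠ 0 := sign_ne hz2
    have hsum : z.2.1 + z.2.2 ≠ 0 := sign_ne hz3
    refine ⟨mem_Yset_same _ _ _ _ hv ht₁ ht₂ hsum, ?_, ?_, ?_⟩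
    · show 0 < rs b₁ * T1 (Phis z)
      rw [show T1 (Phis z) = z.2.1 from T1_pair _ _ _ _ hv]
      exact hz1
    · show 0 < rs b₂ * T2 (Phis z)
      rw [show T2 (Phis z) = z.2.2 from T2_pair _ _ _ _ hv]
      exact hz2
    · show 0 < rs b₃ * T3 (Phis z)
      rw [show T3 (Phis z) = z.2.1 + z.2.2 from T3_same _ _ _ _ hv]
      exact hz3

end Stmt15
end Chunk9

section Chunk10
open Matrix Real
namespace Stmt15

lemma G_eq_dist (b : Bool) : G (b, b, !b) = Phid '' (Zd b) := by
  ext p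
  constructor
  · rintro ⟨hp, h1, h2, h3⟩
    rcases hp.2.2.2.2 with hcase | hcase
    · -- trace 2 : impossible
      exfalso
      obtain ⟨v₀, v₁, t₁, t₂, hv, ht₁, ht₂, hsum, hPA, hPB, hT1, hT2, hT3⟩ :=
        classify_same p hp hcase.1
      rw [hT1] at h1; rw [hT2] at h2; rw [hT3, rs_not] at h3
      have : 0 < rs b * (t₁ + t₂) := by
        have e1 : rs b * t₁ > 0 := h1
        have e2 : rs b * t₂ > 0 := h2
        calc (0:ℝ) < rs b * t₁ + rs b * t₂ := by linarith
        _ = rs b * (t₁ + t₂) := by ring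
      linarith
    · obtain ⟨v₀, v₁, w₀, w₁, t₁, t₂, hv, hw, hPA, hPB, hT1, hT2, hdpos, h4, hT3⟩ :=
        classify_dist p hp hcase.1
      obtain ⟨θ, hθc, hθs⟩ := angle_exists v₀ v₁ hv
      obtain ⟨c, hcdef⟩ : ∃ c : ℝ, c = v₀*w₀ + v₁*w₁ := ⟨_, rfl⟩
      obtain ⟨d, hddef⟩ : ∃ d : ℝ, d = v₀*w₁ - v₁*w₀ := ⟨_, rfl⟩
      rw [← hddef] at hdpos h4
      have hcd : c^2 + d^2 = 1 := by
        rw [hcdef, hddef]; exact lagrange v₀ v₁ w₀ w₁ hv hw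
      obtain ⟨u, hudef⟩ : ∃ u : ℝ, u = c / d := ⟨_, rfl⟩
      have hd0 : d ≠ 0 := ne_of_gt hdpos
      have ht₁0 : t₁ ≠ 0 := by
        intro h0
        rw [h0] at h4
        norm_num at h4
      have h1u : 1 + u^2 = 1/d^2 := by
        rw [hudef]
        field_simp
        linarith
      have hsqrt : Real.sqrt (1 + u^2) = 1/d := by
        rw [h1u, show (1:ℝ)/d^2 = (1/d)^2 by ring]
        exact Real.sqrt_sq (by positivity)
      refine ⟨(θ, t₁, u), ?_, ?_⟩
      · show 0 < rs b * t₁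
        rw [← hT1]; exact h1
      · show (PS (Real.cos θ) (Real.sin θ) t₁,
          PS ((u * Real.cos θ - Real.sin θ)/Real.sqrt (1+u^2))
             ((u * Real.sin θ + Real.cos θ)/Real.sqrt (1+u^2))
             (4*(1+u^2)/t₁)) = p
        rw [hθc, hθs, hsqrt]
        have hw₀' : w₀ = c*v₀ - d*v₁ := by
          rw [hcdef, hddef]; linear_combination (-w₀) * hv
        have hw₁' : w₁ = c*v₁ + d*v₀ := by
          rw [hcdef, hddef]; linear_combination (-w₁) * hv
        have hw₀ : (u * v₀ - v₁)/(1/d) = w₀ := by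
          rw [hudef, hw₀']
          field_simp
        have hw₁ : (u * v₁ + v₀)/(1/d) = w₁ := by
          rw [hudef, hw₁']
          field_simp
        have ht₂eq : 4*(1+u^2)/t₁ = t₂ := by
          rw [h1u]
          field_simp
          linear_combination -h4
        rw [hw₀, hw₁, ht₂eq]
        exact Prod.ext hPA.symm hPB.symm
  · rintro ⟨z, hz, rfl⟩
    obtain ⟨θ, t₁, u⟩ := z
    have hz' : 0 < rs b * t₁ := hz
    have ht₁0 : t₁ ≠ 0 := sign_ne hz'
    have hv := unit_cs θ
    set s := Real.sqrt (1 + u^2) with hsdef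
    have hs_pos : 0 < s := sqrt_one_add_sq_pos u
    have hs0 : s ≠ 0 := ne_of_gt hs_pos
    have hs2 : s^2 = 1 + u^2 := Real.sq_sqrt (by positivity)
    set v₀ := Real.cos θ
    set v₁ := Real.sin θ
    set w₀ := (u * v₀ - v₁)/s with hw₀def
    set w₁ := (u * v₁ + v₀)/s with hw₁def
    set t₂ := 4*(1+u^2)/t₁ with ht₂def
    have hw : w₀^2 + w₁^2 = 1 := by
      rw [hw₀def, hw₁def]
      field_simp
      nlinarith [hv, hs2]
    have hd : v₀*w₁ - v₁*w₀ = 1/s := by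
      rw [hw₀def, hw₁def]
      field_simp
      linarith [hv]
    have hc : v₀*w₀ + v₁*w₁ = u/s := by
      rw [hw₀def, hw₁def]
      field_simp
      linear_combination u * hv
    have ht₂0 : t₂ ≠ 0 := by
      rw [ht₂def]
      apply div_ne_zero _ ht₁0
      positivity
    have h4 : t₁ * t₂ * (v₀*w₁ - v₁*w₀)^2 = 4 := by
      rw [hd, ht₂def]
      field_simp
      ring_nf
      nlinarith [hs2]
    have hcd : (v₀*w₀ + v₁*w₁)^2 + (v₀*w₁ - v₁*w₀)^2 = 1 := lagrange v₀ v₁ w₀ w₁ hv hw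
    have ht₂sign : 0 < rs b * t₂ := by
      rw [ht₂def]
      have : rs b * (4*(1+u^2)/t₁) = 4*(1+u^2) * (rs b * t₁) / t₁^2 := by
        field_simp
      rw [this]
      positivity
    have hδ : 0 < rs b * (t₁ + t₂ + t₁*t₂*(v₀*w₀ + v₁*w₁)*(v₀*w₁ - v₁*w₀)) := by
      cases b
      · simp only [rs, if_false, Bool.false_eq_true]
        have h1' : t₁ < 0 := by
          have : rs false * t₁ > 0 := hz'
          simp [rs] at this
          linarith
        have h2' : t₂ < 0 := by
          have := ht₂sign
          simp [rs] at this
          linarith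
        have := key_neg t₁ t₂ (v₀*w₀ + v₁*w₁) (v₀*w₁ - v₁*w₀) h1' h2' h4 hcd
        linarith
      · simp only [rs, if_true]
        have h1' : 0 < t₁ := by
          have : rs true * t₁ > 0 := hz'
          simp [rs] at this
          linarith
        have h2' : 0 < t₂ := by
          have := ht₂sign
          simp [rs] at this
          linarith
        have := key_pos t₁ t₂ (v₀*w₀ + v₁*w₁) (v₀*w₁ - v₁*w₀) h1' h2' h4 hcd
        linarith
    have hδ0 : t₁ + t₂ + t₁*t₂*(v₀*w₀ + v₁*w₁)*(v₀*w₁ - v₁*w₀) ≠ 0 := sign_ne hδ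
    refine ⟨mem_Yset_dist v₀ v₁ w₀ w₁ t₁ t₂ hv hw ht₁0 ht₂0 h4 hδ0, ?_, ?_, ?_⟩
    · show 0 < rs b * T1 (PS v₀ v₁ t₁, PS w₀ w₁ t₂)
      rw [T1_pair _ _ _ _ hv]
      exact hz'
    · show 0 < rs b * T2 (PS v₀ v₁ t₁, PS w₀ w₁ t₂)
      rw [T2_pair _ _ _ _ hw]
      exact ht₂sign
    · show 0 < rs (!b) * T3 (PS v₀ v₁ t₁, PS w₀ w₁ t₂)
      rw [T3_dist _ _ _ _ _ _ hv hw h4, rs_not]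
      calc (0:ℝ) < rs b * (t₁ + t₂ + t₁*t₂*(v₀*w₀ + v₁*w₁)*(v₀*w₁ - v₁*w₀)) := hδ
      _ = -rs b * -(t₁ + t₂ + t₁*t₂*(v₀*w₀ + v₁*w₁)*(v₀*w₁ - v₁*w₀)) := by ring

end Stmt15
end Chunk10

section Chunk11
open Matrix Real
namespace Stmt15

lemma G_preconnected (b : Bool×Bool×Bool) : IsPreconnected (G b) := by
  obtain ⟨b₁, b₂, b₃⟩ := b
  by_cases hd : b₁ = b₂ ∧ b₃ ≠ b₁
  · have hb2 : b₂ = b₁ := hd.1.symm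
    have hb3 : b₃ = !b₁ := by
      cases b₁ <;> cases b₃ <;> simp_all
    rw [hb2, hb3, G_eq_dist]
    exact ((Zd_convex b₁).isPreconnected).image _ (continuousOn_Phid b₁)
  · have hcompat : b₁ = b₂ → b₃ = b₁ := by
      intro h12
      by_contra h3
      exact hd ⟨h12, h3⟩
    rw [G_eq_same b₁ b₂ b₃ hcompat]
    exact ((Zs_convex b₁ b₂ b₃).isPreconnected).image _
      (continuousOn_Phis.mono (Set.subset_univ _))

lemma rs_mul_self (b : Bool) : rs b * rs b = 1 := by cases b <;> norm_num [rs]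

lemma G_nonempty (b : Bool×Bool×Bool) : (G b).Nonempty := by
  obtain ⟨b₁, b₂, b₃⟩ := b
  by_cases hd : b₁ = b₂ ∧ b₃ ≠ b₁
  · have hb2 : b₂ = b₁ := hd.1.symm
    have hb3 : b₃ = !b₁ := by
      cases b₁ <;> cases b₃ <;> simp_all
    rw [hb2, hb3, G_eq_dist]
    refine ⟨Phid (0, rs b₁, 0), Set.mem_image_of_mem _ ?_⟩
    show 0 < rs b₁ * rs b₁
    rw [rs_mul_self]
    norm_num
  · have hcompat : b₁ = b₂ → b₃ = b₁ := by
      intro h12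
      by_contra h3
      exact hd ⟨h12, h3⟩
    rw [G_eq_same b₁ b₂ b₃ hcompat]
    refine ⟨Phis (0, (if b₃ = b₁ then 2 else 1) * rs b₁, (if b₃ = b₂ then 2 else 1) * rs b₂),
      Set.mem_image_of_mem _ ?_⟩
    refine ⟨?_, ?_, ?_⟩ <;>
      cases b₁ <;> cases b₂ <;> cases b₃ <;> simp_all [rs] <;> norm_num
end Stmt15
end Chunk11

section Chunk12
open Matrix Real
namespace Stmt15

lemma F_preconnected (b : Bool×Bool×Bool) : IsPreconnected (sgn ⁻¹' {b} : Set ↥Yset) := by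
  have := G_preconnected b
  rw [← val_F_eq_G] at this
  exact Topology.IsInducing.subtypeVal.isPreconnected_image.mp this

lemma F_nonempty (b : Bool×Bool×Bool) : (sgn ⁻¹' {b} : Set ↥Yset).Nonempty := by
  have := G_nonempty b
  rw [← val_F_eq_G] at this
  exact (Set.image_nonempty).mp this

lemma card_CC_Yset : Nat.card (ConnectedComponents ↥Yset) = 8 := by
  have hbij : Function.Bijective cont_sgn.connectedComponentsLift := by
    constructor
    · intro a₁ a₂ h
      obtain ⟨x, rfl⟩ := ConnectedComponents.surjective_coe a₁
      obtain ⟨y, rfl⟩ := ConnectedComponents.surjective_coe a₂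
      rw [Continuous.connectedComponentsLift_apply_coe,
        Continuous.connectedComponentsLift_apply_coe] at h
      rw [ConnectedComponents.coe_eq_coe']
      have hy : y ∈ (sgn ⁻¹' {sgn y} : Set ↥Yset) := rfl
      have hx : x ∈ (sgn ⁻¹' {sgn y} : Set ↥Yset) := by
        simp only [Set.mem_preimage, Set.mem_singleton_iff]
        exact h
      exact (F_preconnected (sgn y)).subset_connectedComponent hy hx
    · intro b
      obtain ⟨x, hx⟩ := F_nonempty b
      refine ⟨(x : ConnectedComponents ↥Yset), ?_⟩
      rw [Continuous.connectedComponentsLift_apply_coe]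
      simpa using hx
  have := Nat.card_eq_of_bijective _ hbij
  rw [this]
  simp [Nat.card_eq_fintype_card]

end Stmt15
end Chunk12

section Chunk13
open Matrix Real
namespace Stmt15

abbrev Xt : Type :=
  {p : PSL2 × PSL2 // IsParabolic p.1 ∧ IsParabolic p.2 ∧ IsParabolic (p.1 * p.2)}

lemma mk_mul (A B : SL2) :
    (QuotientGroup.mk (A * B) : PSL2) = QuotientGroup.mk A * QuotientGroup.mk B := rfl

noncomputable def toX (q : ↥Yset) : Xt :=
  ⟨(QuotientGroup.mk q.val.1, QuotientGroup.mk q.val.2), by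
    obtain ⟨h1, h2, h3, h4, h5⟩ := q.property
    refine ⟨(isParabolic_mk_iff _).mpr (Or.inl ⟨h1, h2⟩),
      (isParabolic_mk_iff _).mpr (Or.inl ⟨h3, h4⟩), ?_⟩
    show IsParabolic ((QuotientGroup.mk q.val.1 : PSL2) * QuotientGroup.mk q.val.2)
    rw [← mk_mul]
    exact (isParabolic_mk_iff _).mpr h5⟩

lemma trSL_pos_unique {A A' : SL2} (h : (QuotientGroup.mk A : PSL2) = QuotientGroup.mk A')
    (hA : 0 < trSL A) (hA' : 0 < trSL A') : A' = A := by
  rcases (mk_eq_mk A A').mp h with hh | hh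
  · exact hh.symm ▸ rfl
  · exfalso
    have : trSL A' = -trSL A := by
      rw [trSL, trSL, hh, Matrix.trace_neg]
    linarith
lemma toX_bijective : Function.Bijective toX := by
  constructor
  · intro q q' h
    have h1 : (QuotientGroup.mk q.val.1 : PSL2) = QuotientGroup.mk q'.val.1 := by
      have := congrArg (fun x => x.val.1) h
      exact this
    have h2 : (QuotientGroup.mk q.val.2 : PSL2) = QuotientGroup.mk q'.val.2 := by
      have := congrArg (fun x => x.val.2) h
      exact this
    apply Subtype.ext
    apply Prod.ext
    · exact (trSL_pos_unique h1 (by rw [q.property.1]; norm_num)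
        (by rw [q'.property.1]; norm_num)).symm ▸ rfl
    · exact (trSL_pos_unique h2 (by rw [q.property.2.2.1]; norm_num)
        (by rw [q'.property.2.2.1]; norm_num)).symm ▸ rfl
  · intro x
    obtain ⟨hx1, hx2, hx3⟩ := x.property
    obtain ⟨A, hA1, hA2, hA3⟩ := hx1
    obtain ⟨B, hB1, hB2, hB3⟩ := hx2
    have hAB : IsParabolic (QuotientGroup.mk (A * B) : PSL2) := by
      rw [mk_mul, hA3, hB3]
      exact hx3
    have hABd := (isParabolic_mk_iff _).mp hAB
    refine ⟨⟨(A, B), ⟨hA1, hA2, hB1, hB2, hABd⟩⟩, ?_⟩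
    apply Subtype.ext
    apply Prod.ext
    · exact hA3
    · exact hB3

lemma continuous_mkPSL : Continuous (QuotientGroup.mk : SL2 → PSL2) :=
  continuous_quotient_mk'

lemma continuous_toX : Continuous toX := by
  apply Continuous.subtype_mk
  exact (continuous_mkPSL.comp (continuous_fst.comp continuous_subtype_val)).prodMk
    (continuous_mkPSL.comp (continuous_snd.comp continuous_subtype_val))

lemma isOpenMap_toX : IsOpenMap toX := by
  intro U hU
  obtain ⟨O, hO, rfl⟩ := isOpen_induced_iff.mp hU
  have hV : IsOpen {p : SL2 × SL2 | 0 < trSL p.1 ∧ 0 < trSL p.2} := by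
    apply IsOpen.inter
    · exact isOpen_lt continuous_const (continuous_trSL.comp continuous_fst)
    · exact isOpen_lt continuous_const (continuous_trSL.comp continuous_snd)
  have hopen : IsOpen ((fun p : SL2 × SL2 => ((QuotientGroup.mk p.1 : PSL2), (QuotientGroup.mk p.2 : PSL2))) ''
      (O ∩ {p : SL2 × SL2 | 0 < trSL p.1 ∧ 0 < trSL p.2})) := by
    have hmm : IsOpenMap (fun p : SL2 × SL2 =>
        ((QuotientGroup.mk p.1 : PSL2), (QuotientGroup.mk p.2 : PSL2))) :=
      IsOpenMap.prodMap QuotientGroup.isOpenMap_coe QuotientGroup.isOpenMap_coe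
    exact hmm _ (hO.inter hV)
  have hset : toX '' (Subtype.val ⁻¹' O) =
      Subtype.val ⁻¹' ((fun p : SL2 × SL2 =>
        ((QuotientGroup.mk p.1 : PSL2), (QuotientGroup.mk p.2 : PSL2))) ''
      (O ∩ {p : SL2 × SL2 | 0 < trSL p.1 ∧ 0 < trSL p.2})) := by
    ext x
    constructor
    · rintro ⟨q, hq, rfl⟩
      refine ⟨q.val, ⟨hq, ?_, ?_⟩, rfl⟩
      · rw [q.property.1]; norm_num
      · rw [q.property.2.2.1]; norm_num
    · rintro ⟨⟨A, B⟩, ⟨hABO, htrA, htrB⟩, hval⟩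
      have hx1 : x.val.1 = QuotientGroup.mk A := by rw [← hval]
      have hx2 : x.val.2 = QuotientGroup.mk B := by rw [← hval]
      have hpA : IsParabolic (QuotientGroup.mk A : PSL2) := hx1 ▸ x.property.1
      have hpB : IsParabolic (QuotientGroup.mk B : PSL2) := hx2 ▸ x.property.2.1
      have hA : trSL A = 2 ∧ A ≠ 1 := by
        rcases (isParabolic_mk_iff A).mp hpA with h | h
        · exact ⟨h.1, h.2⟩
        · exfalso; rw [h.1] at htrA; linarith
      have hB : trSL B = 2 ∧ B ≠ 1 := by
        rcases (isParabolic_mk_iff B).mp hpB with h | h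
        · exact ⟨h.1, h.2⟩
        · exfalso; rw [h.1] at htrB; linarith
      have hpAB : IsParabolic (QuotientGroup.mk (A*B) : PSL2) := by
        rw [mk_mul, ← hx1, ← hx2]
        exact x.property.2.2
      have hmem : (A, B) ∈ Yset :=
        ⟨hA.1, hA.2, hB.1, hB.2, (isParabolic_mk_iff _).mp hpAB⟩
      refine ⟨⟨(A, B), hmem⟩, hABO, ?_⟩
      apply Subtype.ext
      show (QuotientGroup.mk A, QuotientGroup.mk B) = x.val
      exact hval
  rw [hset]
  exact hopen.preimage continuous_subtype_val

noncomputable def homeoYX : ↥Yset ≃ₜ Xt :=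
  Equiv.toHomeomorphOfContinuousOpen (Equiv.ofBijective toX toX_bijective)
    continuous_toX isOpenMap_toX

lemma card_CC_of_homeo {α β : Type*} [TopologicalSpace α] [TopologicalSpace β] (e : α ≃ₜ β) :
    Nat.card (ConnectedComponents α) = Nat.card (ConnectedComponents β) := by
  have hf : Continuous (fun a : α => (ConnectedComponents.mk (e a) : ConnectedComponents β)) :=
    ConnectedComponents.continuous_coe.comp e.continuous
  have hg : Continuous (fun b : β => (ConnectedComponents.mk (e.symm b) : ConnectedComponents α)) :=
    ConnectedComponents.continuous_coe.comp e.symm.continuous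
  apply Nat.card_eq_of_bijective hf.connectedComponentsLift
  rw [Function.bijective_iff_has_inverse]
  refine ⟨hg.connectedComponentsLift, ?_, ?_⟩
  · intro a
    obtain ⟨x, rfl⟩ := ConnectedComponents.surjective_coe a
    rw [Continuous.connectedComponentsLift_apply_coe,
      Continuous.connectedComponentsLift_apply_coe]
    simp
  · intro b
    obtain ⟨y, rfl⟩ := ConnectedComponents.surjective_coe b
    rw [Continuous.connectedComponentsLift_apply_coe,
      Continuous.connectedComponentsLift_apply_coe]
    simp

lemma final : Nat.card (ConnectedComponents Xt) = 8 := by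
  rw [← card_CC_of_homeo homeoYX]
  exact card_CC_Yset

end Stmt15
end Chunk13


/-- The subspace of PSL(2,ℝ) × PSL(2,ℝ) of pairs (a,b) with a, b and a·b all parabolic
has exactly eight connected components. -/
theorem stmt15 :
    Nat.card (ConnectedComponents
      {p : PSL2 × PSL2 //
        IsParabolic p.1 ∧ IsParabolic p.2 ∧ IsParabolic (p.1 * p.2)}) = 8 :=
  Stmt15.final
end
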